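/- arXiv:0903.2867 — 7 statements merged into one kernel-verified Lean document; each statement's English description precedes it below -/
import Mathlib

section
/- For all k ≥ 3, 1 ≤ ℓ ≤ k−1 and every n ≥ 3k such that (k−ℓ) divides k and k divides n, there exists a k-graph H on n vertices with minimum degree δ(H) ≥ n/2 − k which does not contain a Hamilton ℓ-cycle. -/
open Finset

lemma sum_range_mul_decomp {M : Type*} [AddCommMonoid M] (g : ℕ → M) (a b : ℕ) :
    ∑ i ∈ Finset.range (a * b), g i
      = ∑ q ∈ Finset.range a, ∑ r ∈ Finset.range b, g (q * b + r) := by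
  induction a with
  | zero => simp
  | succ a ih =>
      rw [Nat.succ_mul, Finset.sum_range_add, ih, Finset.sum_range_succ]

lemma no_cycle_aux (n k ℓ s d t m : ℕ) (A : Finset (Fin n)) [NeZero n]
    (hs : s = k - ℓ) (hs1 : 1 ≤ s) (hkn : k ≤ n) (hd : k = d * s) (hm : m = t * d)
    (hmn : m * s = n) (hm0 : 0 < m)
    (f : ZMod n ≃ Fin n)
    (hEv : ∀ j < m, Even (((Finset.range k).image
        (fun u => f ((j * s + u : ℕ) : ZMod n)) ∩ A).card)) :
    Even A.card := by
  classical
  set χ : ℕ → ZMod 2 := fun p => if f ((p : ZMod n)) ∈ A then 1 else 0 with hχdef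
  set β : ℕ → ZMod 2 := fun i => ∑ u ∈ Finset.range s, χ (i * s + u) with hβdef
  set E : ℕ → ZMod 2 := fun j => ∑ u ∈ Finset.range k, χ (j * s + u) with hEdef
  -- injectivity of position map
  have hinj : ∀ j : ℕ, Set.InjOn (fun u : ℕ => f ((j * s + u : ℕ) : ZMod n))
      (Finset.range k) := by
    intro j u1 hu1 u2 hu2 h
    simp only [Finset.coe_range, Set.mem_Iio] at hu1 hu2
    have h2 : ((j * s + u1 : ℕ) : ZMod n) = ((j * s + u2 : ℕ) : ZMod n) := f.injective h
    have h3 : (u1 : ZMod n) = (u2 : ZMod n) := by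
      push_cast at h2
      exact add_left_cancel h2
    have h4 : u1 % n = u2 % n := by
      have := congrArg ZMod.val h3
      rwa [ZMod.val_natCast, ZMod.val_natCast] at this
    rwa [Nat.mod_eq_of_lt (by omega), Nat.mod_eq_of_lt (by omega)] at h4
  -- the edge sum in ZMod 2
  have hE0 : ∀ j < m, E j = 0 := by
    intro j hj
    have hcard : (((((Finset.range k).image
        (fun u => f ((j * s + u : ℕ) : ZMod n))) ∩ A).card : ZMod 2)) = E j := by
      rw [← Finset.filter_mem_eq_inter, Finset.filter_image,
        Finset.card_image_of_injOn ((hinj j).mono (by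
          intro x hx
          simpa using Finset.mem_range.mp (Finset.mem_filter.mp hx).1)),
        Finset.card_filter]
      rw [Nat.cast_sum]
      simp only [hEdef, hχdef]
      apply Finset.sum_congr rfl
      intro u _
      rw [apply_ite (Nat.cast : ℕ → ZMod 2), Nat.cast_one, Nat.cast_zero]
    have h2 : (2 : ℕ) ∣ ((((Finset.range k).image
        (fun u => f ((j * s + u : ℕ) : ZMod n))) ∩ A).card) := (hEv j hj).two_dvd
    rw [← hcard]
    exact (ZMod.natCast_eq_zero_iff _ 2).mpr h2
  -- periodicity
  have hχper : ∀ p : ℕ, χ (p + n) = χ p := by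
    intro p
    simp only [hχdef]
    congr 1
    push_cast
    rw [ZMod.natCast_self, add_zero]
  have hEper : ∀ j, E (j + m) = E j := by
    intro j
    simp only [hEdef]
    apply Finset.sum_congr rfl
    intro u _
    have harg : (j + m) * s + u = (j * s + u) + n := by
      rw [← hmn]; ring
    rw [harg, hχper]
  have hEall : ∀ j, E j = 0 := by
    have key : ∀ q r, r < m → E (m * q + r) = 0 := by
      intro q
      induction q with
      | zero => simpa using hE0
      | succ q ih =>
          intro r hr
          have harg : m * (q + 1) + r = (m * q + r) + m := by ring
          rw [harg, hEper, ih r hr]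
    intro j
    have := key (j / m) (j % m) (Nat.mod_lt _ hm0)
    rwa [Nat.div_add_mod] at this
  -- E as a sum of block parities
  have hEβ : ∀ j, E j = ∑ r ∈ Finset.range d, β (j + r) := by
    intro j
    simp only [hEdef, hβdef]
    rw [show k = d * s from hd, sum_range_mul_decomp (fun u => χ (j * s + u)) d s]
    apply Finset.sum_congr rfl
    intro q _
    apply Finset.sum_congr rfl
    intro u _
    congr 1
    ring
  -- block parity periodic with period d
  have hβper : ∀ j, β (j + d) = β j := by
    intro j
    have h1 : ∑ r ∈ Finset.range (d + 1), β (j + r) = E j + β (j + d) := by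
      rw [Finset.sum_range_succ, hEβ]
    have h2 : ∑ r ∈ Finset.range (d + 1), β (j + r) = β j + E (j + 1) := by
      rw [Finset.sum_range_succ']
      have hre : ∑ r ∈ Finset.range d, β (j + (r + 1)) = E (j + 1) := by
        rw [hEβ (j + 1)]
        exact Finset.sum_congr rfl fun r _ => by rw [show j + (r + 1) = j + 1 + r from by omega]
      rw [hre, show j + 0 = j from rfl, add_comm]
    have h3 : E j + β (j + d) = β j + E (j + 1) := by rw [← h1, h2]
    rw [hEall j, hEall (j + 1), zero_add, add_zero] at h3
    exact h3
  have hβmul : ∀ r q, β (r + d * q) = β r := by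
    intro r q
    induction q with
    | zero => simp
    | succ q ih =>
        have harg : r + d * (q + 1) = (r + d * q) + d := by ring
        rw [harg, hβper, ih]
  -- total sum is card A
  have hsumA : ∑ i ∈ Finset.range m, β i = (A.card : ZMod 2) := by
    simp only [hβdef]
    rw [← sum_range_mul_decomp χ m s, hmn]
    have hbij : ((Finset.range n).filter (fun p : ℕ => f ((p : ZMod n)) ∈ A)).card = A.card := by
      refine Finset.card_nbij' (fun p : ℕ => f ((p : ZMod n)))
        (fun v : Fin n => (f.symm v).val) ?_ ?_ ?_ ?_
      · intro p hp
        exact (Finset.mem_filter.mp hp).2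
      · intro v hv
        refine Finset.mem_filter.mpr ⟨Finset.mem_range.mpr (ZMod.val_lt _), ?_⟩
        rw [show (((f.symm v).val : ℕ) : ZMod n) = f.symm v from ZMod.natCast_rightInverse _,
          Equiv.apply_symm_apply]
        exact hv
      · intro p hp
        have hpn : p < n := Finset.mem_range.mp (Finset.mem_filter.mp hp).1
        show (f.symm (f ((p : ZMod n)))).val = p
        rw [Equiv.symm_apply_apply, ZMod.val_natCast, Nat.mod_eq_of_lt hpn]
      · intro v hv
        show f (((f.symm v).val : ℕ) : ZMod n) = v
        rw [show (((f.symm v).val : ℕ) : ZMod n) = f.symm v from ZMod.natCast_rightInverse _,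
          Equiv.apply_symm_apply]
    rw [← hbij, ← Finset.sum_boole]
  -- conclude
  have hfinal : ∑ i ∈ Finset.range m, β i = 0 := by
    rw [hm, sum_range_mul_decomp β t d]
    apply Finset.sum_eq_zero
    intro q _
    have h1 : ∑ r ∈ Finset.range d, β (q * d + r) = ∑ r ∈ Finset.range d, β r := by
      apply Finset.sum_congr rfl
      intro r _
      rw [show q * d + r = r + d * q from by ring, hβmul]
    rw [h1]
    have h2 := hEβ 0
    simp only [zero_add] at h2
    rw [← h2, hEall 0]
  rw [hsumA] at hfinal
  have h2 : (2 : ℕ) ∣ A.card := (ZMod.natCast_eq_zero_iff _ 2).mp hfinal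
  exact even_iff_two_dvd.mpr h2


/-- `H` is (the edge set of) a `k`-uniform hypergraph on vertex set `Fin n`. -/
def IsKGraph (n k : ℕ) (H : Finset (Finset (Fin n))) : Prop := ∀ e ∈ H, e.card = k

/-- The degree of a vertex set `A` in `H`: the number of edges containing `A`. -/
def degree (n : ℕ) (H : Finset (Finset (Fin n))) (A : Finset (Fin n)) : ℕ :=
  (H.filter (fun e => A ⊆ e)).card

/-- The minimum `(k-1)`-degree of `H` is at least `x`. -/
def MinDegreeGe (n k : ℕ) (H : Finset (Finset (Fin n))) (x : ℝ) : Prop :=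
  ∀ A : Finset (Fin n), A.card = k - 1 → x ≤ (degree n H A : ℝ)

/-- The edge of a Hamilton `ℓ`-cycle starting at position `j * (k - ℓ)` in the
cyclic ordering `f` of the vertices: it consists of the `k` consecutive vertices
from that position on. -/
def cycleEdge (n k ℓ : ℕ) (f : ZMod n ≃ Fin n) (j : ℕ) : Finset (Fin n) :=
  (Finset.range k).image (fun t => f ((j * (k - ℓ) + t : ℕ) : ZMod n))

/-- `H` contains a Hamilton `ℓ`-cycle: there is a cyclic ordering of all `n`
vertices and `m` edges of `H`, each consisting of `k` consecutive vertices, with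
consecutive edges (in the natural ordering of the edges) sharing exactly `ℓ`
vertices, i.e. successive starting positions differ by `k - ℓ`, going around the
whole cycle exactly once (so `m * (k - ℓ) = n`). -/
def HasHamiltonLCycle (n k ℓ : ℕ) (H : Finset (Finset (Fin n))) : Prop :=
  ∃ (f : ZMod n ≃ Fin n) (m : ℕ), 0 < m ∧ m * (k - ℓ) = n ∧
    ∀ j < m, cycleEdge n k ℓ f j ∈ H ∧ (cycleEdge n k ℓ f j).card = k

/-- Extremal example: if `(k-ℓ) ∣ k` and `k ∣ n`, there is a `k`-graph on `n ≥ 3k`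
vertices with minimum degree at least `n/2 - k` and no Hamilton `ℓ`-cycle. -/
theorem extremal_example_div
    (k ℓ n : ℕ) (hk : 3 ≤ k) (hl1 : 1 ≤ ℓ) (hl2 : ℓ ≤ k - 1)
    (hn : 3 * k ≤ n) (hdvd : (k - ℓ) ∣ k) (hkn : k ∣ n) :
    ∃ H : Finset (Finset (Fin n)), IsKGraph n k H ∧
      MinDegreeGe n k H ((n : ℝ) / 2 - k) ∧
      ¬ HasHamiltonLCycle n k ℓ H := by
  classical
  have hk1 : 1 ≤ k := by omega
  have hn9 : 9 ≤ n := by omega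
  have hs1 : 1 ≤ k - ℓ := by omega
  have : NeZero n := ⟨by omega⟩
  set a := if Odd (n / 2) then n / 2 else n / 2 + 1 with hadef
  have haodd : Odd a := by
    rw [hadef]
    split
    · assumption
    · next h => exact Even.add_one (Nat.not_odd_iff_even.mp h)
  have hal : n / 2 ≤ a ∧ a ≤ n / 2 + 1 := by
    rw [hadef]; split <;> omega
  have han : ∀ p ∈ Finset.range a, p < n := by
    intro p hp
    have := Finset.mem_range.mp hp
    omega
  set A : Finset (Fin n) := (Finset.range a).attachFin han with hAdef
  have hcardA : A.card = a := by rw [hAdef, Finset.card_attachFin, Finset.card_range]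
  set H : Finset (Finset (Fin n)) :=
    Finset.univ.filter (fun e => e.card = k ∧ Even ((e ∩ A).card)) with hHdef
  -- real number facts
  have r1 : ((n / 2 : ℕ) : ℝ) * 2 ≤ (n : ℝ) := by
    have : (n / 2) * 2 ≤ n := by omega
    exact_mod_cast this
  have r2 : (n : ℝ) ≤ ((n / 2 : ℕ) : ℝ) * 2 + 1 := by
    have : n ≤ (n / 2) * 2 + 1 := by omega
    exact_mod_cast this
  have r3 : (a : ℝ) ≤ ((n / 2 : ℕ) : ℝ) + 1 := by exact_mod_cast hal.2
  have r4 : ((n / 2 : ℕ) : ℝ) ≤ (a : ℝ) := by exact_mod_cast hal.1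
  have r5 : ((k - 1 : ℕ) : ℝ) = (k : ℝ) - 1 := by
    push_cast [Nat.cast_sub hk1]
    ring
  refine ⟨H, ?_, ?_, ?_⟩
  · intro e he
    exact ((Finset.mem_filter.mp he).2).1
  · -- minimum degree
    intro A₀ hA₀
    by_cases hpar : Even ((A₀ ∩ A).card)
    · -- extend by a vertex outside A ∪ A₀
      have hsub : (Finset.univ \ (A ∪ A₀)).card ≤ degree n H A₀ := by
        show (Finset.univ \ (A ∪ A₀)).card ≤ (H.filter (fun e => A₀ ⊆ e)).card
        apply Finset.card_le_card_of_injOn (fun v => insert v A₀)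
        · intro v hv
          simp only [Finset.mem_coe] at hv ⊢
          rw [Finset.mem_sdiff, Finset.mem_union] at hv
          push_neg at hv
          obtain ⟨-, hvA, hvA₀⟩ := hv
          rw [Finset.mem_filter, hHdef, Finset.mem_filter]
          refine ⟨⟨Finset.mem_univ _, ?_, ?_⟩, Finset.subset_insert _ _⟩
          · rw [Finset.card_insert_of_notMem hvA₀, hA₀]; omega
          · rw [Finset.insert_inter_of_notMem hvA]; exact hpar
        · intro v hv w hw hvw
          have hv0 : v ∉ A₀ := by
            simp only [Finset.coe_sdiff, Set.mem_diff, Finset.coe_union, Set.mem_union,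
              Finset.mem_coe] at hv
            tauto
          have hvw' : insert v A₀ = insert w A₀ := hvw
          have hmem : v ∈ insert w A₀ := by
            rw [← hvw']; exact Finset.mem_insert_self v A₀
          rcases Finset.mem_insert.mp hmem with h | h
          · exact h
          · exact absurd h hv0
      have hcount : n ≤ (Finset.univ \ (A ∪ A₀)).card + (a + (k - 1)) := by
        have h1 : (Finset.univ \ (A ∪ A₀)).card + (A ∪ A₀).card = n := by
          rw [Finset.card_sdiff_add_card_eq_card (Finset.subset_univ _), Finset.card_univ,
            Fintype.card_fin]
        have h2 : (A ∪ A₀).card ≤ a + (k - 1) := by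
          calc (A ∪ A₀).card ≤ A.card + A₀.card := Finset.card_union_le _ _
            _ = a + (k - 1) := by rw [hcardA, hA₀]
        omega
      have hdeg : ((Finset.univ \ (A ∪ A₀)).card : ℝ) ≤ (degree n H A₀ : ℝ) :=
        Nat.cast_le.mpr hsub
      have hcount' : (n : ℝ) ≤ ((Finset.univ \ (A ∪ A₀)).card : ℝ) + ((a : ℝ) + ((k - 1 : ℕ) : ℝ)) := by
        exact_mod_cast hcount
      rw [r5] at hcount'
      linarith
    · -- extend by a vertex of A
      have hsub : (A \ A₀).card ≤ degree n H A₀ := by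
        show (A \ A₀).card ≤ (H.filter (fun e => A₀ ⊆ e)).card
        apply Finset.card_le_card_of_injOn (fun v => insert v A₀)
        · intro v hv
          simp only [Finset.mem_coe] at hv ⊢
          rw [Finset.mem_sdiff] at hv
          obtain ⟨hvA, hvA₀⟩ := hv
          rw [Finset.mem_filter, hHdef, Finset.mem_filter]
          refine ⟨⟨Finset.mem_univ _, ?_, ?_⟩, Finset.subset_insert _ _⟩
          · rw [Finset.card_insert_of_notMem hvA₀, hA₀]; omega
          · rw [Finset.insert_inter_of_mem hvA,
              Finset.card_insert_of_notMem (fun hc => hvA₀ (Finset.mem_of_mem_inter_left hc))]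
            exact (Nat.not_even_iff_odd.mp hpar).add_one
        · intro v hv w hw hvw
          have hv0 : v ∉ A₀ := by
            simp only [Finset.coe_sdiff, Set.mem_diff, Finset.mem_coe] at hv
            tauto
          have hvw' : insert v A₀ = insert w A₀ := hvw
          have hmem : v ∈ insert w A₀ := by
            rw [← hvw']; exact Finset.mem_insert_self v A₀
          rcases Finset.mem_insert.mp hmem with h | h
          · exact h
          · exact absurd h hv0
      have hcount : a ≤ (A \ A₀).card + (k - 1) := by
        have h1 : (A \ A₀).card + (A ∩ A₀).card = A.card := Finset.card_sdiff_add_card_inter A A₀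
        have h2 : (A ∩ A₀).card ≤ k - 1 := by
          rw [← hA₀]; exact Finset.card_le_card Finset.inter_subset_right
        omega
      have hdeg : ((A \ A₀).card : ℝ) ≤ (degree n H A₀ : ℝ) := Nat.cast_le.mpr hsub
      have hcount' : (a : ℝ) ≤ ((A \ A₀).card : ℝ) + ((k - 1 : ℕ) : ℝ) := by
        exact_mod_cast hcount
      rw [r5] at hcount'
      linarith
  · -- no Hamilton ℓ-cycle
    rintro ⟨f, m, hm0, hms, hedges⟩
    obtain ⟨d, hd⟩ := hdvd
    obtain ⟨t, ht⟩ := hkn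
    have hmtd : m = t * d := by
      have h1 : m * (k - ℓ) = (t * d) * (k - ℓ) := by
        calc m * (k - ℓ) = n := hms
          _ = k * t := ht
          _ = ((k - ℓ) * d) * t := by rw [← hd]
          _ = (t * d) * (k - ℓ) := by ring
      exact Nat.eq_of_mul_eq_mul_right (by omega) h1
    have hEv : ∀ j < m, Even (((Finset.range k).image
        (fun u => f ((j * (k - ℓ) + u : ℕ) : ZMod n)) ∩ A).card) := by
      intro j hj
      have hmem := (hedges j hj).1
      rw [hHdef, Finset.mem_filter] at hmem
      exact hmem.2.2
    have hEvenA := no_cycle_aux n k ℓ (k - ℓ) d t m A rfl hs1 (by omega)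
      (hd.trans (Nat.mul_comm _ _)) hmtd hms hm0 f hEv
    rw [hcardA] at hEvenA
    exact (Nat.not_even_iff_odd.mpr haodd) hEvenA
end

section
/- For all k ≥ 3, 1 ≤ ℓ ≤ k−1 and every n with (k−ℓ) dividing n, there exists a k-graph H on n vertices with minimum degree δ(H) ≥ n/(⌈k/(k−ℓ)⌉(k−ℓ)) − 1 which does not contain a Hamilton ℓ-cycle. -/
open Finset

/-- `⌈k / d⌉` for natural numbers. -/
def ceilQuot (k d : ℕ) : ℕ := (k + d - 1) / d

/-- `a = ⌈k/(k-ℓ)⌉ (k-ℓ)`. -/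
def aParam (k ℓ : ℕ) : ℕ := ceilQuot k (k - ℓ) * (k - ℓ)

lemma ceilQuot_mul_ge (k d : ℕ) (hd : 0 < d) : k ≤ ceilQuot k d * d := by
  unfold ceilQuot
  have h1 := Nat.div_add_mod (k + d - 1) d
  have h2 := Nat.mod_lt (k + d - 1) hd
  rw [mul_comm]
  omega

lemma ceilQuot_sub_one_mul_lt (n a : ℕ) (ha : 0 < a) (hn : 0 < n) :
    (ceilQuot n a - 1) * a < n := by
  unfold ceilQuot
  have h1 := Nat.div_add_mod (n + a - 1) a
  have h2 := Nat.mod_lt (n + a - 1) ha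
  have h3 : 1 ≤ (n + a - 1) / a := by
    rw [Nat.le_div_iff_mul_le ha]; omega
  rw [Nat.sub_mul, one_mul, mul_comm]
  omega

lemma ceilQuot_le_self (n a : ℕ) (ha : 0 < a) : ceilQuot n a ≤ n ∨ n = 0 := by
  rcases Nat.eq_zero_or_pos n with h | h
  · exact Or.inr h
  · left
    unfold ceilQuot
    rw [Nat.div_le_iff_le_mul_add_pred ha]
    have : n ≤ a * n := Nat.le_mul_of_pos_left n ha
    omega

lemma count_le (m d k c x : ℕ) (hd : 0 < d) (hm : 0 < m)
    (hkc : k ≤ c * d) (hx : x < m * d) :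
    ((range m).filter (fun j => (x + m * d - j * d) % (m * d) < k)).card ≤ c := by
  set n := m * d with hn
  have hn0 : 0 < n := by positivity
  have hjd : ∀ j < m, j * d ≤ n ∧ x + n - j * d = x + (m - j) * d := by
    intro j hj
    have h1 : j * d ≤ m * d := Nat.mul_le_mul_right d (le_of_lt hj)
    have h2 : (m - j) * d = m * d - j * d := Nat.sub_mul m j d
    omega
  have key : ∀ j < m, (x + n - j * d) % n % d = x % d := by
    intro j hj
    rw [(hjd j hj).2, Nat.mod_mod_of_dvd _ ⟨m, by ring⟩, Nat.add_mul_mod_self_right]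
  have hinj : ∀ j1 ∈ (range m).filter (fun j => (x + n - j * d) % n < k),
      ∀ j2 ∈ (range m).filter (fun j => (x + n - j * d) % n < k),
      (x + n - j1 * d) % n / d = (x + n - j2 * d) % n / d → j1 = j2 := by
    intro j1 h1 j2 h2 heq
    simp only [mem_filter, mem_range] at h1 h2
    have e1 := key j1 h1.1
    have e2 := key j2 h2.1
    have d1 := Nat.div_add_mod ((x + n - j1 * d) % n) d
    have d2 := Nat.div_add_mod ((x + n - j2 * d) % n) d
    have heq' : d * ((x + n - j1 * d) % n / d) = d * ((x + n - j2 * d) % n / d) := by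
      rw [heq]
    have huv : (x + n - j1 * d) % n = (x + n - j2 * d) % n := by omega
    rw [(hjd j1 h1.1).2, (hjd j2 h2.1).2] at huv
    have hmod : (m - j1) * d ≡ (m - j2) * d [MOD n] :=
      Nat.ModEq.add_left_cancel' x huv
    have hb1 : 0 < (m - j1) * d := Nat.mul_pos (by omega) hd
    have hb2 : 0 < (m - j2) * d := Nat.mul_pos (by omega) hd
    have hle1 : (m - j1) * d ≤ n := Nat.mul_le_mul_right d (by omega)
    have hle2 : (m - j2) * d ≤ n := Nat.mul_le_mul_right d (by omega)
    have heq2 : (m - j1) * d = (m - j2) * d := by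
      unfold Nat.ModEq at hmod
      rcases eq_or_lt_of_le hle1 with hA | hA <;> rcases eq_or_lt_of_le hle2 with hB | hB
      · omega
      · rw [hA, Nat.mod_self, Nat.mod_eq_of_lt hB] at hmod; omega
      · rw [hB, Nat.mod_self, Nat.mod_eq_of_lt hA] at hmod; omega
      · rw [Nat.mod_eq_of_lt hA, Nat.mod_eq_of_lt hB] at hmod; omega
    have := Nat.eq_of_mul_eq_mul_right hd heq2
    omega
  have hcard : ((range m).filter (fun j => (x + n - j * d) % n < k)).card
      ≤ (range c).card := by
    apply Finset.card_le_card_of_injOn (fun j => (x + n - j * d) % n / d)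
    · intro j hj
      simp only [mem_coe, mem_filter, mem_range] at hj
      simp only [mem_coe, mem_range]
      rw [Nat.div_lt_iff_lt_mul hd]
      omega
    · intro a ha b hb hab
      exact hinj a (by simpa using ha) b (by simpa using hb) hab
  simpa using hcard

lemma mem_cycleEdge_iff (n k l m : ℕ) (f : ZMod n ≃ Fin n) (j : ℕ) (v : Fin n)
    (hd : 0 < k - l) (hn : m * (k - l) = n) (hk : k ≤ n) (hj : j < m) :
    (v ∈ cycleEdge n k l f j ↔
      ((f.symm v).val + n - j * (k - l)) % n < k) := by
  set d := k - l with hdd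
  have hn0 : 0 < n := by
    rw [← hn]; exact Nat.mul_pos (by omega) hd
  haveI : NeZero n := ⟨by omega⟩
  have hjd : j * d ≤ n := by
    calc j * d ≤ m * d := Nat.mul_le_mul_right d (le_of_lt hj)
    _ = n := hn
  set x := (f.symm v).val with hx
  have hxlt : x < n := ZMod.val_lt _
  have hmem : ∀ t : ℕ, (f ((j * d + t : ℕ) : ZMod n) = v ↔ (j * d + t) ≡ x [MOD n]) := by
    intro t
    rw [← Equiv.eq_symm_apply]
    constructor
    · intro h
      have : ((j * d + t : ℕ) : ZMod n).val = x := by rw [h]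
      rw [ZMod.val_natCast] at this
      exact this.trans (Nat.mod_eq_of_lt hxlt).symm
    · intro h
      have : ((j * d + t : ℕ) : ZMod n) = ((x : ℕ) : ZMod n) :=
        (ZMod.natCast_eq_natCast_iff _ _ _).mpr h
      rw [this, hx]
      exact ZMod.natCast_rightInverse _
  constructor
  · intro hv
    simp only [cycleEdge, mem_image, mem_range] at hv
    obtain ⟨t, ht, hft⟩ := hv
    have hmeq : j * d + t ≡ x [MOD n] := (hmem t).mp hft
    have h2 : t + j * d ≡ (x + n - j * d) + j * d [MOD n] := by
      have : (x + n - j * d) + j * d = x + n := by omega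
      rw [this]
      calc t + j * d = j * d + t := by ring
      _ ≡ x [MOD n] := hmeq
      _ ≡ x + n [MOD n] := by rw [add_comm x n]; exact Nat.add_modEq_left.symm
    have h3 : t ≡ x + n - j * d [MOD n] := Nat.ModEq.add_right_cancel' _ h2
    have : t % n = (x + n - j * d) % n := h3
    rw [Nat.mod_eq_of_lt (by omega)] at this
    omega
  · intro hu
    simp only [cycleEdge, mem_image, mem_range]
    refine ⟨(x + n - j * d) % n, hu, (hmem _).mpr ?_⟩
    calc j * d + (x + n - j * d) % n ≡ j * d + (x + n - j * d) [MOD n] :=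
          Nat.ModEq.add_left _ (Nat.mod_modEq _ _)
    _ = x + n := by omega
    _ ≡ x [MOD n] := by rw [add_comm x n]; exact Nat.add_modEq_left

/-- Extremal example: for `(k-ℓ) ∣ n` there is a `k`-graph on `n` vertices with
minimum degree at least `n/(⌈k/(k-ℓ)⌉(k-ℓ)) - 1` and no Hamilton `ℓ`-cycle. -/
theorem extremal_example_nondiv
    (k ℓ n : ℕ) (hk : 3 ≤ k) (hl1 : 1 ≤ ℓ) (hl2 : ℓ ≤ k - 1)
    (hdvd : (k - ℓ) ∣ n) :
    ∃ H : Finset (Finset (Fin n)), IsKGraph n k H ∧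
      MinDegreeGe n k H ((n : ℝ) / (aParam k ℓ : ℝ) - 1) ∧
      ¬ HasHamiltonLCycle n k ℓ H := by
  set d := k - ℓ with hdd
  have hd : 0 < d := by omega
  set c := ceilQuot k d with hcc
  set a := aParam k ℓ with haa
  have hacd : a = c * d := rfl
  have hka : k ≤ a := ceilQuot_mul_ge k d hd
  have ha0 : 0 < a := by omega
  set b := ceilQuot n a - 1 with hbb
  have hbn : b ≤ n := by
    rcases ceilQuot_le_self n a ha0 with h | h
    · omega
    · have h0 : ceilQuot n a = 0 := by
        unfold ceilQuot; rw [h]; exact Nat.div_eq_of_lt (by omega)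
      omega
  have hnba : n ≤ (b + 1) * a := by
    rcases Nat.eq_zero_or_pos n with h | h
    · omega
    · have h1 : n ≤ ceilQuot n a * a := ceilQuot_mul_ge n a ha0
      have h2 : 1 ≤ ceilQuot n a := by
        unfold ceilQuot
        rw [Nat.le_div_iff_mul_le ha0]; omega
      have : ceilQuot n a ≤ b + 1 := by omega
      calc n ≤ ceilQuot n a * a := h1
      _ ≤ (b + 1) * a := Nat.mul_le_mul_right a this
  -- the set B of "special" vertices
  set B : Finset (Fin n) := (range b).attachFin (fun m hm => lt_of_lt_of_le (mem_range.mp hm) hbn) with hB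
  have hBcard : B.card = b := by rw [hB, Finset.card_attachFin, Finset.card_range]
  have hBmem : ∀ v : Fin n, v ∈ B ↔ v.val < b := by
    intro v; rw [hB, Finset.mem_attachFin, mem_range]
  set H : Finset (Finset (Fin n)) :=
    (Finset.univ.powersetCard k).filter (fun e => (e ∩ B).Nonempty) with hH
  have hmemH : ∀ e : Finset (Fin n), e ∈ H ↔ e.card = k ∧ (e ∩ B).Nonempty := by
    intro e
    rw [hH, mem_filter, Finset.mem_powersetCard_univ]
  refine ⟨H, ?_, ?_, ?_⟩
  · intro e he
    exact ((hmemH e).mp he).1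
  · -- minimum degree
    intro A hA
    have hAn : A.card ≤ n := by
      have := Finset.card_le_card (Finset.subset_univ A)
      simpa using this
    have hkn : k - 1 ≤ n := hA ▸ hAn
    have hane : (0:ℝ) < (a:ℝ) := by exact_mod_cast ha0
    by_cases hAB : (A ∩ B).Nonempty
    · -- degree is at least n - (k-1)
      have hdeg : n - (k - 1) ≤ degree n H A := by
        have hinj : Aᶜ.card ≤ (H.filter (fun e => A ⊆ e)).card := by
          apply Finset.card_le_card_of_injOn (fun v => insert v A)
          · intro v hv
            simp only [Finset.mem_coe, Finset.mem_compl, Set.mem_compl_iff] at hv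
            rw [Finset.mem_coe, mem_filter, hmemH]
            obtain ⟨w, hw⟩ := hAB
            rw [Finset.mem_inter] at hw
            refine ⟨⟨?_, ⟨w, ?_⟩⟩, Finset.subset_insert _ _⟩
            · rw [Finset.card_insert_of_notMem hv, hA]; omega
            · rw [Finset.mem_inter]
              exact ⟨Finset.mem_insert_of_mem hw.1, hw.2⟩
          · intro v hv w hw hvw
            simp only [coe_compl, Set.mem_compl_iff, mem_coe] at hv hw
            have hvw' : insert v A = insert w A := hvw
            have : v ∈ insert w A := by rw [← hvw']; exact Finset.mem_insert_self _ _
            rcases Finset.mem_insert.mp this with h | h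
            · exact h
            · exact absurd h hv
        have hcompl : Aᶜ.card = n - (k - 1) := by
          rw [Finset.card_compl, hA]; simp
        rw [← hcompl]
        exact hinj
      have hcast : ((n - (k - 1) : ℕ) : ℝ) = (n : ℝ) - ((k:ℝ) - 1) := by
        rw [Nat.cast_sub hkn, Nat.cast_sub (by omega : (1:ℕ) ≤ k)]
        norm_num
      have h1 : (n : ℝ) / (a : ℝ) - 1 ≤ (n : ℝ) - ((k:ℝ) - 1) := by
        have hKa : (k:ℝ) ≤ (a:ℝ) := by exact_mod_cast hka
        have hk3 : (3:ℝ) ≤ (k:ℝ) := by exact_mod_cast hk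
        have hnk : (k:ℝ) - 1 ≤ (n:ℝ) := by
          have h2 : ((k - 1 : ℕ) : ℝ) ≤ (n:ℝ) := by exact_mod_cast hkn
          rw [Nat.cast_sub (by omega : (1:ℕ) ≤ k)] at h2
          simpa using h2
        rw [sub_le_iff_le_add, div_le_iff₀ hane]
        nlinarith [mul_le_mul_of_nonneg_left hKa
            (by linarith : (0:ℝ) ≤ (n:ℝ) - (k:ℝ) + 2),
          mul_nonneg (by linarith : (0:ℝ) ≤ (n:ℝ) - ((k:ℝ) - 1))
            (by linarith : (0:ℝ) ≤ (k:ℝ) - 1)]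
      calc (n : ℝ) / (a : ℝ) - 1 ≤ (n : ℝ) - ((k:ℝ) - 1) := h1
      _ = ((n - (k - 1) : ℕ) : ℝ) := hcast.symm
      _ ≤ (degree n H A : ℝ) := by exact_mod_cast hdeg
    · -- A is disjoint from B; degree is at least b
      have hdeg : b ≤ degree n H A := by
        have hinj : B.card ≤ (H.filter (fun e => A ⊆ e)).card := by
          apply Finset.card_le_card_of_injOn (fun v => insert v A)
          · intro v hv
            have hvA : v ∉ A := by
              intro hcon
              exact hAB ⟨v, Finset.mem_inter.mpr ⟨hcon, hv⟩⟩
            rw [Finset.mem_coe, mem_filter, hmemH]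
            refine ⟨⟨?_, ⟨v, ?_⟩⟩, Finset.subset_insert _ _⟩
            · rw [Finset.card_insert_of_notMem hvA, hA]; omega
            · rw [Finset.mem_inter]
              exact ⟨Finset.mem_insert_self _ _, hv⟩
          · intro v hv w hw hvw
            simp only [mem_coe] at hv hw
            have hvA : v ∉ A := fun hcon => hAB ⟨v, Finset.mem_inter.mpr ⟨hcon, hv⟩⟩
            have hwA : w ∉ A := fun hcon => hAB ⟨w, Finset.mem_inter.mpr ⟨hcon, hw⟩⟩
            have hvw' : insert v A = insert w A := hvw
            have : v ∈ insert w A := by rw [← hvw']; exact Finset.mem_insert_self _ _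
            rcases Finset.mem_insert.mp this with h | h
            · exact h
            · exact absurd h hvA
        rw [← hBcard]
        exact hinj
      have h1 : (n : ℝ) / (a : ℝ) ≤ (b : ℝ) + 1 := by
        rw [div_le_iff₀ hane]
        have : ((n:ℕ):ℝ) ≤ (((b+1)*a : ℕ) : ℝ) := by exact_mod_cast hnba
        push_cast at this
        linarith
      have : (b : ℝ) ≤ (degree n H A : ℝ) := by exact_mod_cast hdeg
      linarith
  · -- no Hamilton cycle
    rintro ⟨f, m, hm, hmn, hcyc⟩
    have hn0 : 0 < n := by
      rw [← hmn]; exact Nat.mul_pos hm hd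
    haveI : NeZero n := ⟨by omega⟩
    have hkn' : k ≤ n := by
      have h1 := (hcyc 0 hm).2
      have h2 : (cycleEdge n k ℓ f 0).card ≤ n := by
        have := Finset.card_le_card (Finset.subset_univ (cycleEdge n k ℓ f 0))
        simpa using this
      omega
    have hka' : k ≤ c * d := hka
    -- every cycle edge meets B
    have hmeet : ∀ j < m, (B.filter (· ∈ cycleEdge n k ℓ f j)).Nonempty := by
      intro j hj
      obtain ⟨w, hw⟩ := ((hmemH _).mp (hcyc j hj).1).2
      rw [Finset.mem_inter] at hw
      exact ⟨w, Finset.mem_filter.mpr ⟨hw.2, hw.1⟩⟩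
    have hsum1 : m ≤ ∑ j ∈ range m, (B.filter (· ∈ cycleEdge n k ℓ f j)).card := by
      calc m = ∑ _j ∈ range m, 1 := by simp
      _ ≤ ∑ j ∈ range m, (B.filter (· ∈ cycleEdge n k ℓ f j)).card := by
        apply Finset.sum_le_sum
        intro j hj
        exact Finset.card_pos.mpr (hmeet j (mem_range.mp hj))
    have hswap : ∑ j ∈ range m, (B.filter (· ∈ cycleEdge n k ℓ f j)).card
        = ∑ v ∈ B, ((range m).filter (fun j => v ∈ cycleEdge n k ℓ f j)).card := by
      simp_rw [Finset.card_filter]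
      rw [Finset.sum_comm]
    have hbound : ∀ v ∈ B, ((range m).filter (fun j => v ∈ cycleEdge n k ℓ f j)).card ≤ c := by
      intro v _
      have hfe : (range m).filter (fun j => v ∈ cycleEdge n k ℓ f j)
          = (range m).filter (fun j => ((f.symm v).val + n - j * d) % n < k) := by
        apply Finset.filter_congr
        intro j hj
        rw [mem_range] at hj
        constructor
        · intro h
          exact (mem_cycleEdge_iff n k ℓ m f j v hd hmn hkn' hj).mp (by simpa using h)
        · intro h
          simpa using (mem_cycleEdge_iff n k ℓ m f j v hd hmn hkn' hj).mpr (by simpa using h)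
      rw [hfe]
      have hx : (f.symm v).val < m * d := by rw [hmn]; exact ZMod.val_lt _
      have := count_le m d k c (f.symm v).val hd hm hka' hx
      rw [hmn] at this
      exact this
    have hsum2 : ∑ v ∈ B, ((range m).filter (fun j => v ∈ cycleEdge n k ℓ f j)).card ≤ b * c := by
      calc ∑ v ∈ B, ((range m).filter (fun j => v ∈ cycleEdge n k ℓ f j)).card
          ≤ ∑ _v ∈ B, c := Finset.sum_le_sum hbound
      _ = b * c := by rw [Finset.sum_const, hBcard, smul_eq_mul]
    have hlt : b * c < m := by
      have h1 : b * a < n := ceilQuot_sub_one_mul_lt n a ha0 hn0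
      have h2 : b * c * d < m * d := by
        rw [mul_assoc, ← hacd, hmn]
        exact h1
      exact Nat.lt_of_mul_lt_mul_right h2
    omega
end

section
/- Suppose k ≥ 3 and 1 ≤ ℓ ≤ k−1 is such that (k−ℓ) does not divide k. Let V be a set of vertices partitioned into k classes V_1,…,V_k with |V_i| = kℓ(k−ℓ)+1 for each i, and let P^beg and P^end be disjoint ordered sets of ℓ vertices from V such that |P^beg ∩ V_i| ≤ 1 and |P^end ∩ V_i| ≤ 1 for each 1 ≤ i ≤ k. Then the complete k-partite k-graph K[V_1,…,V_k] contains an ℓ-path P from P^beg to P^end containing every vertex of V (so |V(P)| = k²ℓ(k−ℓ)+k). -/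
open Finset

/-- The edge of an `ℓ`-path starting at position `s * (k - ℓ)` of the vertex
sequence `v`: it consists of the `k` consecutive vertices from that position. -/
def pathEdge (k ℓ : ℕ) {α : Type*} [DecidableEq α] (v : ℕ → α) (s : ℕ) : Finset α :=
  (Finset.range k).image (fun t => v (s * (k - ℓ) + t))

/-- `v` (restricted to its first `r` values) is a vertex sequence of an `ℓ`-path
all of whose edges satisfy the edge predicate `E`: the first `r` values of `v`
are distinct, `r ≡ k (mod k - ℓ)`, and all the sets of `k` consecutive vertices
starting at positions `s * (k - ℓ)` (these are the edges of the path, and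
consecutive ones intersect in precisely `ℓ` vertices) satisfy `E`. -/
def IsPathSeq (k ℓ r : ℕ) {α : Type*} [DecidableEq α] (E : Finset α → Prop) (v : ℕ → α) : Prop :=
  k ≤ r ∧ (k - ℓ) ∣ (r - k) ∧ Set.InjOn v (Set.Iio r) ∧
    ∀ s : ℕ, s * (k - ℓ) + k ≤ r → E (pathEdge k ℓ v s)

def Compat (k d j : ℕ) (σ σ' : Equiv.Perm (Fin k)) : Prop :=
  ∀ o : ℕ, 0 < o → o < k → d ∣ (o + j * k) →
    ∀ t : Fin k, (t : ℕ) < o → ∃ t' : Fin k, (t' : ℕ) < o ∧ σ' t = σ t'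

theorem compat_refl {k d j : ℕ} (σ : Equiv.Perm (Fin k)) : Compat k d j σ σ :=
  fun _ _ _ _ t ht => ⟨t, ht, rfl⟩

theorem compat_swap {k d j : ℕ} (σ : Equiv.Perm (Fin k)) (z z' : Fin k)
    (hzz : (z' : ℕ) = (z : ℕ) + 1) (hnd : ¬ d ∣ ((z : ℕ) + 1 + j * k)) :
    Compat k d j σ (σ * Equiv.swap z z') := by
  intro o ho0 hok hdvd t ht
  have hone : o ≠ (z : ℕ) + 1 := by
    rintro rfl; exact hnd hdvd
  refine ⟨Equiv.swap z z' t, ?_, rfl⟩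
  rcases eq_or_ne t z with rfl | htz
  · rw [Equiv.swap_apply_left, hzz]; omega
  rcases eq_or_ne t z' with rfl | htz'
  · rw [Equiv.swap_apply_right]; omega
  · rw [Equiv.swap_apply_of_ne_of_ne htz htz']; exact ht

/-- Routing lemma: the token at position `z` can be moved to position `y ≥ z`
within `L ≥ 2(y-z)` steps, not disturbing positions above `y`. -/
theorem route {k d : ℕ} (hdk : ¬ d ∣ k) :
    ∀ L j (σ : Equiv.Perm (Fin k)) (z y : Fin k), (z : ℕ) ≤ (y : ℕ) →
      2 * ((y : ℕ) - (z : ℕ)) ≤ L →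
      ∃ ρ : ℕ → Equiv.Perm (Fin k), ρ j = σ ∧
        (∀ j', j ≤ j' → j' < j + L → Compat k d j' (ρ j') (ρ (j' + 1))) ∧
        ρ (j + L) y = σ z ∧
        (∀ x : Fin k, (y : ℕ) < (x : ℕ) → ρ (j + L) x = σ x) := by
  intro L
  induction L using Nat.strong_induction_on with
  | _ L ih =>
    intro j σ z y hzy hL
    rcases eq_or_lt_of_le hzy with heq | hlt
    · -- already in place: constant chain
      have hz : z = y := Fin.ext heq
      subst hz
      exact ⟨fun _ => σ, rfl, fun _ _ _ => compat_refl σ, rfl, fun _ _ => rfl⟩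
    · have hz1k : (z : ℕ) + 1 < k := lt_of_le_of_lt hlt y.isLt
      set z' : Fin k := ⟨(z : ℕ) + 1, hz1k⟩ with hz'
      have hz'v : (z' : ℕ) = (z : ℕ) + 1 := rfl
      have hL2 : 2 ≤ L := by omega
      by_cases hb : d ∣ ((z : ℕ) + 1 + j * k)
      · -- blocked now; idle one step, then swap at time j+1 (not blocked since d ∤ k)
        have hb2 : ¬ d ∣ ((z : ℕ) + 1 + (j + 1) * k) := by
          intro h
          apply hdk
          have : (z : ℕ) + 1 + (j + 1) * k - ((z : ℕ) + 1 + j * k) = k := by ring_nf; omega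
          calc d ∣ ((z : ℕ) + 1 + (j + 1) * k - ((z : ℕ) + 1 + j * k)) := Nat.dvd_sub h hb
            _ = k := this
        set σ2 := σ * Equiv.swap z z' with hσ2
        obtain ⟨ρ', h1, h2, h3, h4⟩ := ih (L - 2) (by omega) (j + 2) σ2 z' y
          (by rw [hz'v]; omega) (by rw [hz'v]; omega)
        refine ⟨fun t => if t ≤ j + 1 then σ else ρ' t, by simp, ?_, ?_, ?_⟩
        · intro j' hj1 hj2
          rcases lt_trichotomy j' (j + 1) with h | h | h
          · have hj : j' = j := by omega
            simp only [if_pos (by omega : j' ≤ j + 1), if_pos (by omega : j' + 1 ≤ j + 1)]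
            exact compat_refl σ
          · subst h
            have e2 : ρ' (j + 2) = σ2 := h1
            simp only [if_pos le_rfl, if_neg (by omega : ¬ j + 1 + 1 ≤ j + 1)]
            show Compat k d (j + 1) σ (ρ' (j + 1 + 1))
            have : j + 1 + 1 = j + 2 := by omega
            rw [this, e2]
            exact compat_swap σ z z' hz'v hb2
          · simp only [if_neg (by omega : ¬ j' ≤ j + 1), if_neg (by omega : ¬ j' + 1 ≤ j + 1)]
            exact h2 j' (by omega) (by omega)
        · have hend : j + L = (j + 2) + (L - 2) := by omega
          simp only [if_neg (by omega : ¬ j + L ≤ j + 1)]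
          rw [hend] at *
          rw [h3, hσ2]
          simp [Equiv.swap_apply_right]
        · intro x hx
          have hend : j + L = (j + 2) + (L - 2) := by omega
          simp only [if_neg (by omega : ¬ j + L ≤ j + 1)]
          rw [hend, h4 x hx, hσ2]
          have hx1 : x ≠ z := by intro h; subst h; omega
          have hx2 : x ≠ z' := by intro h; subst h; rw [hz'v] at hx; omega
          simp [Equiv.swap_apply_of_ne_of_ne hx1 hx2]
      · -- swap right away at time j
        set σ2 := σ * Equiv.swap z z' with hσ2
        obtain ⟨ρ', h1, h2, h3, h4⟩ := ih (L - 1) (by omega) (j + 1) σ2 z' y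
          (by rw [hz'v]; omega) (by rw [hz'v]; omega)
        refine ⟨fun t => if t ≤ j then σ else ρ' t, by simp, ?_, ?_, ?_⟩
        · intro j' hj1 hj2
          rcases eq_or_lt_of_le hj1 with h | h
          · subst h
            simp only [if_pos le_rfl, if_neg (by omega : ¬ j + 1 ≤ j)]
            rw [show ρ' (j + 1) = σ2 from h1]
            exact compat_swap σ z z' hz'v hb
          · simp only [if_neg (by omega : ¬ j' ≤ j), if_neg (by omega : ¬ j' + 1 ≤ j)]
            exact h2 j' (by omega) (by omega)
        · have hend : j + L = (j + 1) + (L - 1) := by omega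
          simp only [if_neg (by omega : ¬ j + L ≤ j)]
          rw [hend, h3, hσ2]
          simp [Equiv.swap_apply_right]
        · intro x hx
          have hend : j + L = (j + 1) + (L - 1) := by omega
          simp only [if_neg (by omega : ¬ j + L ≤ j)]
          rw [hend, h4 x hx, hσ2]
          have hx1 : x ≠ z := by intro h; subst h; omega
          have hx2 : x ≠ z' := by intro h; subst h; rw [hz'v] at hx; omega
          simp [Equiv.swap_apply_of_ne_of_ne hx1 hx2]

/-- Placement lemma: starting from `α`, the tokens `b i` can be routed so that
after `2*k*n` steps the last `n` of them occupy positions `d + i`. -/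
theorem place {k ℓ d : ℕ} (hdk : ¬ d ∣ k) (hsum : ℓ + d = k)
    (b : Fin ℓ → Fin k) (hb : Function.Injective b) (α : Equiv.Perm (Fin k)) :
    ∀ n, n ≤ ℓ → ∃ ρ : ℕ → Equiv.Perm (Fin k), ρ 0 = α ∧
      (∀ j, j < 2 * k * n → Compat k d j (ρ j) (ρ (j + 1))) ∧
      ∀ i : Fin ℓ, ℓ - n ≤ (i : ℕ) →
        ρ (2 * k * n) ⟨d + (i : ℕ), by have := i.isLt; omega⟩ = b i := by
  intro n
  induction n with
  | zero =>
    intro _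
    exact ⟨fun _ => α, rfl, fun j hj => absurd hj (by omega),
      fun i hi => absurd i.isLt (by omega)⟩
  | succ n IH =>
    intro hn
    obtain ⟨ρ, hρ0, hρC, hρend⟩ := IH (by omega)
    set σ := ρ (2 * k * n) with hσ
    have hi0 : ℓ - n - 1 < ℓ := by omega
    set i0 : Fin ℓ := ⟨ℓ - n - 1, hi0⟩ with hi0'
    set w : Fin k := b i0 with hw
    set z : Fin k := σ.symm w with hz
    have hy : d + (i0 : ℕ) < k := by have := i0.isLt; omega
    set y : Fin k := ⟨d + (i0 : ℕ), hy⟩ with hy'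
    have hσz : σ z = w := Equiv.apply_symm_apply σ w
    -- the token is not parked above y
    have hzy : (z : ℕ) ≤ (y : ℕ) := by
      by_contra hcon
      push_neg at hcon
      have hzk := z.isLt
      have hi' : (z : ℕ) - d < ℓ := by omega
      set i' : Fin ℓ := ⟨(z : ℕ) - d, hi'⟩ with hi''
      have hge : ℓ - n ≤ (i' : ℕ) := by
        simp only [hi'']
        have : (y : ℕ) = d + (ℓ - n - 1) := rfl
        omega
      have := hρend i' hge
      have hzeq : (⟨d + (i' : ℕ), by have := hi'; omega⟩ : Fin k) = z := by
        apply Fin.ext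
        simp only [hi'']
        have : (y : ℕ) = d + (ℓ - n - 1) := rfl
        omega
      rw [hzeq] at this
      -- σ z = b i' but σ z = w = b i0
      have : b i' = b i0 := by rw [← this, hσz]
      have : i' = i0 := hb this
      have : (i' : ℕ) = (i0 : ℕ) := by rw [this]
      simp only [hi''] at this
      have : (y : ℕ) = d + (ℓ - n - 1) := rfl
      have hv1 : ((⟨(z : ℕ) - d, hi'⟩ : Fin ℓ) : ℕ) = (z : ℕ) - d := rfl
      have hv2 : (i0 : ℕ) = ℓ - n - 1 := rfl
      omega
    obtain ⟨ρ', h1, h2, h3, h4⟩ := route hdk (2 * k) (2 * k * n) σ z y hzy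
      (by have := y.isLt; omega)
    refine ⟨fun t => if t ≤ 2 * k * n then ρ t else ρ' t, ?_, ?_, ?_⟩
    · simp [hρ0]
    · intro j hj
      rcases lt_trichotomy j (2 * k * n) with h | h | h
      · simp only [if_pos (by omega : j ≤ 2 * k * n), if_pos (by omega : j + 1 ≤ 2 * k * n)]
        exact hρC j h
      · subst h
        simp only [if_pos le_rfl, if_neg (by omega : ¬ 2 * k * n + 1 ≤ 2 * k * n)]
        have h5 : Compat k d (2 * k * n) (ρ' (2 * k * n)) (ρ' (2 * k * n + 1)) :=
          h2 (2 * k * n) le_rfl (by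
            have hkpos : 0 < k := by
              rcases Nat.eq_zero_or_pos k with h | h
              · exfalso; apply hdk; simp [h]
              · exact h
            omega)
        rwa [h1, hσ] at h5
      · simp only [if_neg (by omega : ¬ j ≤ 2 * k * n), if_neg (by omega : ¬ j + 1 ≤ 2 * k * n)]
        exact h2 j (by omega) (by
          have : 2 * k * (n + 1) = 2 * k * n + 2 * k := by ring
          omega)
    · intro i hi
      have hend : 2 * k * (n + 1) = 2 * k * n + 2 * k := by ring
      have hkpos : 0 < k := by
        rcases Nat.eq_zero_or_pos k with h | h
        · exfalso; apply hdk; simp [h]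
        · exact h
      simp only [hend, if_neg (by omega : ¬ 2 * k * n + 2 * k ≤ 2 * k * n)]
      rcases eq_or_lt_of_le hi with h | h
      · -- i = i0 : the freshly placed token
        have hiv : (i : ℕ) = (i0 : ℕ) := by simp only [hi0']; omega
        have hfin : (⟨d + (i : ℕ), by have := i.isLt; omega⟩ : Fin k) = y := by
          apply Fin.ext
          have hyv : (y : ℕ) = d + (i0 : ℕ) := rfl
          simp only [hyv]
          omega
        rw [hfin, h3, hσz, hw]
        exact congrArg b (Fin.ext hiv).symm
      · -- i > i0 : parked, untouched
        have hgt : (y : ℕ) < d + (i : ℕ) := by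
          have : (y : ℕ) = d + (ℓ - n - 1) := rfl
          omega
        have := h4 ⟨d + (i : ℕ), by have := i.isLt; omega⟩ hgt
        rw [this]
        exact hρend i (by omega)

theorem card_filter_lt_fin {k ℓ : ℕ} (h : ℓ ≤ k) :
    (Finset.univ.filter (fun x : Fin k => ((x : ℕ) < ℓ))).card = ℓ := by
  have himg : Finset.univ.filter (fun x : Fin k => ((x : ℕ) < ℓ))
      = Finset.univ.image (Fin.castLE h) := by
    ext x
    simp only [Finset.mem_filter, Finset.mem_univ, true_and, Finset.mem_image]
    constructor
    · intro hx
      exact ⟨⟨(x : ℕ), hx⟩, Fin.ext rfl⟩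
    · rintro ⟨i, -, rfl⟩
      exact i.isLt
  rw [himg, Finset.card_image_of_injective _ (Fin.castLE_injective h),
    Finset.card_univ, Fintype.card_fin]

/-- Any injection `Fin ℓ → Fin k` extends to a permutation of `Fin k`. -/
theorem extend_perm {k ℓ : ℕ} (h : ℓ ≤ k) (f : Fin ℓ → Fin k)
    (hf : Function.Injective f) :
    ∃ α : Equiv.Perm (Fin k), ∀ i : Fin ℓ, α ⟨(i : ℕ), lt_of_lt_of_le i.isLt h⟩ = f i := by
  classical
  have hcard : (Finset.univ.filter (fun x : Fin k => ¬ ((x : ℕ) < ℓ))).card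
      = ((Finset.univ : Finset (Fin k)) \ Finset.univ.image f).card := by
    have h1 := card_filter_lt_fin h
    have h2 := Finset.card_filter_add_card_filter_not
      (s := (Finset.univ : Finset (Fin k))) (p := fun x : Fin k => ((x : ℕ) < ℓ))
    have h3 : ((Finset.univ : Finset (Fin k)) \ Finset.univ.image f).card = k - ℓ := by
      rw [Finset.card_sdiff_of_subset (Finset.subset_univ _),
        Finset.card_image_of_injective _ hf, Finset.card_univ, Fintype.card_fin,
        Finset.card_univ, Fintype.card_fin]
    have h4 : (Finset.univ : Finset (Fin k)).card = k := by
      rw [Finset.card_univ, Fintype.card_fin]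
    omega
  let e := Finset.equivOfCardEq hcard
  have hmm : ∀ (x : Fin k) (hx : ¬ (x : ℕ) < ℓ),
      x ∈ Finset.univ.filter (fun x : Fin k => ¬ ((x : ℕ) < ℓ)) := by
    intro x hx
    simp only [Finset.mem_filter, Finset.mem_univ, true_and]
    exact hx
  have hnotim : ∀ (x : Fin k) (hx : ¬ (x : ℕ) < ℓ) (i : Fin ℓ),
      (e ⟨x, hmm x hx⟩ : Fin k) ≠ f i := by
    intro x hx i hcontra
    have hmem := (e ⟨x, hmm x hx⟩).2
    simp only [Finset.mem_sdiff, Finset.mem_univ, true_and, Finset.mem_image] at hmem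
    exact hmem ⟨i, hcontra.symm⟩
  set g : Fin k → Fin k := fun x =>
    if hx : (x : ℕ) < ℓ then f ⟨(x : ℕ), hx⟩
    else (e ⟨x, hmm x hx⟩ : Fin k) with hg
  have hginj : Function.Injective g := by
    intro x y hxy
    rw [hg] at hxy
    simp only at hxy
    by_cases hx : (x : ℕ) < ℓ <;> by_cases hy : (y : ℕ) < ℓ
    · rw [dif_pos hx, dif_pos hy] at hxy
      have h2 := congrArg Fin.val (hf hxy)
      exact Fin.ext h2
    · rw [dif_pos hx, dif_neg hy] at hxy
      exact absurd hxy.symm (hnotim y hy ⟨(x : ℕ), hx⟩)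
    · rw [dif_neg hx, dif_pos hy] at hxy
      exact absurd hxy (hnotim x hx ⟨(y : ℕ), hy⟩)
    · rw [dif_neg hx, dif_neg hy] at hxy
      have := e.injective (Subtype.ext hxy)
      exact congrArg Subtype.val this
  refine ⟨Equiv.ofBijective g ((Finite.injective_iff_bijective).mp hginj), ?_⟩
  intro i
  show g _ = f i
  rw [hg]
  simp only
  rw [dif_pos (show ((⟨(i : ℕ), lt_of_lt_of_le i.isLt h⟩ : Fin k) : ℕ) < ℓ from i.isLt)]

/-- Existence of the class pattern `p`. -/
theorem pattern_exists {k ℓ d : ℕ} (hdk : ¬ d ∣ k) (hsum : ℓ + d = k)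
    (hd2 : 2 ≤ d) (hl0 : 0 < ℓ)
    (a b : Fin ℓ → Fin k) (ha : Function.Injective a) (hb : Function.Injective b) :
    ∃ p : ℕ → Fin k,
      (∀ i : Fin ℓ, p (i : ℕ) = a i) ∧
      (∀ i : Fin ℓ, p ((k * ℓ * d) * k + (d + (i : ℕ))) = b i) ∧
      (∀ s t1 t2, t1 < k → t2 < k → p (s * d + t1) = p (s * d + t2) → t1 = t2) ∧
      (∀ c : Fin k, ((Finset.range ((k * ℓ * d + 1) * k)).filter
        (fun t => p t = c)).card = k * ℓ * d + 1) := by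
  have hk : 0 < k := by omega
  have hlk : ℓ < k := by omega
  set J := k * ℓ * d with hJ
  have hdiv : ∀ j r, r < k → (j * k + r) / k = j ∧ (j * k + r) % k = r := by
    intro j r hr
    constructor
    · rw [Nat.add_comm, Nat.add_mul_div_right _ _ hk, Nat.div_eq_of_lt hr]; omega
    · rw [Nat.add_comm, Nat.add_mul_mod_self_right, Nat.mod_eq_of_lt hr]
  obtain ⟨α, hα⟩ := extend_perm (le_of_lt hlk) a ha
  obtain ⟨ρ, hρ0, hρC, hρend⟩ := place hdk hsum b hb α ℓ le_rfl
  have h2kl : 2 * k * ℓ ≤ J := by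
    rw [hJ]
    calc 2 * k * ℓ = k * ℓ * 2 := by ring
    _ ≤ k * ℓ * d := Nat.mul_le_mul_left _ hd2
  set π : ℕ → Equiv.Perm (Fin k) := fun j => ρ (min j (2 * k * ℓ)) with hπ
  have hπC : ∀ j, Compat k d j (π j) (π (j + 1)) := by
    intro j
    rw [hπ]
    rcases Nat.lt_or_ge j (2 * k * ℓ) with h | h
    · simp only [Nat.min_eq_left (by omega : j ≤ 2 * k * ℓ),
        Nat.min_eq_left (by omega : j + 1 ≤ 2 * k * ℓ)]
      exact hρC j h
    · simp only [Nat.min_eq_right (by omega : 2 * k * ℓ ≤ j),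
        Nat.min_eq_right (by omega : 2 * k * ℓ ≤ j + 1)]
      exact compat_refl _
  have hπ0 : π 0 = α := by rw [hπ]; simp [hρ0]
  have hπJ : π J = ρ (2 * k * ℓ) := by rw [hπ]; simp [Nat.min_eq_right h2kl]
  set p : ℕ → Fin k := fun t => π (t / k) ⟨t % k, Nat.mod_lt t hk⟩ with hp
  have papply : ∀ q j' r (hrk : r < k), q = j' * k + r → p q = π j' ⟨r, hrk⟩ := by
    intro q j' r hrk hqe
    subst hqe
    obtain ⟨hq, hr⟩ := hdiv j' r hrk
    show π ((j' * k + r) / k) ⟨(j' * k + r) % k, Nat.mod_lt _ hk⟩ = π j' ⟨r, hrk⟩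
    rw [hq]
    exact congrArg (π j') (Fin.ext hr)
  refine ⟨p, ?_, ?_, ?_, ?_⟩
  · -- start values
    intro i
    have hik : (i : ℕ) < k := lt_trans i.isLt hlk
    rw [papply (i : ℕ) 0 (i : ℕ) hik (by omega), hπ0]
    exact hα i
  · -- end values
    intro i
    have hdi : d + (i : ℕ) < k := by have := i.isLt; omega
    rw [papply _ J (d + (i : ℕ)) hdi rfl, hπJ]
    exact hρend i (by omega)
  · -- window injectivity
    intro s t1 t2 ht1 ht2 heq
    set m := s * d with hm
    set j := m / k with hj
    set o := m % k with ho
    have hok : o < k := Nat.mod_lt _ hk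
    have hmjo : j * k + o = m := by rw [hj, ho]; exact Nat.div_add_mod' m k
    have hdvdo : 0 < o → d ∣ (o + j * k) := by
      intro _
      rw [show o + j * k = m by omega, hm]
      exact Dvd.intro_left s rfl
    have hsplit : ∀ t, (j + 1) * k + (o + t - k) = j * k + k + (o + t - k) := by
      intro t; rw [show (j + 1) * k = j * k + k from by ring]
    rcases Nat.lt_or_ge (o + t1) k with h1 | h1 <;> rcases Nat.lt_or_ge (o + t2) k with h2 | h2
    · rw [papply (m + t1) j (o + t1) (by omega) (by omega),
        papply (m + t2) j (o + t2) (by omega) (by omega)] at heq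
      have h3 := congrArg Fin.val ((π j).injective heq)
      simp only [] at h3
      omega
    · exfalso
      rw [papply (m + t1) j (o + t1) (by omega) (by omega),
        papply (m + t2) (j + 1) (o + t2 - k) (by omega) (by rw [hsplit]; omega)] at heq
      obtain ⟨t', ht', heq'⟩ := hπC j o (by omega) hok (hdvdo (by omega))
        ⟨o + t2 - k, by omega⟩ (show o + t2 - k < o by omega)
      have heq2 := heq.trans heq'
      have h3 := congrArg Fin.val ((π j).injective heq2)
      simp only [] at h3
      omega
    · exfalso
      rw [papply (m + t1) (j + 1) (o + t1 - k) (by omega) (by rw [hsplit]; omega),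
        papply (m + t2) j (o + t2) (by omega) (by omega)] at heq
      obtain ⟨t', ht', heq'⟩ := hπC j o (by omega) hok (hdvdo (by omega))
        ⟨o + t1 - k, by omega⟩ (show o + t1 - k < o by omega)
      have heq2 := heq.symm.trans heq'
      have h3 := congrArg Fin.val ((π j).injective heq2)
      simp only [] at h3
      omega
    · rw [papply (m + t1) (j + 1) (o + t1 - k) (by omega) (by rw [hsplit]; omega),
        papply (m + t2) (j + 1) (o + t2 - k) (by omega) (by rw [hsplit]; omega)] at heq
      have h3 := congrArg Fin.val ((π (j + 1)).injective heq)
      simp only [] at h3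
      omega
  · -- fiber counts
    intro c
    have hbij : ((Finset.range ((J + 1) * k)).filter (fun t => p t = c)).card
        = (Finset.range (J + 1)).card := by
      apply Finset.card_bij' (fun t _ => t / k)
        (fun m _ => m * k + (((π m).symm c : Fin k) : ℕ))
      · intro t ht
        rw [Finset.mem_filter, Finset.mem_range] at ht
        rw [Finset.mem_range]
        exact Nat.div_lt_of_lt_mul (by rw [Nat.mul_comm]; exact ht.1)
      · intro m hmm
        rw [Finset.mem_range] at hmm
        rw [Finset.mem_filter, Finset.mem_range]
        have hv : (((π m).symm c : Fin k) : ℕ) < k := ((π m).symm c).isLt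
        constructor
        · calc m * k + (((π m).symm c : Fin k) : ℕ) < m * k + k := by omega
            _ = (m + 1) * k := by ring
            _ ≤ (J + 1) * k := Nat.mul_le_mul_right _ (by omega)
        · rw [papply _ m _ hv rfl]
          rw [show (⟨(((π m).symm c : Fin k) : ℕ), hv⟩ : Fin k)
            = (π m).symm c from Fin.eta _ _]
          exact Equiv.apply_symm_apply _ _
      · intro t ht
        rw [Finset.mem_filter] at ht
        have hpt : π (t / k) ⟨t % k, Nat.mod_lt t hk⟩ = c := ht.2
        have h5 : (π (t / k)).symm c = ⟨t % k, Nat.mod_lt t hk⟩ :=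
          (Equiv.symm_apply_eq _).mpr hpt.symm
        rw [h5]
        show t / k * k + t % k = t
        exact Nat.div_add_mod' t k
      · intro m hmm
        have hv : (((π m).symm c : Fin k) : ℕ) < k := ((π m).symm c).isLt
        exact (hdiv m _ hv).1
    rw [hbij, Finset.card_range]
/-- Proposition 4: if `(k-ℓ) ∤ k`, the complete `k`-partite `k`-graph with classes
of size `kℓ(k-ℓ)+1` contains a Hamilton `ℓ`-path between any two given disjoint
partite ordered `ℓ`-sets of ends. -/
theorem complete_partite_spanning_path
    (k ℓ : ℕ) (hk : 3 ≤ k) (hl1 : 1 ≤ ℓ) (hl2 : ℓ ≤ k - 1)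
    (hnd : ¬ (k - ℓ) ∣ k)
    {α : Type*} [Fintype α] [DecidableEq α]
    (part : α → Fin k)
    (hpart : ∀ i : Fin k,
      (Finset.univ.filter (fun x => part x = i)).card = k * ℓ * (k - ℓ) + 1)
    (A B : Fin ℓ → α)
    (hA : Function.Injective A) (hB : Function.Injective B)
    (hAB : ∀ i j, A i ≠ B j)
    (hApart : Function.Injective (part ∘ A))
    (hBpart : Function.Injective (part ∘ B)) :
    ∃ v : ℕ → α,
      IsPathSeq k ℓ (k ^ 2 * ℓ * (k - ℓ) + k)
        (fun e => e.card = k ∧ ∀ x ∈ e, ∀ y ∈ e, x ≠ y → part x ≠ part y) v ∧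
      (∀ i : Fin ℓ, v (i : ℕ) = A i) ∧
      (∀ i : Fin ℓ, v (k ^ 2 * ℓ * (k - ℓ) + k - ℓ + (i : ℕ)) = B i) ∧
      (∀ x : α, ∃ t < k ^ 2 * ℓ * (k - ℓ) + k, v t = x) := by
  classical
  have hk0 : 0 < k := by omega
  have hl0 : 0 < ℓ := hl1
  have hd2 : 2 ≤ k - ℓ := by
    have hd1 : 1 ≤ k - ℓ := by omega
    rcases Nat.eq_or_lt_of_le hd1 with h | h
    · exact absurd (h ▸ one_dvd k : (k - ℓ) ∣ k) hnd
    · omega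
  have hlk : ℓ < k := by omega
  set J := k * ℓ * (k - ℓ) with hJdef
  set N := k ^ 2 * ℓ * (k - ℓ) + k with hNdef
  have hNJ : N = J * k + k := by rw [hNdef, hJdef]; ring
  have hJ1 : 1 ≤ J := by
    rw [hJdef]
    have := Nat.mul_pos (Nat.mul_pos hk0 hl0) (show 0 < k - ℓ by omega)
    omega
  have hkJk : k ≤ J * k := Nat.le_mul_of_pos_left k hJ1
  have hlN : 2 * ℓ + 2 ≤ N := by omega
  obtain ⟨p, hpA, hpB0, hwin, hfib0⟩ :=
    pattern_exists (k := k) (ℓ := ℓ) (d := k - ℓ) hnd (by omega) hd2 hl0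
      (fun i => part (A i)) (fun i => part (B i)) hApart hBpart
  have hpB : ∀ i : Fin ℓ, p (N - ℓ + (i : ℕ)) = part (B i) := by
    intro i
    have h2 : J * k = k * ℓ * (k - ℓ) * k := by rw [hJdef]
    have h1 : N - ℓ + (i : ℕ) = k * ℓ * (k - ℓ) * k + ((k - ℓ) + (i : ℕ)) := by
      have := i.isLt
      omega
    rw [h1]
    exact hpB0 i
  have hfib : ∀ c : Fin k, ((Finset.range N).filter (fun t => p t = c)).card = J + 1 := by
    intro c
    have h1 : N = (k * ℓ * (k - ℓ) + 1) * k := by rw [hNdef]; ring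
    rw [h1]
    exact hfib0 c
  -- counts of A- and B- forced elements per class
  set cA : Fin k → ℕ :=
    fun c => (Finset.univ.filter (fun i : Fin ℓ => part (A i) = c)).card with hcAdef
  set cB : Fin k → ℕ :=
    fun c => (Finset.univ.filter (fun i : Fin ℓ => part (B i) = c)).card with hcBdef
  have hSA : ∀ c : Fin k,
      ((Finset.range N).filter (fun t => p t = c ∧ t < ℓ)).card = cA c := by
    intro c
    have himg : (Finset.range N).filter (fun t => p t = c ∧ t < ℓ)
        = (Finset.univ.filter (fun i : Fin ℓ => part (A i) = c)).image Fin.val := by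
      ext t
      rw [Finset.mem_image]
      simp only [Finset.mem_filter, Finset.mem_range, Finset.mem_univ, true_and]
      constructor
      · rintro ⟨htN, hpc, htl⟩
        refine ⟨⟨t, htl⟩, ?_, rfl⟩
        rw [← hpc]
        exact (hpA ⟨t, htl⟩).symm
      · rintro ⟨i, hic, rfl⟩
        exact ⟨by have := i.isLt; omega, (hpA i).trans hic, i.isLt⟩
    rw [himg, Finset.card_image_of_injective _ Fin.val_injective, hcAdef]
  have hSB : ∀ c : Fin k,
      ((Finset.range N).filter (fun t => p t = c ∧ N - ℓ ≤ t)).card = cB c := by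
    intro c
    have himg : (Finset.range N).filter (fun t => p t = c ∧ N - ℓ ≤ t)
        = (Finset.univ.filter (fun i : Fin ℓ => part (B i) = c)).image
          (fun (i : Fin ℓ) => N - ℓ + (i : ℕ)) := by
      ext t
      rw [Finset.mem_image]
      simp only [Finset.mem_filter, Finset.mem_range, Finset.mem_univ, true_and]
      constructor
      · rintro ⟨htN, hpc, htg⟩
        refine ⟨⟨t - (N - ℓ), by omega⟩, ?_, by
          show N - ℓ + (t - (N - ℓ)) = t
          omega⟩
        have h2 : N - ℓ + ((⟨t - (N - ℓ), by omega⟩ : Fin ℓ) : ℕ) = t := by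
          show N - ℓ + (t - (N - ℓ)) = t
          omega
        rw [← h2] at hpc
        exact (hpB _).symm.trans hpc
      · rintro ⟨i, hic, rfl⟩
        exact ⟨by have := i.isLt; omega, (hpB i).trans hic, by omega⟩
    have hinj : Function.Injective (fun (i : Fin ℓ) => N - ℓ + (i : ℕ)) := by
      intro x y hxy
      have h6 : N - ℓ + (x : ℕ) = N - ℓ + (y : ℕ) := hxy
      exact Fin.ext (by omega)
    rw [himg, Finset.card_image_of_injective _ hinj, hcBdef]
  have hTA : ∀ c : Fin k,
      (Finset.univ.filter (fun x : α => part x = c ∧ ∃ i, A i = x)).card = cA c := by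
    intro c
    have himg : Finset.univ.filter (fun x : α => part x = c ∧ ∃ i, A i = x)
        = (Finset.univ.filter (fun i : Fin ℓ => part (A i) = c)).image A := by
      ext x
      rw [Finset.mem_image]
      simp only [Finset.mem_filter, Finset.mem_univ, true_and]
      constructor
      · rintro ⟨hxc, i, rfl⟩
        exact ⟨i, hxc, rfl⟩
      · rintro ⟨i, hic, rfl⟩
        exact ⟨hic, i, rfl⟩
    rw [himg, Finset.card_image_of_injective _ hA, hcAdef]
  have hTB : ∀ c : Fin k,
      (Finset.univ.filter (fun x : α => part x = c ∧ ∃ i, B i = x)).card = cB c := by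
    intro c
    have himg : Finset.univ.filter (fun x : α => part x = c ∧ ∃ i, B i = x)
        = (Finset.univ.filter (fun i : Fin ℓ => part (B i) = c)).image B := by
      ext x
      rw [Finset.mem_image]
      simp only [Finset.mem_filter, Finset.mem_univ, true_and]
      constructor
      · rintro ⟨hxc, i, rfl⟩
        exact ⟨i, hxc, rfl⟩
      · rintro ⟨i, hic, rfl⟩
        exact ⟨hic, i, rfl⟩
    rw [himg, Finset.card_image_of_injective _ hB, hcBdef]
  set SM : Fin k → Finset ℕ :=
    fun c => (Finset.range N).filter (fun t => p t = c ∧ ℓ ≤ t ∧ t < N - ℓ) with hSMdef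
  set TM : Fin k → Finset α :=
    fun c => Finset.univ.filter
      (fun x => part x = c ∧ (∀ i, A i ≠ x) ∧ (∀ i, B i ≠ x)) with hTMdef
  have hSsum : ∀ c : Fin k, J + 1 = cA c + cB c + (SM c).card := by
    intro c
    have hsplit : (Finset.range N).filter (fun t => p t = c)
        = (((Finset.range N).filter (fun t => p t = c ∧ t < ℓ))
          ∪ ((Finset.range N).filter (fun t => p t = c ∧ N - ℓ ≤ t)))
          ∪ SM c := by
      rw [hSMdef]
      ext t
      simp only [Finset.mem_filter, Finset.mem_union, Finset.mem_range]
      constructor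
      · rintro ⟨h1, h2⟩
        rcases Nat.lt_or_ge t ℓ with h | h
        · exact Or.inl (Or.inl ⟨h1, h2, h⟩)
        rcases Nat.lt_or_ge t (N - ℓ) with h' | h'
        · exact Or.inr ⟨h1, h2, h, h'⟩
        · exact Or.inl (Or.inr ⟨h1, h2, h'⟩)
      · rintro ((⟨h1, h2, _⟩ | ⟨h1, h2, _⟩) | ⟨h1, h2, _, _⟩) <;> exact ⟨h1, h2⟩
    have hd1 : Disjoint ((Finset.range N).filter (fun t => p t = c ∧ t < ℓ))
        ((Finset.range N).filter (fun t => p t = c ∧ N - ℓ ≤ t)) := by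
      rw [Finset.disjoint_left]
      intro t ht1 ht2
      simp only [Finset.mem_filter, Finset.mem_range] at ht1 ht2
      omega
    have hd2' : Disjoint (((Finset.range N).filter (fun t => p t = c ∧ t < ℓ))
        ∪ ((Finset.range N).filter (fun t => p t = c ∧ N - ℓ ≤ t))) (SM c) := by
      rw [Finset.disjoint_left]
      intro t ht1 ht2
      rw [hSMdef] at ht2
      simp only [Finset.mem_union, Finset.mem_filter, Finset.mem_range] at ht1 ht2
      omega
    rw [← hfib c, hsplit, Finset.card_union_of_disjoint hd2',
      Finset.card_union_of_disjoint hd1, hSA, hSB]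
  have hTsum : ∀ c : Fin k, J + 1 = cA c + cB c + (TM c).card := by
    intro c
    have hsplit : Finset.univ.filter (fun x : α => part x = c)
        = ((Finset.univ.filter (fun x : α => part x = c ∧ ∃ i, A i = x))
          ∪ (Finset.univ.filter (fun x : α => part x = c ∧ ∃ i, B i = x)))
          ∪ TM c := by
      rw [hTMdef]
      ext x
      simp only [Finset.mem_filter, Finset.mem_union, Finset.mem_univ, true_and]
      constructor
      · intro h1
        by_cases hxa : ∃ i, A i = x
        · exact Or.inl (Or.inl ⟨h1, hxa⟩)
        by_cases hxb : ∃ i, B i = x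
        · exact Or.inl (Or.inr ⟨h1, hxb⟩)
        · push_neg at hxa hxb
          exact Or.inr ⟨h1, hxa, hxb⟩
      · rintro ((⟨h1, _⟩ | ⟨h1, _⟩) | ⟨h1, _, _⟩) <;> exact h1
    have hd1 : Disjoint (Finset.univ.filter (fun x : α => part x = c ∧ ∃ i, A i = x))
        (Finset.univ.filter (fun x : α => part x = c ∧ ∃ i, B i = x)) := by
      rw [Finset.disjoint_left]
      intro x hx1 hx2
      simp only [Finset.mem_filter, Finset.mem_univ, true_and] at hx1 hx2
      obtain ⟨-, i, rfl⟩ := hx1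
      obtain ⟨-, j, hj⟩ := hx2
      exact hAB i j hj.symm
    have hd2' : Disjoint ((Finset.univ.filter (fun x : α => part x = c ∧ ∃ i, A i = x))
        ∪ (Finset.univ.filter (fun x : α => part x = c ∧ ∃ i, B i = x))) (TM c) := by
      rw [Finset.disjoint_left]
      intro x hx1 hx2
      rw [hTMdef] at hx2
      simp only [Finset.mem_union, Finset.mem_filter, Finset.mem_univ, true_and] at hx1 hx2
      obtain ⟨-, hxa, hxb⟩ := hx2
      rcases hx1 with ⟨-, i, hi⟩ | ⟨-, i, hi⟩
      · exact hxa i hi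
      · exact hxb i hi
    have hcls : (Finset.univ.filter (fun x : α => part x = c)).card = J + 1 := by
      rw [hpart c, hJdef]
    rw [← hcls, hsplit, Finset.card_union_of_disjoint hd2',
      Finset.card_union_of_disjoint hd1, hTA, hTB]
  have hST : ∀ c : Fin k, (SM c).card = (TM c).card := by
    intro c
    have h1 := hSsum c
    have h2 := hTsum c
    omega
  let e : (c : Fin k) → (SM c : Finset ℕ) ≃ (TM c : Finset α) :=
    fun c => Finset.equivOfCardEq (hST c)
  have hTMspec : ∀ (c : Fin k) (y : (TM c : Finset α)),
      part (y : α) = c ∧ (∀ i, A i ≠ (y : α)) ∧ (∀ i, B i ≠ (y : α)) := by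
    intro c y
    exact (Finset.mem_filter.mp y.2).2
  set v : ℕ → α := fun t =>
    if t < ℓ then A ⟨t % ℓ, Nat.mod_lt t hl0⟩
    else if N - ℓ ≤ t ∧ t < N then B ⟨(t - (N - ℓ)) % ℓ, Nat.mod_lt _ hl0⟩
    else if h3 : t ∈ SM (p t) then ((e (p t)) ⟨t, h3⟩ : α)
    else A ⟨0, hl0⟩ with hv
  have hvA : ∀ t, t < ℓ → v t = A ⟨t % ℓ, Nat.mod_lt t hl0⟩ := by
    intro t ht
    rw [hv]
    simp only [if_pos ht]
  have hvB : ∀ t, N - ℓ ≤ t → t < N →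
      v t = B ⟨(t - (N - ℓ)) % ℓ, Nat.mod_lt _ hl0⟩ := by
    intro t h1 h2
    rw [hv]
    simp only [if_neg (by omega : ¬ t < ℓ), if_pos (⟨h1, h2⟩ : N - ℓ ≤ t ∧ t < N)]
  have hvM : ∀ t (c : Fin k), p t = c → ℓ ≤ t → t < N - ℓ →
      ∃ h : t ∈ SM c, v t = ((e c) ⟨t, h⟩ : α) := by
    intro t c hc h1 h2
    subst hc
    have hmem : t ∈ SM (p t) :=
      Finset.mem_filter.mpr ⟨Finset.mem_range.mpr (by omega), rfl, h1, h2⟩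
    refine ⟨hmem, ?_⟩
    rw [hv]
    simp only [if_neg (by omega : ¬ t < ℓ),
      if_neg (show ¬ (N - ℓ ≤ t ∧ t < N) by omega), dif_pos hmem]
  have hvpart : ∀ t, t < N → part (v t) = p t := by
    intro t htN
    by_cases h1 : t < ℓ
    · rw [hvA t h1]
      have hmod : t % ℓ = t := Nat.mod_eq_of_lt h1
      have h2 : p t = part (A ⟨t % ℓ, Nat.mod_lt t hl0⟩) := by
        conv_lhs => rw [← hmod]
        exact hpA ⟨t % ℓ, Nat.mod_lt t hl0⟩
      exact h2.symm
    by_cases h2 : N - ℓ ≤ t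
    · rw [hvB t h2 htN]
      set i0 : Fin ℓ := ⟨(t - (N - ℓ)) % ℓ, Nat.mod_lt _ hl0⟩ with hi0
      have hmod : (t - (N - ℓ)) % ℓ = t - (N - ℓ) := Nat.mod_eq_of_lt (by omega)
      have h4 : N - ℓ + (i0 : ℕ) = t := by
        show N - ℓ + ((t - (N - ℓ)) % ℓ) = t
        rw [hmod]
        omega
      have h3 := hpB i0
      rw [h4] at h3
      exact h3.symm
    · obtain ⟨hm, hveq⟩ := hvM t (p t) rfl (by omega) (by omega)
      rw [hveq]
      exact (hTMspec _ _).1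
  have hvinj : Set.InjOn v (Set.Iio N) := by
    intro t1 ht1' t2 ht2' heq
    simp only [Set.mem_Iio] at ht1' ht2'
    by_cases h1a : t1 < ℓ <;> by_cases h2a : t2 < ℓ
    · -- A, A
      rw [hvA t1 h1a, hvA t2 h2a] at heq
      have h3 := congrArg Fin.val (hA heq)
      simp only at h3
      rw [Nat.mod_eq_of_lt h1a, Nat.mod_eq_of_lt h2a] at h3
      exact h3
    all_goals by_cases h1b : N - ℓ ≤ t1 <;> by_cases h2b : N - ℓ ≤ t2
    all_goals try omega
    -- remaining cases
    · -- t1 A, t2 B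
      rw [hvA t1 h1a, hvB t2 h2b ht2'] at heq
      exact absurd heq (hAB _ _)
    · -- t1 A, t2 M
      obtain ⟨hm, hveq⟩ := hvM t2 (p t2) rfl (by omega) (by omega)
      rw [hvA t1 h1a, hveq] at heq
      exact absurd heq ((hTMspec _ _).2.1 _)
    · -- t1 B, t2 A
      rw [hvB t1 h1b ht1', hvA t2 h2a] at heq
      exact absurd heq.symm (hAB _ _)
    · -- t1 M, t2 A
      obtain ⟨hm, hveq⟩ := hvM t1 (p t1) rfl (by omega) (by omega)
      rw [hvA t2 h2a, hveq] at heq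
      exact absurd heq.symm ((hTMspec _ _).2.1 _)
    · -- B, B
      rw [hvB t1 h1b ht1', hvB t2 h2b ht2'] at heq
      have h3 := congrArg Fin.val (hB heq)
      simp only at h3
      rw [Nat.mod_eq_of_lt (by omega), Nat.mod_eq_of_lt (by omega)] at h3
      omega
    · -- t1 B, t2 M
      obtain ⟨hm, hveq⟩ := hvM t2 (p t2) rfl (by omega) (by omega)
      rw [hvB t1 h1b ht1', hveq] at heq
      exact absurd heq ((hTMspec _ _).2.2 _)
    · -- t1 M, t2 B
      obtain ⟨hm, hveq⟩ := hvM t1 (p t1) rfl (by omega) (by omega)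
      rw [hvB t2 h2b ht2', hveq] at heq
      exact absurd heq.symm ((hTMspec _ _).2.2 _)
    · -- M, M
      have hpp : p t1 = p t2 := by
        rw [← hvpart t1 ht1', ← hvpart t2 ht2', heq]
      obtain ⟨m1, e1⟩ := hvM t1 (p t1) rfl (by omega) (by omega)
      obtain ⟨m2, e2⟩ := hvM t2 (p t1) hpp.symm (by omega) (by omega)
      rw [e1, e2] at heq
      have h3 := (e (p t1)).injective (Subtype.coe_injective heq)
      exact congrArg Subtype.val h3
  have hvsurj : ∀ x : α, ∃ t, t < N ∧ v t = x := by
    intro x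
    by_cases hxa : ∃ i, A i = x
    · obtain ⟨i, rfl⟩ := hxa
      refine ⟨(i : ℕ), by have := i.isLt; omega, ?_⟩
      rw [hvA _ i.isLt]
      exact congrArg A (Fin.ext (Nat.mod_eq_of_lt i.isLt))
    by_cases hxb : ∃ i, B i = x
    · obtain ⟨i, rfl⟩ := hxb
      refine ⟨N - ℓ + (i : ℕ), by have := i.isLt; omega, ?_⟩
      rw [hvB _ (by omega) (by have := i.isLt; omega)]
      refine congrArg B (Fin.ext ?_)
      show (N - ℓ + (i : ℕ) - (N - ℓ)) % ℓ = (i : ℕ)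
      rw [show N - ℓ + (i : ℕ) - (N - ℓ) = (i : ℕ) by omega, Nat.mod_eq_of_lt i.isLt]
    · push_neg at hxa hxb
      have hmem : x ∈ TM (part x) :=
        Finset.mem_filter.mpr ⟨Finset.mem_univ x, rfl, hxa, hxb⟩
      set y := (e (part x)).symm ⟨x, hmem⟩ with hy
      have hy2 := Finset.mem_filter.mp y.2
      have hyN := Finset.mem_range.mp hy2.1
      obtain ⟨hyp, hyl, hyr⟩ := hy2.2
      obtain ⟨m, hveq⟩ := hvM (y : ℕ) (part x) hyp hyl hyr
      refine ⟨(y : ℕ), by omega, ?_⟩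
      rw [hveq]
      have h5 : (⟨(y : ℕ), m⟩ : (SM (part x) : Finset ℕ)) = y := Subtype.ext rfl
      rw [h5, hy]
      have := (e (part x)).apply_symm_apply ⟨x, hmem⟩
      rw [this]
  refine ⟨v, ⟨by omega, ?_, hvinj, ?_⟩, ?_, ?_, ?_⟩
  · -- divisibility
    have h1 : N - k = k ^ 2 * ℓ * (k - ℓ) := by
      have h2 : N = k ^ 2 * ℓ * (k - ℓ) + k := hNdef
      omega
    rw [h1]
    exact Dvd.intro_left _ rfl
  · -- edges
    intro s hs
    have hposlt : ∀ t, t < k → s * (k - ℓ) + t < N := by intro t ht; omega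
    constructor
    · show ((Finset.range k).image (fun t => v (s * (k - ℓ) + t))).card = k
      rw [Finset.card_image_of_injOn, Finset.card_range]
      intro t1 h1 t2 h2 hveq
      simp only [Finset.mem_coe, Finset.mem_range] at h1 h2
      have h3 := hvinj (Set.mem_Iio.mpr (hposlt t1 h1)) (Set.mem_Iio.mpr (hposlt t2 h2)) hveq
      omega
    · intro x hx y hy hxy hpxy
      simp only [pathEdge, Finset.mem_image, Finset.mem_range] at hx hy
      obtain ⟨t1, h1, rfl⟩ := hx
      obtain ⟨t2, h2, rfl⟩ := hy
      apply hxy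
      have hp1 : part (v (s * (k - ℓ) + t1)) = p (s * (k - ℓ) + t1) :=
        hvpart _ (hposlt t1 h1)
      have hp2 : part (v (s * (k - ℓ) + t2)) = p (s * (k - ℓ) + t2) :=
        hvpart _ (hposlt t2 h2)
      have h3 : p (s * (k - ℓ) + t1) = p (s * (k - ℓ) + t2) := by
        rw [← hp1, ← hp2, hpxy]
      have h4 := hwin s t1 t2 h1 h2 h3
      rw [h4]
  · -- start values
    intro i
    rw [hvA _ i.isLt]
    exact congrArg A (Fin.ext (Nat.mod_eq_of_lt i.isLt))
  · -- end values
    intro i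
    rw [hvB _ (by have := i.isLt; omega) (by have := i.isLt; omega)]
    refine congrArg B (Fin.ext ?_)
    show (N - ℓ + (i : ℕ) - (N - ℓ)) % ℓ = (i : ℕ)
    rw [show N - ℓ + (i : ℕ) - (N - ℓ) = (i : ℕ) by omega, Nat.mod_eq_of_lt i.isLt]
  · -- surjectivity
    intro x
    obtain ⟨t, ht, hvt⟩ := hvsurj x
    exact ⟨t, ht, hvt⟩
end

section
/- Suppose k ≥ 3 and 1 ≤ ℓ ≤ k−1 is such that (k−ℓ) does not divide k. Let A and B be orderings of [k] (strings of length k over alphabet [k] containing each character exactly once) such that B is obtained from A by swapping the characters in positions i and i+1 for some 1 ≤ i ≤ k−1. Then there exists a string S over alphabet [k] of length (k−ℓ+1)k such that: S begins with A (i.e. its first k characters form A); S ends with B (i.e. its last k characters form B); S contains each character of [k] exactly k−ℓ+1 times; and for every 0 ≤ r ≤ k the characters of S in positions r(k−ℓ)+1, …, r(k−ℓ)+k are pairwise distinct. -/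
open Finset

private lemma count_res (k v n : ℕ) (hk : 0 < k) (hv : v < k) :
    ((Finset.range (n * k)).filter (fun p => p % k = v)).card = n := by
  have himg : (Finset.range (n * k)).filter (fun p => p % k = v)
      = (Finset.range n).image (fun q => q * k + v) := by
    ext p
    simp only [Finset.mem_filter, Finset.mem_range, Finset.mem_image]
    constructor
    · rintro ⟨hp, hpv⟩
      refine ⟨p / k, (Nat.div_lt_iff_lt_mul hk).mpr hp, ?_⟩
      have h2 := Nat.div_add_mod' p k
      omega
    · rintro ⟨q, hq, rfl⟩
      have h1 : q * k + k = (q + 1) * k := by ring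
      have h2 : (q + 1) * k ≤ n * k := Nat.mul_le_mul_right k (by omega)
      refine ⟨by omega, ?_⟩
      rw [Nat.add_comm, Nat.add_mul_mod_self_right, Nat.mod_eq_of_lt hv]
  rw [himg, Finset.card_image_of_injective _ ?_, Finset.card_range]
  intro a b hab
  simp only at hab
  have : a * k = b * k := by omega
  exact Nat.eq_of_mul_eq_mul_right hk this

/-- The string lemma behind Proposition 4: if `(k-ℓ) ∤ k` and `B` is obtained
from the ordering `A` of `[k]` by swapping two adjacent characters, then there
is a string of length `(k-ℓ+1)k` over `[k]` starting with `A`, ending with `B`,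
containing each character exactly `k-ℓ+1` times, in which each block of `k`
consecutive characters starting at a position `≡ 1 (mod k-ℓ)` has pairwise
distinct characters. (Strings are modelled as functions `ℕ → Fin k`, with
positions `0`-indexed.) -/
theorem swap_string_exists
    (k ℓ : ℕ) (hk : 3 ≤ k) (hl1 : 1 ≤ ℓ) (hl2 : ℓ ≤ k - 1)
    (hnd : ¬ (k - ℓ) ∣ k)
    (A B : Fin k → Fin k) (hA : Function.Bijective A)
    (hswap : ∃ i j : Fin k, (i : ℕ) + 1 = (j : ℕ) ∧ B = A ∘ Equiv.swap i j) :
    ∃ S : ℕ → Fin k,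
      (∀ j : Fin k, S (j : ℕ) = A j) ∧
      (∀ j : Fin k, S ((k - ℓ) * k + (j : ℕ)) = B j) ∧
      (∀ c : Fin k,
        ((Finset.range ((k - ℓ + 1) * k)).filter (fun p => S p = c)).card = k - ℓ + 1) ∧
      (∀ r ≤ k, ∀ p < k, ∀ q < k, p ≠ q →
        S (r * (k - ℓ) + p) ≠ S (r * (k - ℓ) + q)) := by
  classical
  obtain ⟨i, j, hij, hB⟩ := hswap
  have hk0 : 0 < k := by omega
  set m := k - ℓ with hmdef
  have hm1 : 1 ≤ m := by omega
  have hmne1 : m ≠ 1 := by intro h; exact hnd (h ▸ one_dvd k)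
  have hm2 : 2 ≤ m := by omega
  have hs : (i : ℕ) + 1 = (j : ℕ) := hij
  have hsk : (j : ℕ) < k := j.isLt
  have hs1 : 1 ≤ (j : ℕ) := by omega
  have hBsw : ∀ x, B x = A (Equiv.swap i j x) := fun x => by rw [hB]; rfl
  have hBbij : Function.Bijective B := by
    rw [hB]; exact hA.comp (Equiv.swap i j).bijective
  -- the gap lemma: two window-starts with residue `j` are at least `2k` apart
  have gap : ∀ r' r : ℕ, r' < r → (r' * m) % k = (j : ℕ) → (r * m) % k = (j : ℕ) →
      r' * m + 2 * k ≤ r * m := by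
    intro r' r hlt h1 h2
    have hle : r' * m ≤ r * m := Nat.mul_le_mul_right m hlt.le
    have hlt' : r' * m + m ≤ r * m := by
      have h := Nat.mul_le_mul_right m (show r' + 1 ≤ r from hlt)
      have h' : (r' + 1) * m = r' * m + m := by ring
      omega
    have hmod : r' * m ≡ r * m [MOD k] := by unfold Nat.ModEq; rw [h1, h2]
    obtain ⟨q, hq⟩ := (Nat.modEq_iff_dvd' hle).mp hmod
    have hq0 : q ≠ 0 := by rintro rfl; omega
    have hq1 : q ≠ 1 := by
      rintro rfl
      apply hnd
      refine ⟨r - r', ?_⟩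
      have h3 : (r - r') * m = r * m - r' * m := Nat.sub_mul r r' m
      have h4 : m * (r - r') = (r - r') * m := Nat.mul_comm m (r - r')
      omega
    have h5 : k * 2 ≤ k * q := Nat.mul_le_mul_left k (by omega)
    omega
  -- choice of the switching time t0
  have ht0 : ∃ t0, k ≤ t0 ∧ t0 ≤ m * k ∧ t0 % k ≠ (j : ℕ) ∧
      ∀ r ≤ k, (r * m) % k = (j : ℕ) → t0 ≤ r * m ∨ r * m + k ≤ t0 := by
    by_cases hR : ∃ r, r ≤ k ∧ (r * m) % k = (j : ℕ)
    · set r₁ := Nat.find hR with hr₁def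
      obtain ⟨hr₁k, hr₁s⟩ := Nat.find_spec hR
      have hmin : ∀ r < r₁, ¬(r ≤ k ∧ (r * m) % k = (j : ℕ)) := fun r hr => Nat.find_min hR hr
      by_cases hc : r₁ * m ≤ k
      · -- then r₁ * m = j, take t0 = j + k + 1
        have hlt : r₁ * m < k := by
          rcases Nat.lt_or_ge (r₁ * m) k with h | h
          · exact h
          · exfalso
            have : r₁ * m = k := by omega
            rw [this, Nat.mod_self] at hr₁s
            omega
        have hs' : r₁ * m = (j : ℕ) := by rw [← Nat.mod_eq_of_lt hlt]; exact hr₁s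
        refine ⟨(j : ℕ) + k + 1, by omega, ?_, ?_, ?_⟩
        · have h2k : 2 * k ≤ m * k := Nat.mul_le_mul_right k hm2
          omega
        · have hmod : ((j : ℕ) + k + 1) % k = ((j : ℕ) + 1) % k := by
            rw [show (j : ℕ) + k + 1 = k + ((j : ℕ) + 1) by omega, Nat.add_mod_left]
          rw [hmod]
          by_cases h : (j : ℕ) + 1 < k
          · rw [Nat.mod_eq_of_lt h]; omega
          · have hjk : (j : ℕ) + 1 = k := by omega
            rw [hjk, Nat.mod_self]; omega
        · intro r hrk hrs
          rcases lt_trichotomy r r₁ with h | h | h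
          · exact ((hmin r h) ⟨hrk, hrs⟩).elim
          · subst h; right; omega
          · left
            have := gap r₁ r h hr₁s hrs
            omega
      · -- r₁ * m ≥ k + 1, take t0 = r₁ * m - 1
        push_neg at hc
        have ha : r₁ * m = k * (r₁ * m / k) + (j : ℕ) := by
          conv_lhs => rw [← Nat.div_add_mod (r₁ * m) k]
          rw [hr₁s]
        refine ⟨r₁ * m - 1, by omega, ?_, ?_, ?_⟩
        · have : r₁ * m ≤ k * m := Nat.mul_le_mul_right m hr₁k
          have hkm : k * m = m * k := Nat.mul_comm k m
          omega
        · rw [show r₁ * m - 1 = k * (r₁ * m / k) + ((j : ℕ) - 1) by omega,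
            Nat.mul_add_mod, Nat.mod_eq_of_lt (by omega)]
          omega
        · intro r hrk hrs
          rcases lt_trichotomy r r₁ with h | h | h
          · exact ((hmin r h) ⟨hrk, hrs⟩).elim
          · subst h; left; omega
          · left
            have : r₁ * m ≤ r * m := Nat.mul_le_mul_right m h.le
            omega
    · refine ⟨k, le_refl k, ?_, ?_, ?_⟩
      · have : 1 * k ≤ m * k := Nat.mul_le_mul_right k hm1
        omega
      · rw [Nat.mod_self]; omega
      · intro r hrk hrs
        exact (hR ⟨r, hrk, hrs⟩).elim
  obtain ⟨t0, ht0k, ht0mk, ht0s, ht0R⟩ := ht0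
  -- the string
  set S : ℕ → Fin k := fun t =>
    if t < t0 then A ⟨t % k, Nat.mod_lt t hk0⟩ else B ⟨t % k, Nat.mod_lt t hk0⟩ with hSdef
  have hSlt : ∀ t, t < t0 → S t = A ⟨t % k, Nat.mod_lt t hk0⟩ := fun t ht => if_pos ht
  have hSge : ∀ t, ¬ t < t0 → S t = B ⟨t % k, Nat.mod_lt t hk0⟩ := fun t ht => if_neg ht
  -- mod helpers
  have hmodp : ∀ p : ℕ, p % k = (j : ℕ) → (p - 1) % k = (i : ℕ) := by
    intro p hp
    have hd := Nat.div_add_mod p k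
    rw [show p - 1 = k * (p / k) + (i : ℕ) by omega, Nat.mul_add_mod,
      Nat.mod_eq_of_lt (by omega)]
  have hmods : ∀ p : ℕ, p % k = (i : ℕ) → (p + 1) % k = (j : ℕ) := by
    intro p hp
    have hd := Nat.div_add_mod p k
    rw [show p + 1 = k * (p / k) + (j : ℕ) by omega, Nat.mul_add_mod, Nat.mod_eq_of_lt hsk]
  have hcancel : ∀ a p q : ℕ, p < k → q < k → (a + p) % k = (a + q) % k → p = q := by
    intro a p q hp hq h
    have h2 : p ≡ q [MOD k] := Nat.ModEq.add_left_cancel' a h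
    unfold Nat.ModEq at h2
    rw [Nat.mod_eq_of_lt hp, Nat.mod_eq_of_lt hq] at h2
    exact h2
  refine ⟨S, ?_, ?_, ?_, ?_⟩
  · -- starts with A
    intro x
    rw [hSlt (x : ℕ) (lt_of_lt_of_le x.isLt ht0k)]
    congr 1
    exact Fin.ext (Nat.mod_eq_of_lt x.isLt)
  · -- ends with B
    intro x
    rw [hSge (m * k + (x : ℕ)) (by omega)]
    congr 1
    apply Fin.ext
    show (m * k + (x : ℕ)) % k = (x : ℕ)
    rw [Nat.add_comm, Nat.add_mul_mod_self_right, Nat.mod_eq_of_lt x.isLt]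
  · -- each character appears m+1 times
    intro c
    obtain ⟨c₀, rfl⟩ := hA.surjective c
    set N := (m + 1) * k with hNdef
    set φ : ℕ → ℕ := fun p =>
      if t0 ≤ p ∧ p % k = (j : ℕ) then p - 1
      else if t0 ≤ p ∧ p % k = (i : ℕ) then p + 1 else p with hφdef
    have hNk : N = m * k + k := by rw [hNdef]; ring
    have hkm' : k * m = m * k := Nat.mul_comm k m
    have hNsub : (N - 1) % k = k - 1 := by
      rw [show N - 1 = k * m + (k - 1) by omega, Nat.mul_add_mod,
        Nat.mod_eq_of_lt (by omega)]
    have hik : (i : ℕ) < k - 1 := by omega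
    -- φ is an involution
    have hφφ : ∀ p, φ (φ p) = p := by
      intro p
      by_cases h1 : t0 ≤ p ∧ p % k = (j : ℕ)
      · have hp1 : t0 < p := by
          rcases Nat.lt_or_ge t0 p with h | h
          · exact h
          · exfalso
            have : p = t0 := by omega
            exact ht0s (this ▸ h1.2)
        have hφp : φ p = p - 1 := if_pos h1
        rw [hφp]
        have hm1' : (p - 1) % k = (i : ℕ) := hmodp p h1.2
        have hc1 : ¬ (t0 ≤ p - 1 ∧ (p - 1) % k = (j : ℕ)) := by
          rintro ⟨-, hh⟩; omega
        have hc2 : t0 ≤ p - 1 ∧ (p - 1) % k = (i : ℕ) := ⟨by omega, hm1'⟩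
        show (if _ then _ else _) = p
        rw [if_neg hc1, if_pos hc2]
        omega
      · by_cases h2 : t0 ≤ p ∧ p % k = (i : ℕ)
        · have hφp : φ p = p + 1 := by
            show (if _ then _ else _) = p + 1
            rw [if_neg h1, if_pos h2]
          rw [hφp]
          have hc1 : t0 ≤ p + 1 ∧ (p + 1) % k = (j : ℕ) := ⟨by omega, hmods p h2.2⟩
          show (if _ then _ else _) = p
          rw [if_pos hc1]
          omega
        · have hφp : φ p = p := by
            show (if _ then _ else _) = p
            rw [if_neg h1, if_neg h2]
          rw [hφp, hφp]
    have hφN : ∀ p, p < N → φ p < N := by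
      intro p hp
      by_cases h1 : t0 ≤ p ∧ p % k = (j : ℕ)
      · rw [show φ p = p - 1 from if_pos h1]; omega
      · by_cases h2 : t0 ≤ p ∧ p % k = (i : ℕ)
        · have hφp : φ p = p + 1 := by
            show (if _ then _ else _) = p + 1
            rw [if_neg h1, if_pos h2]
          rw [hφp]
          have hpne : p ≠ N - 1 := by
            intro h
            rw [h, hNsub] at h2
            omega
          omega
        · have hφp : φ p = p := by
            show (if _ then _ else _) = p
            rw [if_neg h1, if_neg h2]
          rw [hφp]; exact hp
    have hSφ : ∀ p, p < N → S p = A ⟨φ p % k, Nat.mod_lt _ hk0⟩ := by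
      intro p hp
      by_cases h1 : t0 ≤ p ∧ p % k = (j : ℕ)
      · have hφp : φ p = p - 1 := if_pos h1
        rw [hSge p (by omega), hφp]
        have hj' : (⟨p % k, Nat.mod_lt p hk0⟩ : Fin k) = j := Fin.ext h1.2
        rw [hj', hBsw, Equiv.swap_apply_right]
        congr 1
        exact Fin.ext (hmodp p h1.2).symm
      · by_cases h2 : t0 ≤ p ∧ p % k = (i : ℕ)
        · have hφp : φ p = p + 1 := by
            show (if _ then _ else _) = p + 1
            rw [if_neg h1, if_pos h2]
          rw [hSge p (by omega), hφp]
          have hi' : (⟨p % k, Nat.mod_lt p hk0⟩ : Fin k) = i := Fin.ext h2.2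
          rw [hi', hBsw, Equiv.swap_apply_left]
          congr 1
          exact Fin.ext (hmods p h2.2).symm
        · have hφp : φ p = p := by
            show (if _ then _ else _) = p
            rw [if_neg h1, if_neg h2]
          rw [hφp]
          by_cases hp0 : p < t0
          · exact hSlt p hp0
          · rw [hSge p hp0, hBsw, Equiv.swap_apply_of_ne_of_ne]
            · intro h
              exact h2 ⟨by omega, congrArg Fin.val h⟩
            · intro h
              exact h1 ⟨by omega, congrArg Fin.val h⟩
    have hbij : ((Finset.range N).filter (fun p => S p = A c₀)).card
        = ((Finset.range N).filter (fun p => p % k = (c₀ : ℕ))).card := by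
      apply Finset.card_nbij' φ φ
      · intro a ha
        simp only [Finset.mem_coe, Finset.mem_filter, Finset.mem_range] at ha ⊢
        obtain ⟨haN, haS⟩ := ha
        refine ⟨hφN a haN, ?_⟩
        have h3 := hSφ a haN
        rw [haS] at h3
        exact (congrArg Fin.val (hA.injective h3)).symm
      · intro a ha
        simp only [Finset.mem_coe, Finset.mem_filter, Finset.mem_range] at ha ⊢
        obtain ⟨haN, haq⟩ := ha
        refine ⟨hφN a haN, ?_⟩
        have h3 := hSφ (φ a) (hφN a haN)
        rw [hφφ a] at h3
        rw [h3]
        congr 1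
        exact Fin.ext haq
      · intro a _; exact hφφ a
      · intro a _; exact hφφ a
    rw [hbij]
    exact count_res k (c₀ : ℕ) (m + 1) hk0 c₀.isLt
  · -- windows are rainbow
    have key : ∀ r ≤ k, ∀ p < k, ∀ q < k, r * m + p < t0 → t0 ≤ r * m + q →
        S (r * m + p) = S (r * m + q) → False := by
      intro r hr p hp q hq hu hv heq
      rw [hSlt _ hu, hSge _ (not_lt.mpr hv), hBsw] at heq
      have hfe := hA.injective heq
      have hne : p ≠ q := by intro h; subst h; omega
      have hmodne : (r * m + p) % k ≠ (r * m + q) % k :=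
        fun h => hne (hcancel (r * m) p q hp hq h)
      have hswne : Equiv.swap i j (⟨(r * m + q) % k, Nat.mod_lt _ hk0⟩ : Fin k)
          ≠ ⟨(r * m + q) % k, Nat.mod_lt _ hk0⟩ := by
        rw [← hfe]
        intro h
        exact hmodne (congrArg Fin.val h)
      rcases (Equiv.swap_apply_ne_self_iff.mp hswne).2 with hcase | hcase
      · -- residue of v is i, residue of u is j
        have hqk : (r * m + q) % k = (i : ℕ) := congrArg Fin.val hcase
        have hpk : (r * m + p) % k = (j : ℕ) := by
          rw [hcase, Equiv.swap_apply_left] at hfe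
          exact congrArg Fin.val hfe
        have h5 : (r * m + p) % k = (r * m + (q + 1)) % k := by
          rw [← Nat.add_assoc, hpk, hmods _ hqk]
        by_cases hq1 : q + 1 < k
        · have := hcancel (r * m) p (q + 1) hp hq1 h5
          omega
        · have hq1' : q + 1 = k := by omega
          have h6 : (r * m + (q + 1)) % k = (r * m + 0) % k := by
            rw [hq1', Nat.add_zero, Nat.add_mod_right]
          have hp0 : p = 0 := hcancel (r * m) p 0 hp hk0 (h5.trans h6)
          subst hp0
          rw [Nat.add_zero] at hpk
          rcases ht0R r hr hpk with h | h <;> omega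
      · -- residue of v is j, residue of u is i
        have hqk : (r * m + q) % k = (j : ℕ) := congrArg Fin.val hcase
        have hpk : (r * m + p) % k = (i : ℕ) := by
          rw [hcase, Equiv.swap_apply_right] at hfe
          exact congrArg Fin.val hfe
        have h5 : (r * m + (p + 1)) % k = (r * m + q) % k := by
          rw [← Nat.add_assoc, hmods _ hpk, hqk]
        by_cases hp1 : p + 1 < k
        · have h6 := hcancel (r * m) (p + 1) q hp1 hq h5
          -- then t0 = r*m+q and t0 % k = j : contradiction
          have ht0eq : t0 = r * m + q := by omega
          exact ht0s (ht0eq ▸ hqk)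
        · have hp1' : p + 1 = k := by omega
          have h6 : (r * m + 0) % k = (r * m + q) % k := by
            rw [← h5, hp1', Nat.add_zero, Nat.add_mod_right]
          have hq0 : q = 0 := (hcancel (r * m) 0 q hk0 hq h6).symm
          omega
    intro r hr p hp q hq hpq heq
    by_cases h1 : r * m + p < t0 <;> by_cases h2 : r * m + q < t0
    · rw [hSlt _ h1, hSlt _ h2] at heq
      have := congrArg Fin.val (hA.injective heq)
      exact hpq (hcancel (r * m) p q hp hq this)
    · exact key r hr p hp q hq h1 (not_lt.mp h2) heq
    · exact key r hr q hq p hp h2 (not_lt.mp h1) heq.symm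
    · rw [hSge _ h1, hSge _ h2] at heq
      have := congrArg Fin.val (hBbij.injective heq)
      exact hpq (hcancel (r * m) p q hp hq this)
end

section
/- Suppose k ≥ 3 and k/2 ≤ ℓ ≤ k−1 is such that (k−ℓ) does not divide k. Then there exists a (4ℓ−k+2)-partite k-graph P(k,ℓ) with the following properties. (1) P(k,ℓ) is the union of 4ℓ+1 internally disjoint ℓ-paths, each containing between k²ℓ and 2k⁵ vertices, all having the same ordered ℓ-sets T₁ and T₂ as ordered ends (called the ordered ends of P(k,ℓ)); in particular P(k,ℓ) contains at most 10k⁶ vertices. (2) The vertex classes of P(k,ℓ) are disjoint sets V_w, one for each vertex w of W(k,ℓ). (3) Whenever v_1 ∈ V_{w_1}, …, v_k ∈ V_{w_k} are such that {v_1,…,v_k} is an edge of P(k,ℓ), the set {w_1,…,w_k} is an edge of W(k,ℓ); furthermore, if X and Y are the ordered ends of W(k,ℓ), then the ordered ends of P(k,ℓ) are contained in ∪_{w∈X} V_w and ∪_{w∈Y} V_w respectively. -/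
open Finset

/-- The vertex set of the `k`-graph `W(k,ℓ)`: ordered ends `X` and `Y` (each of
size `ℓ`) together with the extra vertices `Z` (of size `2ℓ-k+2`). -/
abbrev WVert (k ℓ : ℕ) := Fin ℓ ⊕ (Fin ℓ ⊕ Fin (2 * ℓ - k + 2))

/-- The edge set of `W(k,ℓ)`: the `i`-th edge (`0`-indexed) is
`{x_1,…,x_{ℓ-i}} ∪ {y_1,…,y_{k-1-ℓ+i}} ∪ {z_{i+1}}`. -/
def WEdges (k ℓ : ℕ) : Finset (Finset (WVert k ℓ)) :=
  Finset.univ.image (fun i : Fin (2 * ℓ - k + 2) =>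
    (Finset.univ.filter (fun j : Fin ℓ => (j : ℕ) < ℓ - (i : ℕ))).image Sum.inl ∪
    (Finset.univ.filter (fun j : Fin ℓ => (j : ℕ) < k - 1 - ℓ + (i : ℕ))).image
      (fun j => Sum.inr (Sum.inl j)) ∪
    {Sum.inr (Sum.inr i)})

/-- The edge set of the `ℓ`-path with vertex sequence `v` on `r` vertices. -/
def pathEdgeSet (k ℓ r : ℕ) {α : Type*} [DecidableEq α] (v : ℕ → α) : Finset (Finset α) :=
  (Finset.range ((r - k) / (k - ℓ) + 1)).image (fun s => pathEdge k ℓ v s)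

namespace PGraphAux

variable (k ℓ : ℕ)

def xv (a : ℕ) : WVert k ℓ :=
  if h : a < ℓ then Sum.inl ⟨a, h⟩ else Sum.inr (Sum.inr ⟨0, by omega⟩)

def yv (b : ℕ) : WVert k ℓ :=
  if h : b < ℓ then Sum.inr (Sum.inl ⟨b, h⟩) else Sum.inr (Sum.inr ⟨0, by omega⟩)

def zv (e : ℕ) : WVert k ℓ :=
  if h : e < 2 * ℓ - k + 2 then Sum.inr (Sum.inr ⟨e, h⟩) else Sum.inr (Sum.inr ⟨0, by omega⟩)

/-- ordering of edge `e` of `W(k,ℓ)` : x's ascending, then `z_e`, then y's descending. -/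
def pat (e t : ℕ) : WVert k ℓ :=
  if t < ℓ - e then xv k ℓ t else if t = ℓ - e then zv k ℓ e else yv k ℓ (k - t - 1)

/-- edge index of block `n`. -/
def eSeq : ℕ → ℕ
  | 0 => 0
  | n + 1 =>
    if eSeq n + 1 < 2 * ℓ - k + 2 ∧ ¬ (k - ℓ) ∣ (ℓ - eSeq n + n * k) then eSeq n + 1 else eSeq n

/-- the class sequence. -/
def cseq (t : ℕ) : WVert k ℓ := pat k ℓ (eSeq k ℓ (t / k)) (t % k)

def numB : ℕ := (k - ℓ) * k * ℓ + 1
def rr : ℕ := numB k ℓ * k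

def edgeF (e : ℕ) : Finset (WVert k ℓ) :=
  (Finset.univ.filter (fun j : Fin ℓ => (j : ℕ) < ℓ - e)).image Sum.inl ∪
    (Finset.univ.filter (fun j : Fin ℓ => (j : ℕ) < k - 1 - ℓ + e)).image
      (fun j => Sum.inr (Sum.inl j)) ∪
    {zv k ℓ e}

lemma edgeF_mem_WEdges {e : ℕ} (he : e < 2 * ℓ - k + 2) : edgeF k ℓ e ∈ WEdges k ℓ := by
  refine Finset.mem_image.2 ⟨⟨e, he⟩, Finset.mem_univ _, ?_⟩
  simp only [edgeF, zv, dif_pos he]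

lemma xv_mem_edgeF {a e : ℕ} (ha : a < ℓ - e) : xv k ℓ a ∈ edgeF k ℓ e := by
  have h : a < ℓ := by omega
  rw [xv, dif_pos h]
  exact Finset.mem_union_left _ (Finset.mem_union_left _
    (Finset.mem_image_of_mem _ (Finset.mem_filter.2 ⟨Finset.mem_univ _, ha⟩)))

lemma yv_mem_edgeF {b e : ℕ} (hb : b < k - 1 - ℓ + e) (hbl : b < ℓ) :
    yv k ℓ b ∈ edgeF k ℓ e := by
  rw [yv, dif_pos hbl]
  exact Finset.mem_union_left _ (Finset.mem_union_right _
    (Finset.mem_image_of_mem _ (Finset.mem_filter.2 ⟨Finset.mem_univ _, hb⟩)))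

lemma zv_mem_edgeF {e : ℕ} : zv k ℓ e ∈ edgeF k ℓ e :=
  Finset.mem_union_right _ (Finset.mem_singleton_self _)

lemma edgeF_cases {w : WVert k ℓ} {e : ℕ} (hw : w ∈ edgeF k ℓ e) :
    (∃ a, a < ℓ - e ∧ w = xv k ℓ a) ∨
    (∃ b, b < k - 1 - ℓ + e ∧ b < ℓ ∧ w = yv k ℓ b) ∨ w = zv k ℓ e := by
  rcases Finset.mem_union.1 hw with hw' | hw'
  · rcases Finset.mem_union.1 hw' with hx | hy
    · rcases Finset.mem_image.1 hx with ⟨j, hj, rfl⟩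
      exact Or.inl ⟨j, (Finset.mem_filter.1 hj).2, by rw [xv, dif_pos j.isLt]⟩
    · rcases Finset.mem_image.1 hy with ⟨j, hj, rfl⟩
      exact Or.inr (Or.inl ⟨j, (Finset.mem_filter.1 hj).2, j.isLt, by rw [yv, dif_pos j.isLt]⟩)
  · exact Or.inr (Or.inr (Finset.mem_singleton.1 hw'))

lemma eSeq_succ (n : ℕ) :
    (eSeq k ℓ (n + 1) = eSeq k ℓ n + 1 ∧ eSeq k ℓ n + 1 < 2 * ℓ - k + 2 ∧
      ¬ (k - ℓ) ∣ (ℓ - eSeq k ℓ n + n * k)) ∨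
    (eSeq k ℓ (n + 1) = eSeq k ℓ n ∧
      (¬ eSeq k ℓ n + 1 < 2 * ℓ - k + 2 ∨ (k - ℓ) ∣ (ℓ - eSeq k ℓ n + n * k))) := by
  rw [eSeq]
  split_ifs with h
  · exact Or.inl ⟨rfl, h.1, h.2⟩
  · rw [not_and_or, not_not] at h
    exact Or.inr ⟨rfl, h⟩

lemma eSeq_lt (n : ℕ) : eSeq k ℓ n < 2 * ℓ - k + 2 := by
  induction n with
  | zero => rw [eSeq]; omega
  | succ n ih =>
    rcases eSeq_succ k ℓ n with ⟨h1, h2, _⟩ | ⟨h1, _⟩ <;> omega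

lemma eSeq_le_succ (n : ℕ) : eSeq k ℓ n ≤ eSeq k ℓ (n + 1) := by
  rcases eSeq_succ k ℓ n with ⟨h1, _, _⟩ | ⟨h1, _⟩ <;> omega

lemma eSeq_mono : Monotone (eSeq k ℓ) := monotone_nat_of_le_succ (eSeq_le_succ k ℓ)

lemma eSeq_reach (hnd : ¬ (k - ℓ) ∣ k) (n : ℕ) :
    min (2 * ℓ - k + 1) n ≤ eSeq k ℓ (2 * n) := by
  induction n with
  | zero => omega
  | succ n ih =>
    by_cases hd : 2 * ℓ - k + 1 ≤ eSeq k ℓ (2 * n)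
    · have := eSeq_mono k ℓ (show 2 * n ≤ 2 * (n + 1) by omega)
      omega
    · -- eSeq (2n) + 1 < 2ℓ-k+2
      have hlt : eSeq k ℓ (2 * n) + 1 < 2 * ℓ - k + 2 := by omega
      have hstep : eSeq k ℓ (2 * n) + 1 ≤ eSeq k ℓ (2 * n + 2) := by
        have hxx : eSeq k ℓ (2 * n + 1 + 1) = eSeq k ℓ (2 * n + 2) := rfl
        rcases eSeq_succ k ℓ (2 * n) with ⟨h1, _, _⟩ | ⟨h1, h2⟩
        · have := eSeq_le_succ k ℓ (2 * n + 1)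
          omega
        · have h2' : (k - ℓ) ∣ (ℓ - eSeq k ℓ (2 * n) + 2 * n * k) := by tauto
          rcases eSeq_succ k ℓ (2 * n + 1) with ⟨g1, _, _⟩ | ⟨g1, g2⟩
          · omega
          · exfalso
            rw [h1] at g2
            rcases g2 with g2 | g2
            · omega
            · apply hnd
              have hk : ℓ - eSeq k ℓ (2 * n) + (2 * n + 1) * k =
                  (ℓ - eSeq k ℓ (2 * n) + 2 * n * k) + k := by ring
              rw [hk] at g2
              exact (Nat.dvd_add_right h2').mp g2
      have h2n2 : 2 * (n + 1) = 2 * n + 2 := by ring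
      rw [h2n2]
      omega

lemma eSeq_stable (hnd : ¬ (k - ℓ) ∣ k) {n : ℕ} (hn : 2 * (2 * ℓ - k + 1) ≤ n) :
    eSeq k ℓ n = 2 * ℓ - k + 1 := by
  have h1 := eSeq_reach k ℓ hnd (2 * ℓ - k + 1)
  have h2 := eSeq_mono k ℓ hn
  have h3 := eSeq_lt k ℓ n
  omega

/-- window lying over patterns `e` (high part) and `e'` (low part), cut at `α ≤ ℓ - e'`:
the window is edge `e`. -/
lemma windowA (hk : 3 ≤ k) (hl1 : k ≤ 2 * ℓ) (hl2 : ℓ ≤ k - 1)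
    {e e' α : ℕ} (he : e < 2 * ℓ - k + 2) (he' : e' < 2 * ℓ - k + 2) (hee' : e ≤ e')
    (hα : α ≤ ℓ - e') (hαk : α < k) :
    (Finset.range k).image
      (fun t => if α + t < k then pat k ℓ e (α + t) else pat k ℓ e' (α + t - k)) =
    edgeF k ℓ e := by
  ext w
  simp only [Finset.mem_image, Finset.mem_range]
  constructor
  · rintro ⟨t, ht, rfl⟩
    by_cases h1 : α + t < k
    · rw [if_pos h1]
      unfold pat
      by_cases h2 : α + t < ℓ - e
      · rw [if_pos h2]; exact xv_mem_edgeF k ℓ h2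
      · rw [if_neg h2]
        by_cases h3 : α + t = ℓ - e
        · rw [if_pos h3]; exact zv_mem_edgeF k ℓ
        · rw [if_neg h3]
          exact yv_mem_edgeF k ℓ (by omega) (by omega)
    · rw [if_neg h1]
      unfold pat
      rw [if_pos (show α + t - k < ℓ - e' by omega)]
      exact xv_mem_edgeF k ℓ (by omega)
  · intro hw
    rcases edgeF_cases k ℓ hw with ⟨a, ha, rfl⟩ | ⟨b, hb, hbl, rfl⟩ | rfl
    · by_cases haα : α ≤ a
      · refine ⟨a - α, by omega, ?_⟩
        rw [if_pos (by omega)]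
        unfold pat
        rw [if_pos (show α + (a - α) < ℓ - e by omega)]
        congr 1
        omega
      · refine ⟨a + k - α, by omega, ?_⟩
        rw [if_neg (by omega)]
        unfold pat
        rw [if_pos (show α + (a + k - α) - k < ℓ - e' by omega)]
        congr 1
        omega
    · refine ⟨k - 1 - b - α, by omega, ?_⟩
      rw [if_pos (by omega)]
      unfold pat
      rw [if_neg (by omega), if_neg (by omega)]
      congr 1
      omega
    · refine ⟨ℓ - e - α, by omega, ?_⟩
      rw [if_pos (by omega)]
      unfold pat
      rw [if_neg (by omega), if_pos (by omega)]

/-- window lying over patterns `e` (high part, pure y's since `α > ℓ - e`) and `e'` (low part):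
the window is edge `e'`. -/
lemma windowB (hk : 3 ≤ k) (hl1 : k ≤ 2 * ℓ) (hl2 : ℓ ≤ k - 1)
    {e e' α : ℕ} (he : e < 2 * ℓ - k + 2) (he' : e' < 2 * ℓ - k + 2) (hee' : e ≤ e')
    (he'1 : e' ≤ e + 1) (hα : ℓ - e < α) (hαk : α < k) :
    (Finset.range k).image
      (fun t => if α + t < k then pat k ℓ e (α + t) else pat k ℓ e' (α + t - k)) =
    edgeF k ℓ e' := by
  ext w
  simp only [Finset.mem_image, Finset.mem_range]
  constructor
  · rintro ⟨t, ht, rfl⟩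
    by_cases h1 : α + t < k
    · rw [if_pos h1]
      unfold pat
      rw [if_neg (by omega), if_neg (by omega)]
      exact yv_mem_edgeF k ℓ (by omega) (by omega)
    · rw [if_neg h1]
      unfold pat
      by_cases h2 : α + t - k < ℓ - e'
      · rw [if_pos h2]; exact xv_mem_edgeF k ℓ h2
      · rw [if_neg h2]
        by_cases h3 : α + t - k = ℓ - e'
        · rw [if_pos h3]; exact zv_mem_edgeF k ℓ
        · rw [if_neg h3]
          exact yv_mem_edgeF k ℓ (by omega) (by omega)
  · intro hw
    rcases edgeF_cases k ℓ hw with ⟨a, ha, rfl⟩ | ⟨b, hb, hbl, rfl⟩ | rfl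
    · refine ⟨a + k - α, by omega, ?_⟩
      rw [if_neg (by omega)]
      unfold pat
      rw [if_pos (show α + (a + k - α) - k < ℓ - e' by omega)]
      congr 1
      omega
    · by_cases hbh : b ≤ k - 1 - α
      · refine ⟨k - 1 - b - α, by omega, ?_⟩
        rw [if_pos (by omega)]
        unfold pat
        rw [if_neg (by omega), if_neg (by omega)]
        congr 1
        omega
      · -- b ≥ k - α : low part
        have hbk : k - α ≤ b := by omega
        refine ⟨2 * k - 1 - b - α, by omega, ?_⟩
        rw [if_neg (by omega)]
        unfold pat
        rw [if_neg (by omega), if_neg (by omega)]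
        congr 1
        omega
    · refine ⟨ℓ - e' + k - α, by omega, ?_⟩
      rw [if_neg (by omega)]
      unfold pat
      rw [if_neg (by omega), if_pos (by omega)]

variable (k ℓ : ℕ)

/-- every `k`-window of `cseq` starting at a multiple of `k-ℓ` is an edge of `W(k,ℓ)`. -/
lemma cseq_window (hk : 3 ≤ k) (hl1 : k ≤ 2 * ℓ) (hl2 : ℓ ≤ k - 1) (hnd : ¬ (k - ℓ) ∣ k)
    (s : ℕ) :
    (Finset.range k).image (fun t => cseq k ℓ (s * (k - ℓ) + t)) ∈ WEdges k ℓ := by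
  have hk0 : 0 < k := by omega
  set a := s * (k - ℓ) with ha
  set n := a / k with hn
  set α := a % k with hαdef
  have hdm : a = n * k + α := by
    rw [hn, hαdef, Nat.mul_comm]
    exact (Nat.div_add_mod a k).symm
  have hαk : α < k := Nat.mod_lt _ hk0
  have hfun : ∀ t ∈ Finset.range k,
      cseq k ℓ (a + t) =
        if α + t < k then pat k ℓ (eSeq k ℓ n) (α + t)
        else pat k ℓ (eSeq k ℓ (n + 1)) (α + t - k) := by
    intro t ht
    rw [Finset.mem_range] at ht
    by_cases h1 : α + t < k
    · rw [if_pos h1]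
      have hat : a + t = (α + t) + n * k := by omega
      rw [cseq, hat, Nat.add_mul_div_right _ _ hk0, Nat.add_mul_mod_self_right,
        Nat.div_eq_of_lt h1, Nat.mod_eq_of_lt h1, Nat.zero_add]
    · rw [if_neg h1]
      have hat : a + t = (α + t - k) + (n + 1) * k := by
        have hnk : (n + 1) * k = n * k + k := by ring
        omega
      have h2 : α + t - k < k := by omega
      rw [cseq, hat, Nat.add_mul_div_right _ _ hk0, Nat.add_mul_mod_self_right,
        Nat.div_eq_of_lt h2, Nat.mod_eq_of_lt h2, Nat.zero_add]
  rw [Finset.image_congr hfun]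
  have he := eSeq_lt k ℓ n
  have he1 := eSeq_lt k ℓ (n + 1)
  rcases eSeq_succ k ℓ n with ⟨h1, h2, h3⟩ | ⟨h1, _⟩
  · -- transition at boundary n+1
    rw [h1] at he1
    have hαne : α ≠ ℓ - eSeq k ℓ n := by
      intro hcon
      apply h3
      have : ℓ - eSeq k ℓ n + n * k = a := by omega
      rw [this, ha]
      exact ⟨s, by rw [Nat.mul_comm]⟩
    rw [h1]
    by_cases hcase : α ≤ ℓ - (eSeq k ℓ n + 1)
    · rw [windowA k ℓ hk hl1 hl2 he he1 (by omega) hcase hαk]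
      exact edgeF_mem_WEdges k ℓ he
    · rw [windowB k ℓ hk hl1 hl2 he he1 (by omega) (by omega) (by omega) hαk]
      exact edgeF_mem_WEdges k ℓ he1
  · by_cases hcase : α ≤ ℓ - eSeq k ℓ n
    · rw [h1, windowA k ℓ hk hl1 hl2 he he (le_refl _) hcase hαk]
      exact edgeF_mem_WEdges k ℓ he
    · rw [h1, windowB k ℓ hk hl1 hl2 he he (le_refl _) (by omega) (by omega) hαk]
      exact edgeF_mem_WEdges k ℓ he

/-- auxiliary vertex type: `T₁`-vertices, `T₂`-vertices, and interior vertices of each path. -/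
abbrev VT : Type := (Fin ℓ ⊕ Fin ℓ) ⊕ (Fin (4 * ℓ + 1) × Fin (rr k ℓ - 2 * ℓ))

lemma VT_card : Fintype.card (VT k ℓ) = 2 * ℓ + (4 * ℓ + 1) * (rr k ℓ - 2 * ℓ) := by
  simp [VT]
  ring

def vV (h : 0 < ℓ) (p : Fin (4 * ℓ + 1)) (t : ℕ) : VT k ℓ :=
  if h1 : t < ℓ then Sum.inl (Sum.inl ⟨t, h1⟩)
  else if h2 : t < rr k ℓ - ℓ then Sum.inr (p, ⟨t - ℓ, by omega⟩)
  else if h3 : t < rr k ℓ then Sum.inl (Sum.inr ⟨t - (rr k ℓ - ℓ), by omega⟩)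
  else Sum.inl (Sum.inl ⟨0, h⟩)

def clsV (w : VT k ℓ) : WVert k ℓ :=
  match w with
  | Sum.inl (Sum.inl i) => cseq k ℓ i.val
  | Sum.inl (Sum.inr i) => cseq k ℓ (rr k ℓ - ℓ + i.val)
  | Sum.inr (_, o) => cseq k ℓ (ℓ + o.val)

lemma clsV_vV (h : 0 < ℓ) (p : Fin (4 * ℓ + 1)) {t : ℕ} (ht : t < rr k ℓ) :
    clsV k ℓ (vV k ℓ h p t) = cseq k ℓ t := by
  unfold vV
  split_ifs with h1 h2
  · rfl
  · show cseq k ℓ (ℓ + (t - ℓ)) = cseq k ℓ t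
    congr 1
    omega
  · show cseq k ℓ (rr k ℓ - ℓ + (t - (rr k ℓ - ℓ))) = cseq k ℓ t
    congr 1
    omega

lemma vV_injOn (h : 0 < ℓ) (p : Fin (4 * ℓ + 1)) {t1 t2 : ℕ}
    (h1 : t1 < rr k ℓ) (h2 : t2 < rr k ℓ) (heq : vV k ℓ h p t1 = vV k ℓ h p t2) : t1 = t2 := by
  unfold vV at heq
  split_ifs at heq
  all_goals simp only [Sum.inl.injEq, Sum.inr.injEq, Fin.mk.injEq, Prod.mk.injEq,
    reduceCtorEq] at heq
  all_goals omega

lemma cseq_start {i : ℕ} (hk : 3 ≤ k) (hl2 : ℓ ≤ k - 1) (hi : i < ℓ) :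
    cseq k ℓ i = Sum.inl (⟨i, hi⟩ : Fin ℓ) := by
  have hik : i < k := by omega
  rw [cseq, Nat.div_eq_of_lt hik, Nat.mod_eq_of_lt hik]
  show pat k ℓ (eSeq k ℓ 0) i = _
  rw [show eSeq k ℓ 0 = 0 from rfl, pat, if_pos (by omega : i < ℓ - 0), xv, dif_pos hi]

lemma cseq_end {i : ℕ} (hk : 3 ≤ k) (hl1 : k ≤ 2 * ℓ) (hl2 : ℓ ≤ k - 1)
    (hnd : ¬ (k - ℓ) ∣ k) (hi : i < ℓ) :
    cseq k ℓ (rr k ℓ - ℓ + i) = Sum.inr (Sum.inl (⟨ℓ - 1 - i, by omega⟩ : Fin ℓ)) := by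
  have hk0 : 0 < k := by omega
  set M := (k - ℓ) * k * ℓ with hM
  have hMk : rr k ℓ = M * k + k := by rw [rr, numB, ← hM]; ring
  have hM3 : 3 * ℓ ≤ M := by
    have h1 : k ≤ (k - ℓ) * k := Nat.le_mul_of_pos_left k (by omega)
    calc 3 * ℓ ≤ ((k - ℓ) * k) * ℓ := Nat.mul_le_mul_right ℓ (by omega)
      _ = M := by rw [hM]
  have ht : rr k ℓ - ℓ + i = (k - ℓ + i) + M * k := by omega
  have hmod : k - ℓ + i < k := by omega
  rw [ht, cseq, Nat.add_mul_div_right _ _ hk0, Nat.add_mul_mod_self_right,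
    Nat.div_eq_of_lt hmod, Nat.mod_eq_of_lt hmod, Nat.zero_add]
  have hstab : eSeq k ℓ M = 2 * ℓ - k + 1 := by
    apply eSeq_stable k ℓ hnd
    omega
  rw [hstab, pat, if_neg (by omega), if_neg (by omega), yv,
    dif_pos (show k - (k - ℓ + i) - 1 < ℓ by omega)]
  simp only [Sum.inr.injEq, Sum.inl.injEq, Fin.mk.injEq]
  omega

end PGraphAux

open PGraphAux in
/-- Proposition 7: existence of the `(4ℓ-k+2)`-partite `k`-graph `P(k,ℓ)`,
the union of `4ℓ+1` internally disjoint `ℓ`-paths with common ordered ends,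
whose partite classes are indexed by the vertices of `W(k,ℓ)` and whose edges
project to edges of `W(k,ℓ)`, the ends lying over the ends `X` and `Y` of
`W(k,ℓ)`. -/
theorem P_graph_exists
    (k ℓ : ℕ) (hk : 3 ≤ k) (hl1 : k ≤ 2 * ℓ) (hl2 : ℓ ≤ k - 1)
    (hnd : ¬ (k - ℓ) ∣ k) :
    ∃ (N : ℕ) (cls : Fin N → WVert k ℓ) (E : Finset (Finset (Fin N)))
      (T₁ T₂ : Fin ℓ → Fin N) (r : Fin (4 * ℓ + 1) → ℕ)
      (v : Fin (4 * ℓ + 1) → ℕ → Fin N),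
      N ≤ 10 * k ^ 6 ∧
      (∀ e ∈ E, e.card = k) ∧
      (∀ e ∈ E, e.image cls ∈ WEdges k ℓ) ∧
      (∀ p, IsPathSeq k ℓ (r p) (· ∈ E) (v p)) ∧
      (∀ p, k ^ 2 * ℓ ≤ r p ∧ r p ≤ 2 * k ^ 5) ∧
      (∀ p, ∀ i : Fin ℓ, v p (i : ℕ) = T₁ i ∧ v p (r p - ℓ + (i : ℕ)) = T₂ i) ∧
      E = Finset.univ.biUnion (fun p => pathEdgeSet k ℓ (r p) (v p)) ∧
      (∀ p q, p ≠ q → ∀ i < r p, ∀ j < r q, v p i = v q j →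
        ((∃ t : Fin ℓ, v p i = T₁ t) ∨ (∃ t : Fin ℓ, v p i = T₂ t))) ∧
      (∀ i : Fin ℓ, ∃ x : Fin ℓ, cls (T₁ i) = Sum.inl x) ∧
      (∀ i : Fin ℓ, ∃ y : Fin ℓ, cls (T₂ i) = Sum.inr (Sum.inl y)) := by
  classical
  have hm2 : 2 ≤ k - ℓ := by
    by_contra h
    have h1 : k - ℓ = 1 := by omega
    exact hnd (h1 ▸ one_dvd k)
  have hl0 : 0 < ℓ := by omega
  have hRform : rr k ℓ = (k - ℓ) * k * ℓ * k + k := by rw [rr, numB]; ring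
  have hk2l : k ^ 2 * ℓ ≤ rr k ℓ := by
    calc k ^ 2 * ℓ = 1 * k * ℓ * k := by ring
      _ ≤ (k - ℓ) * k * ℓ * k := by gcongr <;> omega
      _ ≤ rr k ℓ := by omega
  have hR5 : rr k ℓ ≤ 2 * k ^ 5 := by
    have h1 : (k - ℓ) * k * ℓ * k ≤ k * k * k * k := by gcongr <;> omega
    have h2 : k * k * k * k = k ^ 4 := by ring
    have h3 : k ^ 4 ≤ k ^ 5 := Nat.pow_le_pow_right (by omega) (by omega)
    have h4 : k ≤ k ^ 5 := Nat.le_self_pow (by omega) k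
    omega
  have hR2l : 2 * ℓ + 1 ≤ rr k ℓ := by
    have h9 : 9 ≤ k ^ 2 := by nlinarith
    have h92 : 9 * ℓ ≤ k ^ 2 * ℓ := Nat.mul_le_mul_right ℓ h9
    omega
  have hkR : k ≤ rr k ℓ := by omega
  have hdvd : (k - ℓ) ∣ (rr k ℓ - k) := by
    refine ⟨k * ℓ * k, ?_⟩
    have h2 : (k - ℓ) * (k * ℓ * k) = (k - ℓ) * k * ℓ * k := by ring
    omega
  set NV := Fintype.card (VT k ℓ) with hNV
  let eqv : VT k ℓ ≃ Fin NV := Fintype.equivFin (VT k ℓ)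
  refine ⟨NV, fun q => clsV k ℓ (eqv.symm q),
    Finset.univ.biUnion
      (fun p => pathEdgeSet k ℓ (rr k ℓ) (fun t => eqv (vV k ℓ hl0 p t))),
    fun i => eqv (Sum.inl (Sum.inl i)), fun i => eqv (Sum.inl (Sum.inr i)),
    fun _ => rr k ℓ, fun p t => eqv (vV k ℓ hl0 p t),
    ?_, ?_, ?_, ?_, ?_, ?_, ?_, ?_, ?_, ?_⟩
  · -- size bound
    rw [hNV, VT_card]
    have h1 : 4 * ℓ + 1 ≤ 4 * k := by omega
    have h2 : rr k ℓ - 2 * ℓ ≤ 2 * k ^ 5 := by omega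
    have h3 : (4 * ℓ + 1) * (rr k ℓ - 2 * ℓ) ≤ (4 * k) * (2 * k ^ 5) :=
      Nat.mul_le_mul h1 h2
    have h4 : (4 * k) * (2 * k ^ 5) = 8 * k ^ 6 := by ring
    have h5 : k ≤ k ^ 6 := Nat.le_self_pow (by omega) k
    omega
  · -- cards
    intro e he
    obtain ⟨p, -, hp⟩ := Finset.mem_biUnion.1 he
    rw [pathEdgeSet] at hp
    obtain ⟨s, hs, rfl⟩ := Finset.mem_image.1 hp
    rw [Finset.mem_range] at hs
    have hsk : s * (k - ℓ) + k ≤ rr k ℓ := by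
      have h1 : s * (k - ℓ) ≤ ((rr k ℓ - k) / (k - ℓ)) * (k - ℓ) :=
        Nat.mul_le_mul_right _ (by omega)
      rw [Nat.div_mul_cancel hdvd] at h1
      omega
    rw [pathEdge, Finset.card_image_of_injOn, Finset.card_range]
    intro t1 ht1 t2 ht2 hteq
    simp only [Finset.coe_range, Set.mem_Iio] at ht1 ht2
    have := vV_injOn k ℓ hl0 p (show s * (k - ℓ) + t1 < rr k ℓ by omega)
      (show s * (k - ℓ) + t2 < rr k ℓ by omega) (eqv.injective hteq)
    omega
  · -- projection to WEdges
    intro e he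
    obtain ⟨p, -, hp⟩ := Finset.mem_biUnion.1 he
    rw [pathEdgeSet] at hp
    obtain ⟨s, hs, rfl⟩ := Finset.mem_image.1 hp
    rw [Finset.mem_range] at hs
    have hsk : s * (k - ℓ) + k ≤ rr k ℓ := by
      have h1 : s * (k - ℓ) ≤ ((rr k ℓ - k) / (k - ℓ)) * (k - ℓ) :=
        Nat.mul_le_mul_right _ (by omega)
      rw [Nat.div_mul_cancel hdvd] at h1
      omega
    rw [pathEdge, Finset.image_image]
    have heq : Finset.image
        ((fun q => clsV k ℓ (eqv.symm q)) ∘ fun t => eqv (vV k ℓ hl0 p (s * (k - ℓ) + t)))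
        (Finset.range k) =
        Finset.image (fun t => cseq k ℓ (s * (k - ℓ) + t)) (Finset.range k) := by
      apply Finset.image_congr
      intro t ht
      simp only [Finset.coe_range, Set.mem_Iio] at ht
      show clsV k ℓ (eqv.symm (eqv (vV k ℓ hl0 p (s * (k - ℓ) + t)))) = _
      rw [Equiv.symm_apply_apply]
      exact clsV_vV k ℓ hl0 p (by omega)
    rw [heq]
    exact cseq_window k ℓ hk hl1 hl2 hnd s
  · -- IsPathSeq
    intro p
    refine ⟨hkR, hdvd, ?_, ?_⟩
    · intro t1 ht1 t2 ht2 hteq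
      exact vV_injOn k ℓ hl0 p ht1 ht2 (eqv.injective hteq)
    · intro s hs
      replace hs : s * (k - ℓ) + k ≤ rr k ℓ := hs
      refine Finset.mem_biUnion.2 ⟨p, Finset.mem_univ _, ?_⟩
      rw [pathEdgeSet]
      apply Finset.mem_image_of_mem
      rw [Finset.mem_range]
      have h1 : s ≤ (rr k ℓ - k) / (k - ℓ) := by
        rw [Nat.le_div_iff_mul_le (show 0 < k - ℓ by omega)]
        omega
      omega
  · intro p
    exact ⟨hk2l, hR5⟩
  · -- ends
    intro p i
    constructor
    · show eqv (vV k ℓ hl0 p (i : ℕ)) = eqv (Sum.inl (Sum.inl i))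
      apply congrArg eqv
      rw [vV, dif_pos i.isLt]
    · show eqv (vV k ℓ hl0 p (rr k ℓ - ℓ + (i : ℕ))) = eqv (Sum.inl (Sum.inr i))
      apply congrArg eqv
      rw [vV, dif_neg (by omega), dif_neg (by omega), dif_pos (by omega)]
      simp only [Sum.inl.injEq, Sum.inr.injEq]
      exact Fin.ext (by simp only [] ; omega)
  · rfl
  · -- internal disjointness
    intro p q hpq i hi j hj hij
    replace hi : i < rr k ℓ := hi
    replace hj : j < rr k ℓ := hj
    have hvv : vV k ℓ hl0 p i = vV k ℓ hl0 q j := eqv.injective hij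
    by_cases h1 : i < ℓ
    · left
      refine ⟨⟨i, h1⟩, ?_⟩
      apply congrArg eqv
      rw [vV, dif_pos h1]
    · by_cases h2 : i < rr k ℓ - ℓ
      · exfalso
        unfold vV at hvv
        split_ifs at hvv
        all_goals simp only [Sum.inl.injEq, Sum.inr.injEq, Prod.mk.injEq, Fin.mk.injEq,
          reduceCtorEq] at hvv
        exact hpq hvv.1
      · right
        refine ⟨⟨i - (rr k ℓ - ℓ), by omega⟩, ?_⟩
        apply congrArg eqv
        rw [vV, dif_neg h1, dif_neg h2, dif_pos (by omega)]
  · -- T₁ classes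
    intro i
    refine ⟨⟨i.val, i.isLt⟩, ?_⟩
    show clsV k ℓ (eqv.symm (eqv _)) = _
    rw [Equiv.symm_apply_apply]
    exact cseq_start k ℓ hk hl2 i.isLt
  · -- T₂ classes
    intro i
    refine ⟨⟨ℓ - 1 - i.val, by omega⟩, ?_⟩
    show clsV k ℓ (eqv.symm (eqv _)) = _
    rw [Equiv.symm_apply_apply]
    exact cseq_end k ℓ hk hl1 hl2 hnd i.isLt
end

section
/- Suppose k ≥ 3 and 1 ≤ ℓ ≤ k−1 is such that (k−ℓ) does not divide k. Then there exists an integer b with k ≤ b ≤ k⁴ such that the following holds: for every μ > 0 there exists γ > 0 with γ < μ, and for this γ there exist c > 0 with c < γ and an integer n₀, such that for all n ≥ n₀ and every k-graph H on n vertices with minimum degree δ(H) ≥ μn, all but at most γn^{k−ℓ} sets S of k−ℓ vertices of H are c-good, i.e. satisfy: H contains at least c·n^b absorbing ℓ-paths for S, each on exactly b vertices. -/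
open Finset

/-- `u` is the vertex sequence of an `ℓ`-path on `r` vertices in `H` which is
absorbing for the `(k-ℓ)`-set `S`: the path avoids `S`, and `H` contains an
`ℓ`-path, with the same ordered ends, whose vertex set additionally includes
`S`. -/
def IsAbsorbingSeq (n k ℓ r : ℕ) (H : Finset (Finset (Fin n)))
    (S : Finset (Fin n)) (u : ℕ → Fin n) : Prop :=
  IsPathSeq k ℓ r (· ∈ H) u ∧ (∀ i < r, u i ∉ S) ∧
  ∃ w : ℕ → Fin n, IsPathSeq k ℓ (r + (k - ℓ)) (· ∈ H) w ∧
    (Finset.range (r + (k - ℓ))).image w = (Finset.range r).image u ∪ S ∧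
    (∀ i < ℓ, w i = u i) ∧
    (∀ i < ℓ, w (r + (k - ℓ) - ℓ + i) = u (r - ℓ + i))

open scoped Classical in
/-- The `(k-ℓ)`-set `S` is `c`-good: `H` contains at least `c n^b` absorbing
`ℓ`-paths for `S` on `b` vertices (counted as vertex sequences of length `b`). -/
def CGood (n k ℓ b : ℕ) (H : Finset (Finset (Fin n))) (c : ℝ)
    (S : Finset (Fin n)) : Prop :=
  c * (n : ℝ) ^ b ≤
    (((Finset.univ : Finset (Fin b → Fin n)).filter
      (fun v => ∃ u : ℕ → Fin n, (∀ i : Fin b, u (i : ℕ) = v i) ∧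
        IsAbsorbingSeq n k ℓ b H S u)).card : ℝ)

open scoped Classical

section Rev
variable (ℓ m : ℕ)

/-- block-reversal map on `[ℓ, ∞)`, blocks of length `m`. -/
def rev (x : ℕ) : ℕ := ℓ + ((x - ℓ)/m)*m + (m - 1 - (x - ℓ) % m)

variable (hm : 0 < m)
include hm

lemma rev_block (j i : ℕ) (hi : i < m) : rev ℓ m (ℓ + j*m + i) = ℓ + j*m + (m - 1 - i) := by
  have h1 : ℓ + j*m + i - ℓ = i + j*m := by omega
  rw [rev, h1, Nat.add_mul_div_right _ _ hm, Nat.add_mul_mod_self_right,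
    Nat.div_eq_of_lt hi, Nat.mod_eq_of_lt hi]
  ring_nf

lemma rev_image_one_block (j : ℕ) :
    (Ico (ℓ + j*m) (ℓ + j*m + m)).image (rev ℓ m) = Ico (ℓ + j*m) (ℓ + j*m + m) := by
  ext y
  simp only [mem_image, mem_Ico]
  constructor
  · rintro ⟨x, hx, rfl⟩
    have hx' : x = ℓ + j*m + (x - (ℓ + j*m)) := by omega
    rw [hx', rev_block ℓ m hm j _ (by omega)]
    omega
  · rintro hy
    refine ⟨ℓ + j*m + (m - 1 - (y - (ℓ + j*m))), by omega, ?_⟩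
    rw [rev_block ℓ m hm j _ (by omega)]
    omega

lemma rev_image_blocks (a c : ℕ) (hac : a ≤ c) :
    (Ico (ℓ + a*m) (ℓ + c*m)).image (rev ℓ m) = Ico (ℓ + a*m) (ℓ + c*m) := by
  induction c with
  | zero =>
    have : a = 0 := by omega
    subst this; simp
  | succ c ih =>
    rcases Nat.lt_or_ge a (c+1) with h | h
    · have hac' : a ≤ c := by omega
      have hsplit : Ico (ℓ + a*m) (ℓ + (c+1)*m)
          = Ico (ℓ + a*m) (ℓ + c*m) ∪ Ico (ℓ + c*m) (ℓ + c*m + m) := by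
        rw [Finset.Ico_union_Ico_eq_Ico]
        · congr 1; ring
        · have : a*m ≤ c*m := Nat.mul_le_mul_right m hac'
          omega
        · have : ℓ + (c+1)*m = ℓ + c*m + m := by ring
          omega
      rw [hsplit, Finset.image_union, ih hac', rev_image_one_block ℓ m hm]
    · have : a = c+1 := by omega
      subst this; simp

lemma rev_image_tail (r : ℕ) (c : ℕ) (s : ℕ) (hs1 : 1 ≤ s) (hsm : s < m) (hrc : r < c) :
    (Ico (ℓ + r*m + (m - s)) (ℓ + c*m)).image (rev ℓ m)
      = Ico (ℓ + r*m) (ℓ + r*m + s) ∪ Ico (ℓ + (r+1)*m) (ℓ + c*m) := by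
  have hmul : (r+1)*m ≤ c*m := Nat.mul_le_mul_right m hrc
  have hexp : (r+1)*m = r*m + m := by ring
  have hsplit : Ico (ℓ + r*m + (m - s)) (ℓ + c*m)
      = Ico (ℓ + r*m + (m - s)) (ℓ + r*m + m) ∪ Ico (ℓ + (r+1)*m) (ℓ + c*m) := by
    rw [show ℓ + (r+1)*m = ℓ + r*m + m by ring, Finset.Ico_union_Ico_eq_Ico]
    · omega
    · omega
  rw [hsplit, Finset.image_union, rev_image_blocks ℓ m hm (r+1) c hrc]
  congr 1
  ext y
  simp only [mem_image, mem_Ico]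
  constructor
  · rintro ⟨x, hx, rfl⟩
    have hx' : x = ℓ + r*m + (x - (ℓ + r*m)) := by omega
    rw [hx', rev_block ℓ m hm r _ (by omega)]
    omega
  · rintro hy
    refine ⟨ℓ + r*m + (m - 1 - (y - (ℓ + r*m))), by omega, ?_⟩
    rw [rev_block ℓ m hm r _ (by omega)]
    omega

lemma rev_mem_block (x c : ℕ) (hx : ℓ ≤ x) (hx2 : x < ℓ + c*m) :
    ℓ ≤ rev ℓ m x ∧ rev ℓ m x < ℓ + c*m ∧ (rev ℓ m x - ℓ)/m = (x - ℓ)/m := by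
  set j := (x - ℓ)/m with hj
  set i := (x - ℓ) % m with hi
  have him : i < m := Nat.mod_lt _ hm
  have hxd : x = ℓ + j*m + i := by
    have h0 := Nat.div_add_mod (x - ℓ) m
    have : j*m + i = x - ℓ := by rw [hj, hi, Nat.mul_comm]; exact h0
    omega
  have hrev : rev ℓ m x = ℓ + j*m + (m - 1 - i) := by rw [hxd, rev_block ℓ m hm j i him]
  have hjc : j < c := by
    have h2 : j * m ≤ x - ℓ := by rw [hj]; exact Nat.div_mul_le_self _ _
    by_contra hcon
    push_neg at hcon
    have : c * m ≤ j * m := Nat.mul_le_mul_right m hcon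
    omega
  have hmul : (j+1)*m ≤ c*m := Nat.mul_le_mul_right m hjc
  have hexp : (j+1)*m = j*m + m := by ring
  refine ⟨by rw [hrev]; omega, by rw [hrev]; omega, ?_⟩
  have h1 : rev ℓ m x - ℓ = (m-1-i) + j*m := by rw [hrev]; omega
  rw [h1, Nat.add_mul_div_right _ _ hm, Nat.div_eq_of_lt (by omega)]
  omega

end Rev

section Rev2
variable (ℓ m : ℕ) (hm : 0 < m)
include hm

lemma rev_invol (x : ℕ) (hx : ℓ ≤ x) : rev ℓ m (rev ℓ m x) = x := by
  set j := (x - ℓ)/m with hj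
  set i := (x - ℓ) % m with hi
  have him : i < m := Nat.mod_lt _ hm
  have hxd : x = ℓ + j*m + i := by
    have h0 := Nat.div_add_mod (x - ℓ) m
    have : j*m + i = x - ℓ := by rw [hj, hi, Nat.mul_comm]; exact h0
    omega
  rw [hxd, rev_block ℓ m hm j i him, rev_block ℓ m hm j _ (by omega)]
  omega

end Rev2


lemma seq_count {n b : ℕ} (d₀ : Fin n) (A : ℕ → (Fin b → Fin n) → Finset (Fin n)) (ρ : ℕ)
    (hdep : ∀ x : Fin b, ∀ v w : Fin b → Fin n,
      (∀ i : Fin b, (x:ℕ) < (i:ℕ) → v i = w i) → A x v = A x w)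
    (hcard : ∀ x : Fin b, ∀ v, (∀ i : Fin b, (x:ℕ) < (i:ℕ) → v i ∈ A i v) → ρ ≤ (A x v).card) :
    ρ ^ b ≤ (Finset.univ.filter (fun v : Fin b → Fin n => ∀ i : Fin b, v i ∈ A i v)).card := by
  set G : ℕ → Finset (Fin b → Fin n) := fun x => Finset.univ.filter
    (fun v => (∀ i : Fin b, x ≤ (i:ℕ) → v i ∈ A i v) ∧ ∀ i : Fin b, (i:ℕ) < x → v i = d₀)
    with hG
  have key : ∀ j, j ≤ b → ρ ^ j ≤ (G (b - j)).card := by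
    intro j
    induction j with
    | zero =>
      intro _
      have : (fun _ : Fin b => d₀) ∈ G (b - 0) := by
        refine Finset.mem_filter.mpr ⟨Finset.mem_univ _, fun i hi => absurd hi (by omega),
          fun i _ => rfl⟩
      simpa using Finset.card_pos.mpr ⟨_, this⟩
    | succ j ih =>
      intro hj
      have hx : b - (j+1) < b := by omega
      set x : ℕ := b - (j+1) with hxdef
      have hx1 : x + 1 = b - j := by omega
      set xf : Fin b := ⟨x, hx⟩ with hxf
      have hxfv : (xf : ℕ) = x := rfl
      have hne_of : ∀ i : Fin b, x < (i:ℕ) → i ≠ xf := by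
        intro i hi h; rw [h, hxfv] at hi; omega
      have hne_of' : ∀ i : Fin b, (i:ℕ) < x → i ≠ xf := by
        intro i hi h; rw [h, hxfv] at hi; omega
      have hsub : (G (x+1)).biUnion
          (fun v => (A x v).image (fun a => Function.update v xf a)) ⊆ G x := by
        intro u hu
        simp only [mem_biUnion, mem_image] at hu
        obtain ⟨v, hv, a, ha, rfl⟩ := hu
        simp only [hG, mem_filter, mem_univ, true_and] at hv ⊢
        obtain ⟨hv1, hv2⟩ := hv
        have hagree : ∀ i : Fin b, x < (i:ℕ) → v i = Function.update v xf a i := by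
          intro i hi
          rw [Function.update_of_ne (hne_of i hi)]
        constructor
        · intro i hi
          rcases eq_or_lt_of_le hi with hi' | hi'
          · have hieq : i = xf := Fin.ext (by rw [hxfv, ← hi'])
            subst hieq
            rw [Function.update_self, hxfv]
            rwa [← hdep ⟨x, hx⟩ _ _ (fun i hi => hagree i hi)]
          · rw [← hagree i hi']
            have : A (i:ℕ) (Function.update v xf a) = A (i:ℕ) v :=
              (hdep i _ _ (fun j hj => hagree j (lt_trans hi' hj))).symm
            rw [this]
            exact hv1 i (by omega)
        · intro i hi
          rw [Function.update_of_ne (hne_of' i hi)]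
          exact hv2 i (by omega)
      have hdisj : ∀ v ∈ G (x+1), ∀ v' ∈ G (x+1), v ≠ v' →
          Disjoint ((A x v).image (fun a => Function.update v xf a))
            ((A x v').image (fun a => Function.update v' xf a)) := by
        intro v hv v' hv' hne
        rw [Finset.disjoint_left]
        rintro u hu hu'
        simp only [mem_image] at hu hu'
        obtain ⟨a, _, rfl⟩ := hu
        obtain ⟨a', _, heq⟩ := hu'
        apply hne
        funext i
        simp only [hG, mem_filter, mem_univ, true_and] at hv hv'
        rcases lt_or_ge x (i:ℕ) with hi | hi
        · have h2 := congrFun heq i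
          rw [Function.update_of_ne (hne_of i hi), Function.update_of_ne (hne_of i hi)] at h2
          exact h2.symm
        · rw [hv.2 i (by omega), hv'.2 i (by omega)]
      calc ρ ^ (j+1) = ρ * ρ ^ j := by ring
        _ ≤ ρ * (G (x+1)).card := by
            have h3 := ih (by omega); rw [← hx1] at h3; exact Nat.mul_le_mul_left ρ h3
        _ ≤ ((G (x+1)).biUnion
            (fun v => (A x v).image (fun a => Function.update v xf a))).card := by
            rw [Finset.card_biUnion hdisj]
            calc ρ * (G (x+1)).card = (G (x+1)).card • ρ := by rw [smul_eq_mul]; ring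
              _ ≤ ∑ v ∈ G (x+1), ((A x v).image (fun a => Function.update v xf a)).card := by
                  apply Finset.card_nsmul_le_sum
                  intro v hv
                  rw [Finset.card_image_of_injective _ (Function.update_injective v xf)]
                  have : ρ ≤ (A (xf:ℕ) v).card := by
                    apply hcard xf
                    intro i hi
                    simp only [hG, mem_filter, mem_univ, true_and] at hv
                    exact hv.1 i (by rw [hxfv] at hi; omega)
                  rwa [hxfv] at this
        _ ≤ (G x).card := Finset.card_le_card hsub
  have h0 := key b le_rfl
  simp only [Nat.sub_self] at h0
  refine h0.trans (Finset.card_le_card ?_)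
  intro v hv
  simp only [hG, mem_filter, mem_univ, true_and] at hv ⊢
  exact fun i => hv.1 i (Nat.zero_le _)

lemma image_range_shift {α : Type*} [DecidableEq α] (f : ℕ → α) (a c : ℕ) :
    (Finset.range c).image (fun t => f (a + t)) = (Ico a (a+c)).image f := by
  ext y
  simp only [mem_image, mem_range, mem_Ico]
  constructor
  · rintro ⟨t, ht, rfl⟩; exact ⟨a+t, by omega, rfl⟩
  · rintro ⟨x, hx, rfl⟩
    exact ⟨x - a, by omega, by congr 1; omega⟩

lemma image_sub_shift {α : Type*} [DecidableEq α] (f : ℕ → α) (a b c : ℕ) :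
    (Ico (a+c) (b+c)).image (fun x => f (x - c)) = (Ico a b).image f := by
  ext y
  simp only [mem_image, mem_Ico]
  constructor
  · rintro ⟨x, hx, rfl⟩; exact ⟨x - c, by omega, rfl⟩
  · rintro ⟨x, hx, rfl⟩; exact ⟨x + c, by omega, by congr 1; omega⟩

lemma Ico_image_insert {α : Type*} [DecidableEq α] (f : ℕ → α) (a c : ℕ) (hc : 0 < c) :
    (Ico a (a+c)).image f = insert (f a) ((Ioo a (a+c)).image f) := by
  rw [← Finset.image_insert, Finset.Ioo_insert_left (by omega)]

noncomputable def yf {n m : ℕ} (S : Finset (Fin n)) (hS : S.card = m) (hm : 0 < m) : ℕ → Fin n :=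
  fun i => S.orderEmbOfFin hS ⟨i % m, Nat.mod_lt _ hm⟩

lemma yf_mem {n m : ℕ} (S : Finset (Fin n)) (hS : S.card = m) (hm : 0 < m) (i : ℕ) :
    yf S hS hm i ∈ S := Finset.orderEmbOfFin_mem S hS _

lemma yf_inj {n m : ℕ} (S : Finset (Fin n)) (hS : S.card = m) (hm : 0 < m) {i j : ℕ}
    (hi : i < m) (hj : j < m) (h : yf S hS hm i = yf S hS hm j) : i = j := by
  have := (S.orderEmbOfFin hS).injective h
  simpa [Fin.ext_iff, Nat.mod_eq_of_lt hi, Nat.mod_eq_of_lt hj] using this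

lemma yf_image {n m : ℕ} (S : Finset (Fin n)) (hS : S.card = m) (hm : 0 < m) :
    (Finset.range m).image (yf S hS hm) = S := by
  apply Finset.eq_of_subset_of_card_le
  · intro y hy
    simp only [mem_image] at hy
    obtain ⟨i, _, rfl⟩ := hy
    exact yf_mem S hS hm i
  · rw [hS, Finset.card_image_of_injOn (fun i hi j hj h =>
      yf_inj S hS hm (Finset.mem_range.mp hi) (Finset.mem_range.mp hj) h),
      Finset.card_range]

lemma image_congr' {α : Type*} [DecidableEq α] (s : Finset ℕ) (f g : ℕ → α)
    (h : ∀ x, x ∈ s → f x = g x) : s.image f = s.image g :=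
  Finset.image_congr (fun x hx => h x (by simpa using hx))

lemma build_absorbing {n m s q : ℕ} (hm : 2 ≤ m) (hs1 : 1 ≤ s) (hsm : s < m)
    (H : Finset (Finset (Fin n))) (S : Finset (Fin n)) (hS : S.card = m)
    (u : ℕ → Fin n)
    (hInj : ∀ i j : ℕ, i < j → j < q*m+s + 2*(q+1)*m → u i ≠ u j)
    (hNotS : ∀ i, i < q*m+s + 2*(q+1)*m → u i ∉ S)
    (hD1 : ∀ j, j < 2*(q+1) →
      insert (u (j*m)) ((Ioo (j*m) (j*m + (q*m+s+m))).image u) ∈ H)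
    (hD2 : ∀ r, r < q+1 → insert (u (q*m+s + r*m))
      ((((Ioo (q*m+s+r*m) (q*m+s+r*m+s)) ∪
         (Ico (q*m+s+r*m+m) (q*m+s+r*m+(q+1)*m))).image u) ∪ S) ∈ H)
    (hD3 : insert (u (q*m+s+(q+1)*m))
      (((Ioo (q*m+s+(q+1)*m) (q*m+s+2*(q+1)*m)).image u) ∪
        (Ico (m-s) m).image (yf S hS (by omega))) ∈ H) :
    IsAbsorbingSeq n (q*m+s+m) (q*m+s) (q*m+s+2*(q+1)*m) H S u := by
  have hm0 : 0 < m := by omega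
  set L : ℕ := q*m+s with hLdef
  set K : ℕ := L + m with hKdef
  set P : ℕ := L + (q+1)*m with hPdef
  set B : ℕ := L + 2*(q+1)*m with hBdef
  have e1 : (q+1)*m = q*m + m := by ring
  have e2 : 2*(q+1)*m = q*m + q*m + m + m := by ring
  have hKL : K - L = m := by omega
  have hLP : L < P := by omega
  have hPB : P + m ≤ B := by omega
  set W : ℕ → Fin n := fun x =>
    if x < L then u x else if x < P then u (rev L m x)
    else if x < P + m then yf S hS hm0 (x - P) else u (x - m) with hWdef
  have hW1 : ∀ x, x < L → W x = u x := by
    intro x hx; simp only [hWdef]; rw [if_pos hx]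
  have hW2 : ∀ x, L ≤ x → x < P → W x = u (rev L m x) := by
    intro x hx hx'; simp only [hWdef]; rw [if_neg (by omega), if_pos hx']
  have hW3 : ∀ x, P ≤ x → x < P + m → W x = yf S hS hm0 (x - P) := by
    intro x hx hx'; simp only [hWdef]; rw [if_neg (by omega), if_neg (by omega), if_pos hx']
  have hW4 : ∀ x, P + m ≤ x → W x = u (x - m) := by
    intro x hx; simp only [hWdef]
    rw [if_neg (by omega), if_neg (by omega), if_neg (by omega)]
  have hrevmem : ∀ x, L ≤ x → x < P → L ≤ rev L m x ∧ rev L m x < P := by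
    intro x hx hx'
    have := rev_mem_block L m hm0 x (q+1) hx (by omega)
    exact ⟨this.1, by omega⟩
  -- the u-path
  have hupath : IsPathSeq K L B (· ∈ H) u := by
    refine ⟨by omega, ?_, ?_, ?_⟩
    · rw [hKL]
      refine ⟨2*q+1, ?_⟩
      have : m*(2*q+1) = q*m+q*m+m := by ring
      omega
    · intro x hx y hy hxy
      by_contra hne
      rcases Nat.lt_or_ge x y with h | h
      · exact hInj x y h (by simpa using hy) hxy
      · exact hInj y x (by omega) (by simpa using hx) hxy.symm
    · intro j hj
      rw [hKL] at hj
      have hj2 : j < 2*(q+1) := by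
        by_contra hcon
        push_neg at hcon
        have h5 : (2*(q+1))*m ≤ j*m := Nat.mul_le_mul_right m hcon
        have h6 : (2*(q+1))*m = q*m+q*m+m+m := by ring
        omega
      have hpe : pathEdge K L u j = (Ico (j*m) (j*m + K)).image u := by
        unfold pathEdge; rw [hKL, image_range_shift]
      have hins : Ico (j*m) (j*m+K) = insert (j*m) (Ioo (j*m) (j*m+K)) :=
        (Finset.Ioo_insert_left (by omega)).symm
      rw [hpe, hins, Finset.image_insert]
      exact hD1 j hj2
  refine ⟨hupath, fun i hi => hNotS i hi, W, ?_, ?_, ?_, ?_⟩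
  · -- W is an ℓ-path on B + m vertices
    rw [hKL]
    refine ⟨by omega, ?_, ?_, ?_⟩
    · rw [hKL]
      refine ⟨2*q+2, ?_⟩
      have : m*(2*q+2) = q*m+q*m+m+m := by ring
      omega
    · -- injectivity of W on [0, B+m)
      intro x hx y hy hxy
      simp only [Set.mem_Iio] at hx hy
      by_contra hne
      have key : ∀ z, z < B + m → ¬ (P ≤ z ∧ z < P + m) →
          ∃ iz, iz < B ∧ W z = u iz ∧
            ((z < L ∧ iz = z) ∨ (L ≤ z ∧ z < P ∧ iz = rev L m z) ∨ (P + m ≤ z ∧ iz = z - m)) := by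
        intro z hz hzy
        rcases Nat.lt_or_ge z L with h1 | h1
        · exact ⟨z, by omega, hW1 z h1, Or.inl ⟨h1, rfl⟩⟩
        · rcases Nat.lt_or_ge z P with h2 | h2
          · obtain ⟨ha, hb⟩ := hrevmem z h1 h2
            exact ⟨rev L m z, by omega, hW2 z h1 h2, Or.inr (Or.inl ⟨h1, h2, rfl⟩)⟩
          · have h3 : P + m ≤ z := by omega
            exact ⟨z - m, by omega, hW4 z h3, Or.inr (Or.inr ⟨h3, rfl⟩)⟩
      rcases Classical.em (P ≤ x ∧ x < P + m) with hxY | hxY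
      · rcases Classical.em (P ≤ y ∧ y < P + m) with hyY | hyY
        · rw [hW3 x hxY.1 hxY.2, hW3 y hyY.1 hyY.2] at hxy
          have := yf_inj S hS hm0 (show x - P < m by omega) (show y - P < m by omega) hxy
          omega
        · obtain ⟨iy, hiy, hWy, _⟩ := key y hy hyY
          rw [hW3 x hxY.1 hxY.2, hWy] at hxy
          exact hNotS iy hiy (hxy ▸ yf_mem S hS hm0 (x - P))
      · obtain ⟨ix, hix, hWx, hcx⟩ := key x hx hxY
        rcases Classical.em (P ≤ y ∧ y < P + m) with hyY | hyY
        · rw [hW3 y hyY.1 hyY.2, hWx] at hxy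
          exact hNotS ix hix (hxy.symm ▸ yf_mem S hS hm0 (y - P))
        · obtain ⟨iy, hiy, hWy, hcy⟩ := key y hy hyY
          rw [hWx, hWy] at hxy
          have hixy : ix = iy := by
            by_contra hne2
            rcases Nat.lt_or_ge ix iy with h | h
            · exact hInj ix iy h hiy hxy
            · exact hInj iy ix (by omega) hix hxy.symm
          apply hne
          rcases hcx with ⟨ha, hb⟩ | ⟨ha, hb, hc⟩ | ⟨ha, hb⟩ <;>
            rcases hcy with ⟨hc', hd⟩ | ⟨hc', hd', he⟩ | ⟨hc', hd⟩
          · omega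
          · subst hb; subst he
            have := hrevmem y hc' hd'; omega
          · omega
          · subst hc; subst hd
            have := hrevmem x ha hb; omega
          · subst hc; subst he
            have h7 : rev L m (rev L m x) = rev L m (rev L m y) := by rw [hixy]
            rwa [rev_invol L m hm0 x ha, rev_invol L m hm0 y hc'] at h7
          · subst hc; subst hd
            have := hrevmem x ha hb; omega
          · omega
          · subst hb; subst he
            have := hrevmem y hc' hd'; omega
          · omega
    · -- edges of W
      intro j hj
      rw [hKL] at hj
      have hj2 : j ≤ 2*(q+1) := by
        by_contra hcon
        push_neg at hcon
        have h5 : (2*(q+1)+1)*m ≤ j*m := Nat.mul_le_mul_right m hcon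
        have h6 : (2*(q+1)+1)*m = q*m+q*m+m+m+m := by ring
        omega
      have hpe : pathEdge K L W j = (Ico (j*m) (j*m + K)).image W := by
        unfold pathEdge; rw [hKL, image_range_shift]
      rcases Nat.lt_or_ge j (q+1) with hcase | hcase
      · -- early windows coincide with u-windows
        have hjm1 : (j+1)*m ≤ (q+1)*m := Nat.mul_le_mul_right m hcase
        have hjm2 : j*m ≤ q*m := Nat.mul_le_mul_right m (show j ≤ q by omega)
        have e3 : (j+1)*m = j*m + m := by ring
        have hjL : j*m ≤ L := by omega
        have hend : j*m + K = L + (j+1)*m := by omega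
        have hsplit : Ico (j*m) (j*m + K) = Ico (j*m) L ∪ Ico L (j*m + K) :=
          (Finset.Ico_union_Ico_eq_Ico hjL (by omega)).symm
        have h9 : (Ico L (j*m+K)).image (rev L m) = Ico L (j*m+K) := by
          rw [hend]
          have h10 := rev_image_blocks L m hm0 0 (j+1) (by omega)
          rw [show L + 0*m = L by omega] at h10
          exact h10
        have hcalc : pathEdge K L W j = (Ico (j*m) (j*m+K)).image u := by
          rw [hpe, hsplit, Finset.image_union,
            image_congr' _ W u (fun x hx => hW1 x (by simp only [mem_Ico] at hx; omega)),
            image_congr' _ W (fun x => u (rev L m x)) (fun x hx => by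
              simp only [mem_Ico] at hx
              exact hW2 x hx.1 (by omega)),
            show (Ico L (j*m+K)).image (fun x => u (rev L m x))
              = ((Ico L (j*m+K)).image (rev L m)).image u from by
                rw [Finset.image_image]; rfl,
            h9, ← Finset.image_union, Finset.Ico_union_Ico_eq_Ico hjL (by omega)]
        rw [hcalc, show Ico (j*m) (j*m+K) = insert (j*m) (Ioo (j*m) (j*m+K)) from
          (Finset.Ioo_insert_left (by omega)).symm, Finset.image_insert]
        exact hD1 j (by omega)
      · rcases Nat.lt_or_ge j (2*(q+1)) with hcase2 | hcase2
        · -- middle windows: use hD2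
          set r : ℕ := j - (q+1) with hrdef
          have hrq : r < q + 1 := by omega
          have e3 : j*m = (q+1)*m + r*m := by
            rw [show j = (q+1) + r by omega]; ring
          have e4 : (r+1)*m = r*m + m := by ring
          have e5 : (r+1)*m ≤ (q+1)*m := Nat.mul_le_mul_right m (by omega)
          have e6 : r*m ≤ q*m := Nat.mul_le_mul_right m (by omega)
          set a : ℕ := L + r*m with hadef
          have hjm_eq : j*m = a + (m - s) := by omega
          have hsplit : Ico (j*m) (j*m + K)
              = (Ico (j*m) P ∪ Ico P (P+m)) ∪ Ico (P+m) (j*m+K) := by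
            rw [Finset.Ico_union_Ico_eq_Ico (by omega) (by omega),
              Finset.Ico_union_Ico_eq_Ico (by omega) (by omega)]
          have hp1 : (Ico (j*m) P).image W = (Ico a (a+s) ∪ Ico (L+(r+1)*m) P).image u := by
            rw [image_congr' _ W (fun x => u (rev L m x)) (fun x hx => by
                simp only [mem_Ico] at hx
                exact hW2 x (by omega) hx.2),
              show (Ico (j*m) P).image (fun x => u (rev L m x))
                = ((Ico (j*m) P).image (rev L m)).image u from by
                  rw [Finset.image_image]; rfl,
              hjm_eq, hadef, hPdef]
            rw [show L + r*m + (m-s) = L + r*m + (m-s) from rfl]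
            rw [rev_image_tail L m hm0 r (q+1) s hs1 hsm hrq]
          have hp2 : (Ico P (P+m)).image W = S := by
            rw [image_congr' _ W (fun x => yf S hS hm0 (x - P)) (fun x hx => by
                simp only [mem_Ico] at hx
                exact hW3 x hx.1 hx.2)]
            have h11 := image_sub_shift (yf S hS hm0) 0 m P
            rw [show (0:ℕ)+P = P by omega, show m+P = P+m by omega] at h11
            rw [h11, ← Finset.range_eq_Ico, yf_image]
          have hp3 : (Ico (P+m) (j*m+K)).image W = (Ico P (P + r*m)).image u := by
            rw [image_congr' _ W (fun x => u (x - m)) (fun x hx => by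
                simp only [mem_Ico] at hx
                exact hW4 x hx.1)]
            have h12 := image_sub_shift u P (P + r*m) m
            rw [show P + r*m + m = j*m + K by omega] at h12
            exact h12
          rw [hpe, hsplit, Finset.image_union, Finset.image_union, hp1, hp2, hp3]
          rw [Finset.union_right_comm, ← Finset.image_union, Finset.union_assoc,
            Finset.Ico_union_Ico_eq_Ico (show L+(r+1)*m ≤ P by omega)
              (show P ≤ P + r*m by omega),
            show Ico a (a+s) = insert a (Ioo a (a+s)) from
              (Finset.Ioo_insert_left (by omega)).symm,
            Finset.insert_union, Finset.image_insert, Finset.insert_union,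
            show L + (r+1)*m = a + m by omega, show P + r*m = a + (q+1)*m by omega]
          exact hD2 r hrq
        · -- last window: use hD3
          have hj3 : j = 2*(q+1) := by omega
          subst hj3
          have e3 : 2*(q+1)*m = (2*(q+1))*m := by ring
          have hjm_eq : (2*(q+1))*m = P + (m - s) := by omega
          have hend : (2*(q+1))*m + K = B + m := by omega
          have hsplit : Ico ((2*(q+1))*m) ((2*(q+1))*m + K)
              = Ico ((2*(q+1))*m) (P+m) ∪ Ico (P+m) ((2*(q+1))*m + K) := by
            rw [Finset.Ico_union_Ico_eq_Ico (by omega) (by omega)]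
          have hp1 : (Ico ((2*(q+1))*m) (P+m)).image W
              = (Ico (m-s) m).image (yf S hS hm0) := by
            rw [image_congr' _ W (fun x => yf S hS hm0 (x - P)) (fun x hx => by
                simp only [mem_Ico] at hx
                exact hW3 x (by omega) hx.2)]
            have h11 := image_sub_shift (yf S hS hm0) (m-s) m P
            rw [show (m-s)+P = (2*(q+1))*m by omega, show m+P = P+m by omega] at h11
            exact h11
          have hp2 : (Ico (P+m) ((2*(q+1))*m + K)).image W = (Ico P B).image u := by
            rw [image_congr' _ W (fun x => u (x - m)) (fun x hx => by
                simp only [mem_Ico] at hx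
                exact hW4 x hx.1)]
            have h12 := image_sub_shift u P B m
            rw [show B + m = (2*(q+1))*m + K by omega] at h12
            exact h12
          rw [hpe, hsplit, Finset.image_union, hp1, hp2,
            show Ico P B = insert P (Ioo P B) from (Finset.Ioo_insert_left (by omega)).symm,
            Finset.image_insert, Finset.union_comm, Finset.insert_union]
          exact hD3
  · -- image equality
    rw [hKL]
    have hsplit : Finset.range (B + m)
        = ((Ico 0 L ∪ Ico L P) ∪ Ico P (P+m)) ∪ Ico (P+m) (B+m) := by
      rw [Finset.Ico_union_Ico_eq_Ico (by omega) (by omega),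
        Finset.Ico_union_Ico_eq_Ico (by omega) (by omega),
        Finset.Ico_union_Ico_eq_Ico (by omega) (by omega), Finset.range_eq_Ico]
    rw [hsplit, Finset.image_union, Finset.image_union, Finset.image_union]
    have hp1 : (Ico 0 L).image W = (Ico 0 L).image u :=
      image_congr' _ W u (fun x hx => hW1 x (by simp only [mem_Ico] at hx; omega))
    have hp2 : (Ico L P).image W = (Ico L P).image u := by
      rw [image_congr' _ W (fun x => u (rev L m x)) (fun x hx => by
          simp only [mem_Ico] at hx
          exact hW2 x hx.1 hx.2),
        show (Ico L P).image (fun x => u (rev L m x))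
          = ((Ico L P).image (rev L m)).image u from by rw [Finset.image_image]; rfl]
      have h10 := rev_image_blocks L m hm0 0 (q+1) (by omega)
      rw [show L + 0*m = L by omega, ← hPdef] at h10
      rw [h10]
    have hp3 : (Ico P (P+m)).image W = S := by
      rw [image_congr' _ W (fun x => yf S hS hm0 (x - P)) (fun x hx => by
          simp only [mem_Ico] at hx
          exact hW3 x hx.1 hx.2)]
      have h11 := image_sub_shift (yf S hS hm0) 0 m P
      rw [show (0:ℕ)+P = P by omega, show m+P = P+m by omega] at h11
      rw [h11, ← Finset.range_eq_Ico, yf_image]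
    have hp4 : (Ico (P+m) (B+m)).image W = (Ico P B).image u := by
      rw [image_congr' _ W (fun x => u (x - m)) (fun x hx => by
          simp only [mem_Ico] at hx
          exact hW4 x hx.1)]
      exact image_sub_shift u P B m
    rw [hp1, hp2, hp3, hp4, Finset.union_right_comm, ← Finset.image_union,
      Finset.Ico_union_Ico_eq_Ico (show (0:ℕ) ≤ L by omega) (show L ≤ P by omega),
      ← Finset.image_union,
      Finset.Ico_union_Ico_eq_Ico (show (0:ℕ) ≤ P by omega) (show P ≤ B by omega),
      ← Finset.range_eq_Ico]
  · -- left end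
    intro i hi
    exact hW1 i hi
  · -- right end
    intro i hi
    rw [hKL, hW4 (B + m - L + i) (by omega)]
    congr 1
    omega

lemma good_count {n m s q k ℓ b : ℕ} (hm : 2 ≤ m) (hs1 : 1 ≤ s) (hsm : s < m) (hn : 0 < n)
    (hk : k = q*m+s+m) (hl : ℓ = q*m+s) (hb : b = q*m+s+2*(q+1)*m)
    (H : Finset (Finset (Fin n)))
    (S : Finset (Fin n)) (hS : S.card = m)
    (ρ : ℕ)
    (hdeg : ∀ R : Finset (Fin n), R.card = k - 1 →
      ρ + (b + m) ≤ (Finset.univ.filter (fun z : Fin n => insert z R ∈ H)).card)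
    (hfree : ρ + (b + m) ≤ n) :
    ρ ^ b ≤ ((Finset.univ : Finset (Fin b → Fin n)).filter
      (fun v => ∃ u : ℕ → Fin n, (∀ i : Fin b, u (i : ℕ) = v i) ∧
        IsAbsorbingSeq n k ℓ b H S u)).card := by
  subst hk hl hb
  have hm0 : 0 < m := by omega
  have e1 : (q+1)*m = q*m + m := by ring
  have e2 : 2*(q+1)*m = q*m + q*m + m + m := by ring
  set B : ℕ := q*m+s+2*(q+1)*m with hBdef
  set L : ℕ := q*m+s with hLdef
  set K : ℕ := q*m+s+m with hKdef
  set P : ℕ := q*m+s+(q+1)*m with hPdef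
  set d0 : Fin n := ⟨0, hn⟩ with hd0
  set uv : (Fin B → Fin n) → ℕ → Fin n :=
    fun v i => if h : i < B then v ⟨i, h⟩ else d0 with huv
  set A : ℕ → (Fin B → Fin n) → Finset (Fin n) := fun x v =>
    (if x % m = 0 ∧ x < 2*(q+1)*m then
        Finset.univ.filter (fun z => insert z ((Ioo x (x + K)).image (uv v)) ∈ H)
      else if L ≤ x ∧ x < P ∧ x % m = s then
        Finset.univ.filter (fun z => insert z
          (((Ioo x (x+s) ∪ Ico (x+m) (x+(q+1)*m)).image (uv v)) ∪ S) ∈ H)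
      else if x = P then
        Finset.univ.filter (fun z => insert z
          (((Ioo x B).image (uv v)) ∪ (Ico (m-s) m).image (yf S hS hm0)) ∈ H)
      else Finset.univ)
    \ (S ∪ (Ioo x B).image (uv v)) with hA
  have huv_agree : ∀ (x : ℕ) (v w : Fin B → Fin n),
      (∀ i : Fin B, x < (i:ℕ) → v i = w i) → ∀ i, x < i → uv v i = uv w i := by
    intro x v w hvw i hi
    simp only [huv]
    split
    · next h => exact hvw ⟨i, h⟩ hi
    · rfl
  have himg_agree : ∀ (x : ℕ) (v w : Fin B → Fin n),
      (∀ i : Fin B, x < (i:ℕ) → v i = w i) → ∀ T : Finset ℕ, (∀ i ∈ T, x < i) →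
      T.image (uv v) = T.image (uv w) := by
    intro x v w hvw T hT
    exact image_congr' _ _ _ (fun i hi => huv_agree x v w hvw i (hT i hi))
  -- hypothesis (1) of seq_count : A x depends only on coordinates above x
  have hdep : ∀ x : Fin B, ∀ v w : Fin B → Fin n,
      (∀ i : Fin B, (x:ℕ) < (i:ℕ) → v i = w i) → A (x:ℕ) v = A (x:ℕ) w := by
    intro x v w hvw
    have g1 := himg_agree (x:ℕ) v w hvw (Ioo (x:ℕ) ((x:ℕ) + K))
      (fun i hi => by simp only [mem_Ioo] at hi; omega)
    have g2 := himg_agree (x:ℕ) v w hvw (Ioo (x:ℕ) ((x:ℕ)+s) ∪ Ico ((x:ℕ)+m) ((x:ℕ)+(q+1)*m))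
      (fun i hi => by simp only [mem_union, mem_Ioo, mem_Ico] at hi; omega)
    have g3 := himg_agree (x:ℕ) v w hvw (Ioo (x:ℕ) B)
      (fun i hi => by simp only [mem_Ioo] at hi; omega)
    simp only [hA, g1, g2, g3]
  -- from validity above x, injectivity facts
  have hvalid_facts : ∀ (x : ℕ) (v : Fin B → Fin n),
      (∀ i : Fin B, x < (i:ℕ) → v i ∈ A (i:ℕ) v) →
      (∀ i, x < i → i < B → uv v i ∉ S) ∧
      (∀ i j, x < i → i < j → j < B → uv v i ≠ uv v j) := by
    intro x v hv
    have hmem : ∀ i, x < i → i < B → uv v i ∉ S ∪ (Ioo i B).image (uv v) := by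
      intro i hxi hiB
      have h1 := hv ⟨i, hiB⟩ hxi
      rw [hA] at h1
      have h2 := (Finset.mem_sdiff.mp h1).2
      have h3 : uv v i = v ⟨i, hiB⟩ := by simp only [huv]; rw [dif_pos hiB]
      rwa [← h3] at h2
    constructor
    · intro i hxi hiB hmemS
      exact hmem i hxi hiB (Finset.mem_union_left _ hmemS)
    · intro i j hxi hij hjB heq
      apply hmem i hxi (by omega)
      apply Finset.mem_union_right
      exact Finset.mem_image.mpr ⟨j, Finset.mem_Ioo.mpr ⟨hij, hjB⟩, heq.symm⟩
  -- hypothesis (2) of seq_count : each constraint set is large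
  have hinjOn : ∀ (x : ℕ) (v : Fin B → Fin n),
      (∀ i j, x < i → i < j → j < B → uv v i ≠ uv v j) →
      ∀ T : Finset ℕ, (∀ i ∈ T, x < i ∧ i < B) → Set.InjOn (uv v) ↑T := by
    intro x v hinj T hT i hi j hj hij
    simp only [Finset.mem_coe] at hi hj
    by_contra hne
    rcases Nat.lt_or_ge i j with h | h
    · exact hinj i j (hT i hi).1 h (hT j hj).2 hij
    · exact hinj j i (hT j hj).1 (by omega) (hT i hi).2 hij.symm
  have hcard : ∀ x : Fin B, ∀ v, (∀ i : Fin B, (x:ℕ) < (i:ℕ) → v i ∈ A i v) →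
      ρ ≤ (A (x:ℕ) v).card := by
    intro x v hvalid
    obtain ⟨hnS, hinj⟩ := hvalid_facts (x:ℕ) v hvalid
    have hxB : (x:ℕ) < B := x.isLt
    have husedcard : (S ∪ (Ioo (x:ℕ) B).image (uv v)).card ≤ m + B := by
      calc (S ∪ (Ioo (x:ℕ) B).image (uv v)).card
          ≤ S.card + ((Ioo (x:ℕ) B).image (uv v)).card := Finset.card_union_le _ _
        _ ≤ m + (Ioo (x:ℕ) B).card := by
            rw [hS]; exact Nat.add_le_add_left (Finset.card_image_le) m
        _ ≤ m + B := by rw [Nat.card_Ioo]; omega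
    have hgen : ∀ F : Finset (Fin n), ρ + (B + m) ≤ F.card →
        ρ ≤ (F \ (S ∪ (Ioo (x:ℕ) B).image (uv v))).card := by
      intro F hF
      have := Finset.le_card_sdiff (S ∪ (Ioo (x:ℕ) B).image (uv v)) F
      omega
    simp only [hA]
    split_ifs with h1 h2 h3
    · -- O-window constraint
      have hdm := Nat.div_add_mod (x:ℕ) m
      have hlt : (x:ℕ)/m < 2*(q+1) := by
        apply Nat.div_lt_of_lt_mul
        have e : m*(2*(q+1)) = 2*(q+1)*m := by ring
        omega
      have hmul : m*((x:ℕ)/m) ≤ m*(2*q+1) := Nat.mul_le_mul_left m (by omega)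
      have e3 : m*(2*q+1) = q*m+q*m+m := by ring
      have hxK : (x:ℕ) + K ≤ B := by omega
      apply hgen
      apply hdeg
      rw [Finset.card_image_of_injOn (hinjOn (x:ℕ) v hinj _
        (fun i hi => by simp only [mem_Ioo] at hi; omega)), Nat.card_Ioo]
      omega
    · -- middle-window constraint
      obtain ⟨hx1, hx2, hx3⟩ := h2
      have hxq : (x:ℕ) + (q+1)*m ≤ B := by omega
      apply hgen
      apply hdeg
      have hdisj1 : Disjoint (Ioo (x:ℕ) ((x:ℕ)+s)) (Ico ((x:ℕ)+m) ((x:ℕ)+(q+1)*m)) := by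
        rw [Finset.disjoint_left]
        intro i hi hi'
        simp only [mem_Ioo, mem_Ico] at hi hi'
        omega
      have hdisj2 : Disjoint
          (((Ioo (x:ℕ) ((x:ℕ)+s) ∪ Ico ((x:ℕ)+m) ((x:ℕ)+(q+1)*m))).image (uv v)) S := by
        rw [Finset.disjoint_left]
        intro z hz hzS
        simp only [mem_image, mem_union, mem_Ioo, mem_Ico] at hz
        obtain ⟨i, hi, rfl⟩ := hz
        exact hnS i (by omega) (by omega) hzS
      rw [Finset.card_union_of_disjoint hdisj2,
        Finset.card_image_of_injOn (hinjOn (x:ℕ) v hinj _ (fun i hi => by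
          simp only [mem_union, mem_Ioo, mem_Ico] at hi; omega)),
        Finset.card_union_of_disjoint hdisj1, Nat.card_Ioo, Nat.card_Ico, hS]
      omega
    · -- last-window constraint
      apply hgen
      apply hdeg
      have hdisj2 : Disjoint ((Ioo (x:ℕ) B).image (uv v))
          ((Ico (m-s) m).image (yf S hS hm0)) := by
        rw [Finset.disjoint_left]
        intro z hz hz'
        simp only [mem_image, mem_Ioo] at hz
        obtain ⟨i, hi, rfl⟩ := hz
        simp only [mem_image] at hz'
        obtain ⟨i', hi', he⟩ := hz'
        exact hnS i (by omega) (by omega) (he ▸ yf_mem S hS hm0 i')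
      rw [Finset.card_union_of_disjoint hdisj2,
        Finset.card_image_of_injOn (hinjOn (x:ℕ) v hinj _ (fun i hi => by
          simp only [mem_Ioo] at hi; omega)),
        Finset.card_image_of_injOn (fun i hi j hj hij => yf_inj S hS hm0
          (by simp only [Finset.coe_Ico, Set.mem_Ico] at hi; omega)
          (by simp only [Finset.coe_Ico, Set.mem_Ico] at hj; omega) hij),
        Nat.card_Ioo, Nat.card_Ico, h3]
      omega
    · -- unconstrained position
      apply hgen
      rw [Finset.card_univ, Fintype.card_fin]
      omega
  -- apply the counting lemma and translate
  refine le_trans (seq_count d0 A ρ hdep hcard) (Finset.card_le_card ?_)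
  intro v hv
  rw [Finset.mem_filter] at hv ⊢
  obtain ⟨-, hv⟩ := hv
  refine ⟨Finset.mem_univ _, ?_⟩
  set u : ℕ → Fin n := uv v with hu
  have huval : ∀ i : Fin B, u (i:ℕ) = v i := by
    intro i
    simp only [hu, huv]
    rw [dif_pos i.isLt]
  have hmem : ∀ i, i < B → uv v i ∉ S ∪ (Ioo i B).image (uv v) := by
    intro i hiB
    have h1 : v ⟨i, hiB⟩ ∈ A i v := hv ⟨i, hiB⟩
    rw [hA] at h1
    have h2 := (Finset.mem_sdiff.mp h1).2
    have h3 : uv v i = v ⟨i, hiB⟩ := by simp only [huv]; rw [dif_pos hiB]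
    rwa [← h3] at h2
  have hNotS : ∀ i, i < B → u i ∉ S := by
    intro i hiB hS'
    exact hmem i hiB (Finset.mem_union_left _ hS')
  have hInj : ∀ i j : ℕ, i < j → j < B → u i ≠ u j := by
    intro i j hij hjB heq
    apply hmem i (by omega)
    apply Finset.mem_union_right
    exact Finset.mem_image.mpr ⟨j, Finset.mem_Ioo.mpr ⟨hij, hjB⟩, heq.symm⟩
  have hD1 : ∀ j, j < 2*(q+1) →
      insert (u (j*m)) ((Ioo (j*m) (j*m + K)).image u) ∈ H := by
    intro j hj
    have h5 : (j+1)*m ≤ 2*(q+1)*m := by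
      calc (j+1)*m ≤ (2*(q+1))*m := Nat.mul_le_mul_right m hj
        _ = 2*(q+1)*m := by ring
    have e3 : (j+1)*m = j*m + m := by ring
    have hjB : j*m < B := by omega
    have h1 : v ⟨j*m, hjB⟩ ∈ A (j*m) v := hv ⟨j*m, hjB⟩
    rw [hA] at h1
    have h2 := (Finset.mem_sdiff.mp h1).1
    rw [if_pos ⟨Nat.mul_mod_left j m, by omega⟩] at h2
    have h3 : u (j*m) = v ⟨j*m, hjB⟩ := huval ⟨j*m, hjB⟩
    rw [h3]
    exact (Finset.mem_filter.mp h2).2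
  have hD2 : ∀ r, r < q+1 → insert (u (L + r*m))
      ((((Ioo (L+r*m) (L+r*m+s)) ∪
         (Ico (L+r*m+m) (L+r*m+(q+1)*m))).image u) ∪ S) ∈ H := by
    intro r hr
    have h5 : (r+1)*m ≤ (q+1)*m := Nat.mul_le_mul_right m hr
    have e3 : (r+1)*m = r*m + m := by ring
    have hmod : (L + r*m) % m = s := by
      have e : L + r*m = s + (q+r)*m := by simp only [hLdef]; ring
      rw [e, Nat.add_mul_mod_self_right, Nat.mod_eq_of_lt hsm]
    have hxB : L + r*m < B := by omega
    have h1 : v ⟨L + r*m, hxB⟩ ∈ A (L + r*m) v := hv ⟨L + r*m, hxB⟩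
    rw [hA] at h1
    have h2 := (Finset.mem_sdiff.mp h1).1
    rw [if_neg (by rintro ⟨hc, -⟩; omega),
      if_pos ⟨by omega, by omega, hmod⟩] at h2
    have h3 : u (L + r*m) = v ⟨L + r*m, hxB⟩ := huval ⟨L + r*m, hxB⟩
    rw [h3]
    exact (Finset.mem_filter.mp h2).2
  have hD3 : insert (u P) (((Ioo P B).image u) ∪
      (Ico (m-s) m).image (yf S hS hm0)) ∈ H := by
    have hmod : P % m = s := by
      have e : P = s + (q+(q+1))*m := by simp only [hPdef]; ring
      rw [e, Nat.add_mul_mod_self_right, Nat.mod_eq_of_lt hsm]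
    have hxB : P < B := by omega
    have h1 : v ⟨P, hxB⟩ ∈ A P v := hv ⟨P, hxB⟩
    rw [hA] at h1
    have h2 := (Finset.mem_sdiff.mp h1).1
    rw [if_neg (by rintro ⟨hc, -⟩; omega),
      if_neg (by rintro ⟨-, hc, -⟩; omega), if_pos rfl] at h2
    have h3 : u P = v ⟨P, hxB⟩ := huval ⟨P, hxB⟩
    rw [h3]
    exact (Finset.mem_filter.mp h2).2
  exact ⟨u, huval, build_absorbing hm hs1 hsm H S hS u hInj hNotS hD1 hD2 hD3⟩


lemma degree_le_completions {n k : ℕ} (H : Finset (Finset (Fin n))) (hH : IsKGraph n k H)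
    (hk : 1 ≤ k) (hn : 0 < n) (R : Finset (Fin n)) (hR : R.card = k - 1) :
    degree n H R ≤ (Finset.univ.filter (fun z : Fin n => insert z R ∈ H)).card := by
  classical
  unfold degree
  set f : Finset (Fin n) → Fin n := fun e =>
    if h : (e \ R).Nonempty then (e \ R).min' h else ⟨0, hn⟩ with hf
  have hmain : ∀ e ∈ H.filter (fun e => R ⊆ e), f e ∈ e \ R ∧ insert (f e) R = e := by
    intro e he
    rw [Finset.mem_filter] at he
    obtain ⟨heH, hRe⟩ := he
    have hecard : e.card = k := hH e heH
    have hsd : (e \ R).card = 1 := by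
      rw [Finset.card_sdiff_of_subset hRe, hecard, hR]; omega
    have hne : (e \ R).Nonempty := Finset.card_pos.mp (by omega)
    have hmem : f e ∈ e \ R := by rw [hf]; simp only [dif_pos hne]; exact Finset.min'_mem _ _
    refine ⟨hmem, ?_⟩
    have h1 : insert (f e) R ⊆ e := by
      intro z hz
      rcases Finset.mem_insert.mp hz with rfl | hz'
      · exact (Finset.mem_sdiff.mp hmem).1
      · exact hRe hz'
    apply Finset.eq_of_subset_of_card_le h1
    rw [Finset.card_insert_of_notMem (Finset.mem_sdiff.mp hmem).2, hR, hecard]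
    omega
  apply Finset.card_le_card_of_injOn f
  · intro e he
    rw [Finset.mem_coe, Finset.mem_filter]
    refine ⟨Finset.mem_univ _, ?_⟩
    rw [(hmain e he).2]
    exact (Finset.mem_filter.mp he).1
  · intro e he e' he' heq
    have h1 := (hmain e (by simpa using he)).2
    have h2 := (hmain e' (by simpa using he')).2
    rw [← h1, ← h2, heq]

open scoped Classical in
/-- Lemma 11: if `(k-ℓ) ∤ k`, there is a path length `b` (between `k` and `k⁴`)
such that, in any large `k`-graph of minimum degree at least `μn`, all but at
most `γn^{k-ℓ}` of the `(k-ℓ)`-sets of vertices are `c`-good. -/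
theorem few_bad_tuples
    (k ℓ : ℕ) (hk : 3 ≤ k) (hl1 : 1 ≤ ℓ) (hl2 : ℓ ≤ k - 1)
    (hnd : ¬ (k - ℓ) ∣ k) :
    ∃ b : ℕ, k ≤ b ∧ b ≤ k ^ 4 ∧
      ∀ μ : ℝ, 0 < μ → ∃ γ : ℝ, 0 < γ ∧ γ < μ ∧
        ∃ c : ℝ, 0 < c ∧ c < γ ∧ ∃ n₀ : ℕ, ∀ n ≥ n₀,
          ∀ H : Finset (Finset (Fin n)), IsKGraph n k H →
            MinDegreeGe n k H (μ * n) →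
            (((Finset.univ.powersetCard (k - ℓ)).filter
                (fun S => ¬ CGood n k ℓ b H c S)).card : ℝ)
              ≤ γ * (n : ℝ) ^ (k - ℓ) := by
  set m := k - ℓ with hmdef
  have hm2 : 2 ≤ m := by
    rcases Nat.lt_or_ge m 2 with h | h
    · have h1 : m = 1 := by omega
      rw [h1] at hnd
      exact absurd (one_dvd k) hnd
    · exact h
  have hs1 : 1 ≤ k % m := by
    rcases Nat.eq_zero_or_pos (k % m) with h | h
    · exact absurd (Nat.dvd_of_mod_eq_zero h) hnd
    · exact h
  have hsm : k % m < m := Nat.mod_lt _ (by omega)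
  have hq1 : 1 ≤ k / m := (Nat.one_le_div_iff (by omega)).mpr (by omega)
  set q := k / m - 1 with hqdef
  set s := k % m with hsdef
  have hkeq : k = q*m + s + m := by
    have h0 := Nat.div_add_mod k m
    have h2 : m * (k/m) = m*q + m := by
      have h3 : k/m = q + 1 := by omega
      rw [h3]; ring
    have h4 : m*q = q*m := by ring
    omega
  have hleq : ℓ = q*m + s := by omega
  set b := q*m+s+2*(q+1)*m with hbdef
  have e2 : 2*(q+1)*m = q*m + q*m + m + m := by ring
  refine ⟨b, by omega, ?_, ?_⟩
  · -- b ≤ k^4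
    have h2 : 3*k ≤ k*k := Nat.mul_le_mul_right k hk
    have h4 : k*k ≤ (k*k)*(k*k) := Nat.le_mul_of_pos_right _ (by positivity)
    have h5 : (k*k)*(k*k) = k^4 := by ring
    omega
  intro μ hμ
  refine ⟨μ/2, by positivity, by linarith, min ((μ/2)^b) (μ/4),
    lt_min (by positivity) (by positivity), lt_of_le_of_lt (min_le_right _ _) (by linarith),
    max k (⌈(2*(b+m)+2 : ℝ)/μ⌉₊ + 1), ?_⟩
  intro n hn H hH hMin
  have hnk : k ≤ n := le_trans (le_max_left _ _) hn
  have hn0 : 0 < n := by omega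
  have hnμ : (2*(b+m)+2 : ℝ) ≤ μ * n := by
    have h1 : (⌈(2*(b+m)+2 : ℝ)/μ⌉₊ : ℝ) < (n : ℝ) := by
      have h2 : ⌈(2*(b+m)+2 : ℝ)/μ⌉₊ + 1 ≤ n := le_trans (le_max_right _ _) hn
      exact_mod_cast Nat.lt_of_lt_of_le (Nat.lt_succ_self _) h2
    have h3 : ((2*(b+m)+2 : ℝ))/μ ≤ ⌈(2*(b+m)+2 : ℝ)/μ⌉₊ := Nat.le_ceil _
    have h4 : ((2*(b+m)+2 : ℝ))/μ < n := by linarith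
    calc (2*(b+m)+2 : ℝ) = ((2*(b+m)+2 : ℝ)/μ) * μ := by field_simp
      _ ≤ (n : ℝ) * μ := by
          apply mul_le_mul_of_nonneg_right (le_of_lt h4) (le_of_lt hμ)
      _ = μ * n := by ring
  rcases le_or_gt μ 1 with hμ1 | hμ1
  · -- main case
    set ρ : ℕ := ⌈μ * n / 2⌉₊ with hρdef
    have hρlb : (μ*n/2 : ℝ) ≤ ρ := Nat.le_ceil _
    have hρub : (ρ : ℝ) < μ*n/2 + 1 := Nat.ceil_lt_add_one (by positivity)
    have hdegops : ∀ R : Finset (Fin n), R.card = k - 1 →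
        ρ + (b + m) ≤ (Finset.univ.filter (fun z : Fin n => insert z R ∈ H)).card := by
      intro R hR
      have hd := hMin R hR
      have hcomp := degree_le_completions H hH (by omega) hn0 R hR
      have hreal : (ρ + (b + m) : ℝ) ≤ μ * n := by
        push_cast
        linarith
      have : (ρ + (b + m) : ℝ) ≤ ((Finset.univ.filter
          (fun z : Fin n => insert z R ∈ H)).card : ℝ) := by
        calc (ρ + (b + m) : ℝ) ≤ μ * n := hreal
          _ ≤ (degree n H R : ℝ) := hd
          _ ≤ _ := by exact_mod_cast hcomp
      exact_mod_cast this
    have hfree : ρ + (b + m) ≤ n := by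
      have h1 : (ρ + (b+m) : ℝ) < (n : ℝ) := by
        have h2 : μ * n ≤ (n : ℝ) := by
          calc μ * n ≤ 1 * n := by
                apply mul_le_mul_of_nonneg_right hμ1 (by positivity)
            _ = n := by ring
        push_cast
        linarith
      exact_mod_cast le_of_lt h1
    have hgood : ∀ S ∈ Finset.univ.powersetCard (k - ℓ),
        CGood n k ℓ b H (min ((μ/2)^b) (μ/4)) S := by
      intro S hSmem
      rw [Finset.mem_powersetCard] at hSmem
      have hScard : S.card = m := hSmem.2
      have hcount := good_count hm2 hs1 hsm hn0 hkeq hleq hbdef H S hScard ρ hdegops hfree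
      unfold CGood
      calc min ((μ/2)^b) (μ/4) * (n:ℝ)^b
          ≤ (μ/2)^b * (n:ℝ)^b := by
            apply mul_le_mul_of_nonneg_right (min_le_left _ _) (by positivity)
        _ = (μ/2 * n)^b := by rw [mul_pow]
        _ ≤ (ρ : ℝ)^b := by
            apply pow_le_pow_left₀ (by positivity)
            linarith
        _ ≤ _ := by exact_mod_cast hcount
    have hempty : ((Finset.univ.powersetCard (k - ℓ)).filter
        (fun S => ¬ CGood n k ℓ b H (min ((μ/2)^b) (μ/4)) S)) = ∅ :=
      Finset.filter_eq_empty_iff.mpr (fun S hS hbad => hbad (hgood S hS))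
    rw [hempty]
    simp only [Finset.card_empty, Nat.cast_zero]
    positivity
  · -- μ > 1 : the degree hypothesis is contradictory
    exfalso
    obtain ⟨Ax, -, hAx⟩ := Finset.exists_subset_card_eq (s := (Finset.univ : Finset (Fin n))) (n := k-1)
      (by rw [Finset.card_univ, Fintype.card_fin]; omega)
    have h1 := hMin Ax hAx
    have h2 := degree_le_completions H hH (by omega) hn0 Ax hAx
    have h3 : (Finset.univ.filter (fun z : Fin n => insert z Ax ∈ H)).card ≤ n := by
      calc _ ≤ (Finset.univ : Finset (Fin n)).card := Finset.card_filter_le _ _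
        _ = n := by rw [Finset.card_univ, Fintype.card_fin]
    have h4 : (degree n H Ax : ℝ) ≤ n := by
      exact_mod_cast le_trans h2 h3
    have h5 : (1:ℝ) * n < μ * n := by
      apply mul_lt_mul_of_pos_right hμ1
      exact_mod_cast hn0
    linarith
end

section
/- Let k ≥ 3 and 1 ≤ ℓ ≤ k−1, let P be an ℓ-path on n vertices, and set a := ⌈k/(k−ℓ)⌉(k−ℓ). Then there is a k-colouring of the vertices of P with colours 1,…,k in which no edge of P contains two vertices of the same colour, colour k is used n/a ± 1 times (i.e. the number of vertices of colour k differs from n/a by at most 1), and the sizes of any two of the other k−1 colour classes differ by at most 1. -/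
open Finset

/-- count of `p < n` with `p % a = K`. -/
def cntAux (a K p : ℕ) : ℕ := ((Finset.range p).filter (fun x => x % a = K)).card

/-- the position colouring: colour `K` on positions `≡ K (mod a)`, other positions get
their rank (among non-special positions) mod `K`. -/
def fAux (a K p : ℕ) : ℕ := if p % a = K then K else (p - cntAux a K p) % K

lemma count_mod_range (n a r : ℕ) (ha : 0 < a) (hr : r < a) :
    ((range n).filter (fun p => p % a = r)).card = (n + a - 1 - r) / a := by
  obtain ⟨s, hs⟩ : ∃ s, a = r + s + 1 := ⟨a - r - 1, by omega⟩
  have hns : n + a - 1 - r = n + s := by omega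
  rw [hns]
  have hchar : ∀ j : ℕ, j < (n + s) / a ↔ a * j + r < n := by
    intro j
    rw [Nat.lt_iff_add_one_le, Nat.le_div_iff_mul_le ha]
    have h1 : (j + 1) * a = a * j + r + s + 1 := by rw [hs]; ring
    omega
  have himg : (range ((n + s) / a)).image (fun j => a * j + r)
      = (range n).filter (fun p => p % a = r) := by
    ext p
    simp only [mem_image, mem_range, mem_filter]
    constructor
    · rintro ⟨j, hj, rfl⟩
      exact ⟨(hchar j).mp hj, by rw [Nat.mul_add_mod]; exact Nat.mod_eq_of_lt hr⟩
    · rintro ⟨hp, hmod⟩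
      have hdm := Nat.div_add_mod p a
      rw [hmod] at hdm
      exact ⟨p / a, (hchar _).mpr (by rw [hdm]; exact hp), hdm⟩
  rw [← himg, Finset.card_image_of_injective _ (fun x y h => by
    have : a * x = a * y := by omega
    exact Nat.eq_of_mul_eq_mul_left ha this), card_range]

lemma cnt_le (a K p : ℕ) : cntAux a K p ≤ p :=
  le_trans (Finset.card_filter_le _ _) (le_of_eq (Finset.card_range p))

lemma cnt_split (a K p p' : ℕ) (h : p ≤ p') :
    cntAux a K p' = cntAux a K p + ((Finset.Ico p p').filter (fun x => x % a = K)).card := by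
  unfold cntAux
  simp only [range_eq_Ico]
  rw [← Finset.Ico_union_Ico_eq_Ico (Nat.zero_le p) h,
    Finset.filter_union, Finset.card_union_of_disjoint]
  exact Finset.disjoint_filter_filter (Finset.Ico_disjoint_Ico_consecutive 0 p p')

lemma ico_filter_le_one (a K p p' : ℕ) (h : p' ≤ p + a) :
    ((Finset.Ico p p').filter (fun x => x % a = K)).card ≤ 1 := by
  refine Finset.card_le_one.mpr ?_
  intro x hx y hy
  simp only [mem_filter, mem_Ico] at hx hy
  have hxy : x % a = y % a := hx.2.trans hy.2.symm
  rcases le_total x y with hle | hle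
  · have hd : a ∣ y - x := (Nat.modEq_iff_dvd' hle).mp hxy
    rcases Nat.eq_zero_or_pos (y - x) with h0 | h0
    · omega
    · have := Nat.le_of_dvd h0 hd; omega
  · have hd : a ∣ x - y := (Nat.modEq_iff_dvd' hle).mp hxy.symm
    rcases Nat.eq_zero_or_pos (x - y) with h0 | h0
    · omega
    · have := Nat.le_of_dvd h0 hd; omega

lemma rank_lt (a K p p' : ℕ) (h : p < p') (h1 : ¬ p % a = K) :
    p - cntAux a K p < p' - cntAux a K p' := by
  have hsplit := cnt_split a K p p' h.le
  have hcp := cnt_le a K p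
  have hcp' := cnt_le a K p'
  have hsub : (Finset.Ico p p').filter (fun x => x % a = K) ⊆ Finset.Ico (p + 1) p' := by
    intro x hx
    simp only [mem_filter, mem_Ico] at hx ⊢
    have : x ≠ p := fun hh => h1 (hh ▸ hx.2)
    omega
  have hclt := Finset.card_le_card hsub
  rw [Nat.card_Ico] at hclt
  omega

/-- injectivity of the colouring on a window `[m, m+k)` containing a special
position `p₀`. -/
lemma fAux_inj (a K k : ℕ) (hK : 1 ≤ K) (hKk : K + 1 = k) (hka : k ≤ a)
    (m p₀ p p' : ℕ) (h₀1 : m ≤ p₀) (h₀2 : p₀ < m + k) (h₀3 : p₀ % a = K)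
    (hp1 : m ≤ p) (hpp : p < p') (hp2 : p' < m + k) :
    fAux a K p ≠ fAux a K p' := by
  by_cases h1 : p % a = K <;> by_cases h2 : p' % a = K
  · -- both special: impossible, distance < a
    intro _
    have hd : a ∣ p' - p := (Nat.modEq_iff_dvd' hpp.le).mp (h1.trans h2.symm)
    have := Nat.le_of_dvd (by omega) hd
    omega
  · -- p special, p' not
    unfold fAux
    rw [if_pos h1, if_neg h2]
    have := Nat.mod_lt (p' - cntAux a K p') (show 0 < K by omega)
    omega
  · unfold fAux
    rw [if_neg h1, if_pos h2]
    have := Nat.mod_lt (p - cntAux a K p) (show 0 < K by omega)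
    omega
  · -- neither special
    unfold fAux
    rw [if_neg h1, if_neg h2]
    intro heq
    set c := ((Finset.Ico p p').filter (fun x => x % a = K)).card with hc
    have hsplit := cnt_split a K p p' hpp.le
    have hcp := cnt_le a K p
    have hcp' := cnt_le a K p'
    have hc1 : c ≤ 1 := ico_filter_le_one a K p p' (by omega)
    -- c ≤ p' - p - 1 since p is not special
    have hsub : (Finset.Ico p p').filter (fun x => x % a = K) ⊆ Finset.Ico (p + 1) p' := by
      intro x hx
      simp only [mem_filter, mem_Ico] at hx ⊢
      have : x ≠ p := fun h => h1 (h ▸ hx.2)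
      omega
    have hclt : c ≤ p' - p - 1 := by
      have := Finset.card_le_card hsub
      rw [Nat.card_Ico] at this
      omega
    have hlt : p - cntAux a K p < p' - cntAux a K p' := by omega
    have hdvd : K ∣ (p' - cntAux a K p') - (p - cntAux a K p) :=
      (Nat.modEq_iff_dvd' hlt.le).mp heq
    have hKle : K ≤ (p' - cntAux a K p') - (p - cntAux a K p) :=
      Nat.le_of_dvd (by omega) hdvd
    -- window facts force c = 0, p = m, p' = m + K
    have hfacts : c = 0 ∧ p = m ∧ p' = m + K := by omega
    -- but then p₀ lies strictly between p and p'
    have hne1 : p₀ ≠ p := fun h => h1 (h ▸ h₀3)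
    have hne2 : p₀ ≠ p' := fun h => h2 (h ▸ h₀3)
    have hmem : p₀ ∈ (Finset.Ico p p').filter (fun x => x % a = K) := by
      simp only [mem_filter, mem_Ico]
      exact ⟨⟨by omega, by omega⟩, h₀3⟩
    have : 0 < c := Finset.card_pos.mpr ⟨p₀, hmem⟩
    omega

/-- Lemma 15: an `ℓ`-path `P` on `n` vertices (given by a vertex sequence `v`
enumerating `Fin n`, its edges being the sets of `k` consecutive vertices
starting at the positions `s(k-ℓ)`) has a proper `k`-colouring in which some
colour `c₀` is used `n/a ± 1` times and the other `k-1` colour classes have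
sizes as equal as possible. -/
theorem path_colouring
    (k ℓ n : ℕ) (hk : 3 ≤ k) (hl1 : 1 ≤ ℓ) (hl2 : ℓ ≤ k - 1)
    (hkn : k ≤ n) (hdvd : (k - ℓ) ∣ (n - k))
    (v : ℕ → Fin n) (hinj : Set.InjOn v (Set.Iio n)) :
    ∃ (col : Fin n → Fin k) (c₀ : Fin k),
      (∀ s : ℕ, s * (k - ℓ) + k ≤ n → ∀ t₁ < k, ∀ t₂ < k, t₁ ≠ t₂ →
        col (v (s * (k - ℓ) + t₁)) ≠ col (v (s * (k - ℓ) + t₂))) ∧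
      |((Finset.univ.filter (fun x => col x = c₀)).card : ℝ) -
          (n : ℝ) / (aParam k ℓ : ℝ)| ≤ 1 ∧
      (∀ c c' : Fin k, c ≠ c₀ → c' ≠ c₀ →
        (Finset.univ.filter (fun x => col x = c)).card ≤
          (Finset.univ.filter (fun x => col x = c')).card + 1) := by
  classical
  set d := k - ℓ with hd
  have hd1 : 1 ≤ d := by omega
  set q := ceilQuot k d with hqdef
  set a := aParam k ℓ with hadef
  have haq : a = q * d := rfl
  set K := k - 1 with hKdef
  have hKk : K + 1 = k := by omega
  have hK2 : 2 ≤ K := by omega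
  have hq' : q = (k - 1) / d + 1 := by
    show (k + d - 1) / d = (k - 1) / d + 1
    rw [show k + d - 1 = (k - 1) + d by omega, Nat.add_div_right _ (by omega)]
  have hq1 : (q - 1) * d ≤ K := by
    rw [hq']
    simpa using Nat.div_mul_le_self (k - 1) d
  have hka : k ≤ a := by
    have h1 := Nat.div_add_mod' (k - 1) d
    have h2 := Nat.mod_lt (k - 1) (show 0 < d by omega)
    have h3 : a = (k - 1) / d * d + d := by rw [haq, hq', add_mul, one_mul]
    generalize (k - 1) / d * d = Y at h1 h3
    generalize (k - 1) % d = r at h1 h2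
    omega
  have hKa : K < a := by omega
  have ha0 : 0 < a := by omega
  -- every window [s*d, s*d+k) contains a special position
  have hwin : ∀ s : ℕ, ∃ p, s * d ≤ p ∧ p < s * d + k ∧ p % a = K := by
    intro s
    have hq0 : 0 < q := by rw [hq']; exact Nat.succ_pos _
    refine ⟨a * (s / q) + K, ?_, ?_, ?_⟩
    · have h1 : s * d = a * (s / q) + s % q * d := by
        conv_lhs => rw [← Nat.div_add_mod s q]
        rw [haq]; ring
      have h2 : s % q * d ≤ (q - 1) * d :=
        Nat.mul_le_mul_right d (by have := Nat.mod_lt s hq0; omega)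
      omega
    · have h1 : s * d = a * (s / q) + s % q * d := by
        conv_lhs => rw [← Nat.div_add_mod s q]
        rw [haq]; ring
      omega
    · rw [Nat.mul_add_mod]
      exact Nat.mod_eq_of_lt hKa
  have hfk : ∀ p, fAux a K p < k := by
    intro p
    unfold fAux
    split
    · omega
    · have := Nat.mod_lt (p - cntAux a K p) (show 0 < K by omega)
      omega
  -- the vertex relabelling
  have hw : Function.Injective (fun i : Fin n => v i.val) := by
    intro i j h
    exact Fin.ext (hinj i.isLt j.isLt h)
  let e : Fin n ≃ Fin n := Equiv.ofBijective _ (Finite.injective_iff_bijective.mp hw)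
  have hKlt : K < k := by omega
  have hbridge : ∀ c : Fin k,
      (Finset.univ.filter fun x : Fin n =>
        (⟨fAux a K (e.symm x).val, hfk _⟩ : Fin k) = c).card
      = ((range n).filter fun p => fAux a K p = (c : ℕ)).card := by
    intro c
    refine Finset.card_bij (fun x _ => ((e.symm x : Fin n) : ℕ)) ?_ ?_ ?_
    · intro x hx
      simp only [mem_filter, mem_univ, true_and] at hx
      simp only [mem_filter, mem_range]
      exact ⟨(e.symm x).isLt, by rw [← hx]⟩
    · intro x hx y hy h
      exact (Equiv.injective e.symm).eq_iff.mp (Fin.ext h) |>.symm ▸ rfl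
    · intro p hp
      simp only [mem_filter, mem_range] at hp
      refine ⟨e ⟨p, hp.1⟩, ?_, ?_⟩
      · simp only [mem_filter, mem_univ, true_and, Equiv.symm_apply_apply]
        exact Fin.ext hp.2
      · simp only [Equiv.symm_apply_apply]
  set nonS : Finset ℕ := (range n).filter (fun p => ¬ p % a = K) with hnonS
  set M : ℕ := n - cntAux a K n with hM
  have hMcard : nonS.card = M := by
    have h := Finset.card_filter_add_card_filter_not
      (s := range n) (p := fun p => p % a = K)
    rw [card_range] at h
    rw [← hnonS] at h
    have hcnt : cntAux a K n = ((range n).filter (fun p => p % a = K)).card := rfl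
    omega
  have hcount : ∀ c : Fin k, (c : ℕ) < K →
      ((range n).filter fun p => fAux a K p = (c : ℕ)).card
        = (M + K - 1 - (c : ℕ)) / K := by
    intro c hcv
    have hpred : ((range n).filter fun p => fAux a K p = (c : ℕ))
        = nonS.filter (fun p => (p - cntAux a K p) % K = (c : ℕ)) := by
      rw [hnonS, Finset.filter_filter]
      ext p
      simp only [mem_filter, mem_range, and_congr_right_iff]
      intro _
      unfold fAux
      by_cases h : p % a = K
      · rw [if_pos h]
        constructor
        · intro h'; omega
        · intro h'; exact absurd h h'.1
      · rw [if_neg h]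
        constructor
        · intro h'; exact ⟨h, h'⟩
        · intro h'; exact h'.2
    have hinjOn : Set.InjOn (fun p => p - cntAux a K p) ↑nonS := by
      intro p hp p' hp' hpp
      simp only [hnonS, coe_filter, Set.mem_setOf_eq, mem_range] at hp hp'
      by_contra hne
      rcases Nat.lt_or_ge p p' with h | h
      · exact absurd hpp (Nat.ne_of_lt (rank_lt a K p p' h hp.2))
      · exact absurd hpp.symm (Nat.ne_of_lt (rank_lt a K p' p (by omega) hp'.2))
    have himg : nonS.image (fun p => p - cntAux a K p) = range M := by
      refine Finset.eq_of_subset_of_card_le ?_ ?_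
      · intro x hx
        simp only [mem_image] at hx
        obtain ⟨p, hp, rfl⟩ := hx
        simp only [hnonS, mem_filter, mem_range] at hp
        rw [mem_range, hM]
        exact rank_lt a K p n hp.1 hp.2
      · rw [card_range, Finset.card_image_of_injOn hinjOn, hMcard]
    rw [hpred]
    have hcardim : (nonS.filter (fun p => (p - cntAux a K p) % K = (c : ℕ))).card
        = ((nonS.filter (fun p => (p - cntAux a K p) % K = (c : ℕ))).image
            (fun p => p - cntAux a K p)).card := by
      rw [Finset.card_image_of_injOn (hinjOn.mono (by
        simp only [coe_subset]
        exact Finset.filter_subset _ _))]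
    have hkey : (Finset.image (fun p => p - cntAux a K p)
        ((nonS.filter (fun p => (p - cntAux a K p) % K = (c : ℕ)))))
        = (range M).filter (fun r => r % K = (c : ℕ)) := by
      rw [← himg, Finset.filter_image]
    rw [hcardim, hkey, count_mod_range M K (c : ℕ) (by omega) hcv]
  refine ⟨fun x => ⟨fAux a K (e.symm x).val, hfk _⟩, ⟨K, hKlt⟩, ?_, ?_, ?_⟩
  · -- properness
    intro s hs t₁ ht₁ t₂ ht₂ hne
    have hp₁ : s * d + t₁ < n := by omega
    have hp₂ : s * d + t₂ < n := by omega
    have hv : ∀ p (hp : p < n), (e.symm (v p)).val = p := by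
      intro p hp
      have : v p = e ⟨p, hp⟩ := rfl
      rw [this, Equiv.symm_apply_apply]
    obtain ⟨p₀, h₀1, h₀2, h₀3⟩ := hwin s
    intro hcontra
    have hfeq : fAux a K (e.symm (v (s * d + t₁))).val
        = fAux a K (e.symm (v (s * d + t₂))).val :=
      congrArg Fin.val hcontra
    rw [hv _ hp₁, hv _ hp₂] at hfeq
    rcases Nat.lt_or_ge t₁ t₂ with hlt | hge
    · exact fAux_inj a K k (by omega) hKk hka (s * d) p₀ _ _ h₀1 h₀2 h₀3
        (by omega) (by omega) (by omega) hfeq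
    · have hlt : t₂ < t₁ := by omega
      exact fAux_inj a K k (by omega) hKk hka (s * d) p₀ _ _ h₀1 h₀2 h₀3
        (by omega) (by omega) (by omega) hfeq.symm
  · -- the special colour class
    simp only []
    rw [hbridge ⟨K, hKlt⟩]
    have hfeq0 : ((range n).filter fun p => fAux a K p = ((⟨K, hKlt⟩ : Fin k) : ℕ))
        = (range n).filter fun p => p % a = K := by
      ext p
      simp only [mem_filter, mem_range, and_congr_right_iff]
      intro _
      unfold fAux
      by_cases h : p % a = K
      · rw [if_pos h]; simp [h]
      · rw [if_neg h]
        have := Nat.mod_lt (p - cntAux a K p) (show 0 < K by omega)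
        constructor
        · intro h'; omega
        · intro h'; exact absurd h' h
    rw [hfeq0, count_mod_range n a K ha0 hKa]
    set X := n + a - 1 - K with hX
    have hXk : X + k = n + a := by omega
    have hdm := Nat.div_add_mod X a
    have hml : X % a < a := Nat.mod_lt X ha0
    have ha' : (0:ℝ) < (a:ℝ) := by exact_mod_cast ha0
    have hXr : (X : ℝ) = (n : ℝ) + (a : ℝ) - (k : ℝ) := by
      have := congrArg (fun t : ℕ => (t : ℝ)) hXk
      push_cast at this
      linarith
    have hdmr : (a : ℝ) * (X / a : ℕ) + ((X % a : ℕ) : ℝ) = (X : ℝ) := by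
      exact_mod_cast congrArg (fun t : ℕ => (t : ℝ)) hdm
    have hmlr : ((X % a : ℕ) : ℝ) < (a : ℝ) := by exact_mod_cast hml
    have hmlr0 : (0:ℝ) ≤ ((X % a : ℕ) : ℝ) := by positivity
    have hkar : (k : ℝ) ≤ (a : ℝ) := by exact_mod_cast hka
    have hkr : (0:ℝ) < (k : ℝ) := by exact_mod_cast (show 0 < k by omega)
    rw [abs_le]
    constructor
    · have h : (n : ℝ) / (a : ℝ) ≤ ((X / a : ℕ) : ℝ) + 1 := by
        rw [div_le_iff₀ ha']
        nlinarith
      linarith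
    · have h : ((X / a : ℕ) : ℝ) - 1 ≤ (n : ℝ) / (a : ℝ) := by
        rw [le_div_iff₀ ha']
        nlinarith
      linarith
  · -- balance of the other colour classes
    intro c c' hc hc'
    have hcv : (c : ℕ) < K := by
      have h1 := c.isLt
      have h2 : (c : ℕ) ≠ K := fun h => hc (Fin.ext h)
      omega
    have hcv' : (c' : ℕ) < K := by
      have h1 := c'.isLt
      have h2 : (c' : ℕ) ≠ K := fun h => hc' (Fin.ext h)
      omega
    simp only []
    rw [hbridge c, hbridge c', hcount c hcv, hcount c' hcv']
    have h1 : M + K - 1 - (c : ℕ) ≤ (M + K - 1 - (c' : ℕ)) + K := by omega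
    calc (M + K - 1 - (c : ℕ)) / K ≤ ((M + K - 1 - (c' : ℕ)) + K) / K :=
          Nat.div_le_div_right h1
      _ = (M + K - 1 - (c' : ℕ)) / K + 1 := Nat.add_div_right _ (by omega)
end
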